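/- arXiv:1908.03604 — 7 statements merged into one kernel-verified Lean document; each statement's English description precedes it below -/
import Mathlib

section
/- Let x ∈ ℂ with |x| = 1 and x ≠ −1, and let α ∈ ℂ. Then the symmetric partial sums ∑_{n=−M}^{M} sinc(α−n)·x^n converge as M → ∞, and their limit equals the principal power x^α. -/
open Filter Finset Topology

/-- The normalized sinc function `sinc z = sin(πz)/(πz)`, with `sinc 0 = 1`. -/
noncomputable def csinc (z : ℂ) : ℂ :=
  if z = 0 then 1 else Complex.sin ((Real.pi : ℂ) * z) / ((Real.pi : ℂ) * z)

namespace Shannon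

open Complex MeasureTheory intervalIntegral Set
open scoped Real

lemma csinc_integral (z : ℂ) :
    (∫ t in (-π:ℝ)..π, Complex.exp (z * Complex.I * t)) = 2 * π * csinc z := by
  rcases eq_or_ne z 0 with rfl | hz
  · simp [csinc, two_mul]
  · have hc : z * Complex.I ≠ 0 := by simp [hz, Complex.I_ne_zero]
    rw [integral_exp_mul_complex hc, csinc, if_neg hz]
    have hπ : (π : ℂ) ≠ 0 := by
      simpa using Real.pi_ne_zero
    have hsin : Complex.exp (z * Complex.I * π) - Complex.exp (z * Complex.I * (-π:ℝ)) =
        2 * Complex.I * Complex.sin ((π:ℂ) * z) := by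
      rw [Complex.sin]
      push_cast
      ring_nf
      rw [Complex.I_sq]
      ring_nf
    rw [hsin]
    field_simp

lemma dirichlet (M : ℕ) (u : ℂ) :
    (∑ n ∈ Finset.Icc (-(M:ℤ)) (M:ℤ), Complex.exp (n * u * Complex.I)) * Complex.sin (u/2)
      = Complex.sin ((2*M+1) * u / 2) := by
  induction M with
  | zero => simp
  | succ M ih =>
    have hins : Finset.Icc (-(M+1:ℕ):ℤ) ((M+1:ℕ):ℤ)
        = insert (-(M+1:ℤ)) (insert ((M+1:ℤ)) (Finset.Icc (-(M:ℤ)) (M:ℤ))) := by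
      ext n; simp; omega
    rw [hins, Finset.sum_insert (by simp only [Finset.mem_insert, Finset.mem_Icc]; push_cast; omega),
      Finset.sum_insert (by simp only [Finset.mem_Icc]; push_cast; omega)]
    have key : (Complex.exp ((-(M+1:ℤ)) * u * Complex.I)
        + Complex.exp (((M+1:ℤ)) * u * Complex.I)) * Complex.sin (u/2)
        = Complex.sin ((2*(M+1)+1) * u / 2) - Complex.sin ((2*M+1) * u / 2) := by
      have e1 : ((2*((M:ℂ)+1)+1)) * u / 2 = ((M:ℂ)+1)*u + u/2 := by ring
      have e2 : ((2*(M:ℂ)+1)) * u / 2 = ((M:ℂ)+1)*u - u/2 := by ring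
      push_cast
      rw [e1, e2, Complex.sin_add, Complex.sin_sub]
      have hcos : Complex.cos (((M:ℂ)+1)*u) =
          (Complex.exp ((((M:ℂ)+1)*u) * Complex.I) + Complex.exp (-((((M:ℂ)+1)*u) * Complex.I))) / 2 := by
        rw [Complex.cos]; ring_nf
      rw [hcos]
      ring_nf
    push_cast at key ⊢
    rw [add_mul, add_mul, ih]
    linear_combination key

lemma exp_cont (c : ℂ) : Continuous fun t : ℝ => Complex.exp (c * t) := by fun_prop

lemma neg_one_zpow_mul_self (n : ℤ) : ((-1:ℂ))^n * ((-1:ℂ))^n = 1 := by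
  rw [← mul_zpow]; norm_num

lemma single_int (θ : ℝ) (n : ℤ) (hn : n ≠ 0) :
    (∫ t in (-π:ℝ)..π, Complex.exp ((n:ℂ) * ((θ:ℂ) - t) * Complex.I)) = 0 := by
  have h1 : ∀ t : ℝ, (n:ℂ) * ((θ:ℂ) - t) * Complex.I
      = (n:ℂ) * θ * Complex.I + (-(n:ℂ) * Complex.I) * t := by intro t; ring
  simp only [h1, Complex.exp_add]
  rw [intervalIntegral.integral_const_mul]
  have hc : -(n:ℂ) * Complex.I ≠ 0 := by
    simp [Complex.I_ne_zero, hn]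
  rw [integral_exp_mul_complex hc]
  have e1 : -(n:ℂ) * Complex.I * (π:ℝ) = (((-n : ℤ)):ℂ) * ((π:ℂ) * Complex.I) := by push_cast; ring
  have e2 : -(n:ℂ) * Complex.I * ((-π:ℝ):ℝ) = ((n:ℤ):ℂ) * ((π:ℂ) * Complex.I) := by push_cast; ring
  rw [e1, e2, Complex.exp_int_mul, Complex.exp_int_mul, Complex.exp_pi_mul_I]
  have : ((-1:ℂ))^(-n) = (-1:ℂ)^n := by
    rw [zpow_neg]
    exact inv_eq_of_mul_eq_one_left (neg_one_zpow_mul_self n)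
  rw [this]
  simp

lemma kernel_int (θ : ℝ) (M : ℕ) :
    (∫ t in (-π:ℝ)..π, (∑ n ∈ Finset.Icc (-(M:ℤ)) (M:ℤ),
      Complex.exp ((n:ℂ) * ((θ:ℂ) - t) * Complex.I))) = 2 * π := by
  rw [intervalIntegral.integral_finset_sum]
  · rw [Finset.sum_eq_single (0 : ℤ)]
    · simp [two_mul, Complex.ofReal_neg]
    · intro n _ hn; exact single_int θ n hn
    · intro h; exact absurd (by simp : (0:ℤ) ∈ Finset.Icc (-(M:ℤ)) (M:ℤ)) h
  · intro n _
    apply Continuous.intervalIntegrable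
    fun_prop

lemma sum_eq (θ : ℝ) (α : ℂ) (M : ℕ) :
    ∑ n ∈ Finset.Icc (-(M:ℤ)) (M:ℤ), csinc (α - n) * Complex.exp ((n:ℂ) * θ * Complex.I)
      = ((2*π:ℝ):ℂ)⁻¹ * ∫ t in (-π:ℝ)..π, Complex.exp (α * t * Complex.I) *
          (∑ n ∈ Finset.Icc (-(M:ℤ)) (M:ℤ), Complex.exp ((n:ℂ) * ((θ:ℂ) - t) * Complex.I)) := by
  have hπ : (π:ℝ) ≠ 0 := Real.pi_ne_zero
  have hrw : ∀ t : ℝ, Complex.exp (α * t * Complex.I) *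
      (∑ n ∈ Finset.Icc (-(M:ℤ)) (M:ℤ), Complex.exp ((n:ℂ) * ((θ:ℂ) - t) * Complex.I))
      = ∑ n ∈ Finset.Icc (-(M:ℤ)) (M:ℤ),
          Complex.exp ((n:ℂ) * θ * Complex.I) * Complex.exp ((α - n) * Complex.I * t) := by
    intro t
    rw [Finset.mul_sum]
    refine Finset.sum_congr rfl fun n _ => ?_
    rw [← Complex.exp_add, ← Complex.exp_add]
    ring_nf
  rw [intervalIntegral.integral_congr (fun t _ => hrw t)]
  rw [intervalIntegral.integral_finset_sum (fun n _ => by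
    apply Continuous.intervalIntegrable; fun_prop)]
  rw [Finset.mul_sum]
  refine Finset.sum_congr rfl fun n _ => ?_
  rw [intervalIntegral.integral_const_mul, csinc_integral]
  have h2 : ((2:ℂ)*(π:ℝ)) ≠ 0 := by
    simp [Complex.ofReal_ne_zero, hπ]
  push_cast
  field_simp

noncomputable def A (θ : ℝ) (α : ℂ) (t : ℝ) : ℂ :=
  if t = θ then α * Complex.I * Complex.exp (α * θ * Complex.I)
  else (Complex.exp (α * t * Complex.I) - Complex.exp (α * θ * Complex.I)) / ((t:ℂ) - θ)

noncomputable def B (θ : ℝ) (t : ℝ) : ℂ :=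
  if t = θ then (-2 : ℂ)
  else ((t:ℂ) - (θ:ℂ)) / Complex.sin ((((θ - t)/2 : ℝ)):ℂ)

lemma hasDeriv_exp_line (α : ℂ) (θ : ℝ) :
    HasDerivAt (fun t : ℝ => Complex.exp (α * t * Complex.I))
      (α * Complex.I * Complex.exp (α * θ * Complex.I)) θ := by
  have h0 : HasDerivAt (fun w : ℂ => Complex.exp (α * w * Complex.I))
      (Complex.exp (α * θ * Complex.I) * (α * Complex.I)) (θ:ℂ) := by
    have hlin : HasDerivAt (fun w : ℂ => α * w * Complex.I) (α * Complex.I) (θ:ℂ) := by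
      have := (hasDerivAt_id ((θ:ℝ):ℂ)).const_mul (α * Complex.I)
      simpa [mul_comm, mul_assoc, mul_left_comm] using this
    simpa using hlin.cexp
  have := h0.comp_ofReal
  simpa [mul_comm] using this

lemma contA (θ : ℝ) (α : ℂ) : Continuous (A θ α) := by
  rw [continuous_iff_continuousAt]
  intro t₀
  rcases eq_or_ne t₀ θ with rfl | ht
  · -- continuity at θ via derivative
    have hd := hasDeriv_exp_line α t₀
    have hslope := hasDerivAt_iff_tendsto_slope.mp hd
    have heq : ∀ᶠ t in 𝓝[≠] t₀, slope (fun t : ℝ => Complex.exp (α * t * Complex.I)) t₀ t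
        = A t₀ α t := by
      filter_upwards [self_mem_nhdsWithin] with t ht
      have ht' : t ≠ t₀ := ht
      rw [A, if_neg ht', slope_def_module, Complex.real_smul, div_eq_inv_mul]
      push_cast
      ring
    have h1 : Tendsto (A t₀ α) (𝓝[≠] t₀) (𝓝 (A t₀ α t₀)) := by
      rw [A, if_pos rfl]
      exact hslope.congr' heq
    unfold ContinuousAt
    rw [← nhdsNE_sup_pure t₀, tendsto_sup]
    exact ⟨h1, tendsto_pure_nhds _ _⟩
  · have hev : ∀ᶠ t in 𝓝 t₀, A θ α t
        = (Complex.exp (α * t * Complex.I) - Complex.exp (α * θ * Complex.I)) / ((t:ℂ) - θ) := by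
      filter_upwards [isOpen_ne.mem_nhds ht] with t h
      rw [A, if_neg h]
    refine ContinuousAt.congr ?_ (hev.mono fun t h => h.symm)
    apply ContinuousAt.div
    · fun_prop
    · fun_prop
    · exact sub_ne_zero.mpr (by exact_mod_cast ht)

lemma sin_half_ne_zero (θ : ℝ) (h1 : -π < θ) (h2 : θ < π) {t : ℝ}
    (hl : -π ≤ t) (hr : t ≤ π) (ht : t ≠ θ) :
    Complex.sin ((((θ - t)/2 : ℝ)):ℂ) ≠ 0 := by
  rw [← Complex.ofReal_sin, Complex.ofReal_ne_zero]
  have hb1 : -π < (θ - t)/2 := by linarith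
  have hb2 : (θ - t)/2 < π := by linarith
  rw [Ne, Real.sin_eq_zero_iff_of_lt_of_lt hb1 hb2]
  intro h
  exact ht (by linarith)

lemma contB (θ : ℝ) (h1 : -π < θ) (h2 : θ < π) :
    ContinuousOn (B θ) (Set.Icc (-π) π) := by
  intro t₀ ht₀
  by_cases ht : t₀ = θ
  · rw [ht]
    apply ContinuousAt.continuousWithinAt
    have hsin : HasDerivAt Complex.sin 1 0 := by simpa using Complex.hasDerivAt_sin 0
    have hslope := hasDerivAt_iff_tendsto_slope.mp hsin
    have hmap : Tendsto (fun t : ℝ => (((θ - t)/2 : ℝ):ℂ)) (𝓝[≠] θ) (𝓝[≠] 0) := by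
      rw [tendsto_nhdsWithin_iff]
      constructor
      · apply Tendsto.mono_left ?_ nhdsWithin_le_nhds
        exact (by fun_prop : Continuous fun t : ℝ => (((θ - t)/2 : ℝ):ℂ)).tendsto' θ 0
          (by simp)
      · filter_upwards [self_mem_nhdsWithin] with t ht'
        simp only [Set.mem_compl_iff, Set.mem_singleton_iff, Complex.ofReal_eq_zero]
        intro hc
        have h0 : (θ - t)/2 = 0 := by exact_mod_cast hc
        exact ht' (show t ∈ ({θ} : Set ℝ) by
          simp only [Set.mem_singleton_iff]; linarith)
    have hcomp : Tendsto (fun t : ℝ => slope Complex.sin 0 (((θ - t)/2 : ℝ):ℂ))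
        (𝓝[≠] θ) (𝓝 1) := hslope.comp hmap
    have htend : Tendsto (fun t : ℝ => (-2 : ℂ) * (slope Complex.sin 0 (((θ - t)/2 : ℝ):ℂ))⁻¹)
        (𝓝[≠] θ) (𝓝 ((-2) * 1⁻¹)) := (hcomp.inv₀ one_ne_zero).const_mul _
    have heq : ∀ᶠ t in 𝓝[≠] θ, (-2 : ℂ) * (slope Complex.sin 0 (((θ - t)/2 : ℝ):ℂ))⁻¹
        = B θ t := by
      filter_upwards [self_mem_nhdsWithin] with t ht'
      have htne : t ≠ θ := ht'
      rw [B, if_neg htne, slope_def_field, Complex.sin_zero, sub_zero, sub_zero, inv_div,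
        ← mul_div_assoc]
      congr 1
      push_cast
      ring
    have htend2 : Tendsto (B θ) (𝓝[≠] θ) (𝓝 (B θ θ)) := by
      have : B θ θ = (-2 : ℂ) * 1⁻¹ := by rw [B, if_pos rfl]; norm_num
      rw [this]
      exact htend.congr' heq
    unfold ContinuousAt
    rw [← nhdsNE_sup_pure θ, tendsto_sup]
    exact ⟨htend2, tendsto_pure_nhds _ _⟩
  · apply ContinuousAt.continuousWithinAt
    have hev : ∀ᶠ t in 𝓝 t₀, B θ t
        = ((t:ℂ) - (θ:ℂ)) / Complex.sin ((((θ - t)/2 : ℝ)):ℂ) := by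
      filter_upwards [isOpen_ne.mem_nhds ht] with t h
      rw [B, if_neg h]
    refine ContinuousAt.congr ?_ (hev.mono fun t h => h.symm)
    apply ContinuousAt.div
    · fun_prop
    · fun_prop
    · exact sin_half_ne_zero θ h1 h2 ht₀.1 ht₀.2 ht

noncomputable def G (θ : ℝ) (α : ℂ) (t : ℝ) : ℂ := A θ α t * B θ t

lemma contG (θ : ℝ) (h1 : -π < θ) (h2 : θ < π) (α : ℂ) :
    ContinuousOn (G θ α) (Set.Icc (-π) π) :=
  ((contA θ α).continuousOn).mul (contB θ h1 h2)

lemma G_spec (θ : ℝ) (α : ℂ) {t : ℝ} (ht : t ≠ θ)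
    (hs : Complex.sin ((((θ - t)/2 : ℝ)):ℂ) ≠ 0) :
    G θ α t * Complex.sin ((((θ - t)/2 : ℝ)):ℂ)
      = Complex.exp (α * t * Complex.I) - Complex.exp (α * θ * Complex.I) := by
  have htc : (t:ℂ) - (θ:ℂ) ≠ 0 := sub_ne_zero.mpr (by exact_mod_cast ht)
  have hs' : Complex.sin (((θ:ℂ) - t)/2) ≠ 0 := by push_cast at hs; exact hs
  rw [G, A, B, if_neg ht, if_neg ht]
  field_simp

lemma RL2 (h : ℝ → ℂ) :
    Tendsto (fun w : ℝ => ∫ t in (-π:ℝ)..π, h t * Complex.exp ((w:ℂ) * t * Complex.I))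
      (cocompact ℝ) (𝓝 0) := by
  have key := Real.tendsto_integral_exp_smul_cocompact ((Set.Ioc (-π:ℝ) π).indicator h)
  have hcomp : Tendsto (fun w : ℝ => -w / (2*π)) (cocompact ℝ) (cocompact ℝ) := by
    have h2pi : (0:ℝ) < 2*π := by positivity
    have hTop : (atTop : Filter ℝ) ≤ cocompact ℝ :=
      le_sup_right.trans cocompact_eq_atBot_atTop.ge
    have hBot : (atBot : Filter ℝ) ≤ cocompact ℝ :=
      le_sup_left.trans cocompact_eq_atBot_atTop.ge
    refine Tendsto.mono_left ?_ cocompact_eq_atBot_atTop.le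
    rw [tendsto_sup]
    constructor
    · exact Tendsto.mono_right (tendsto_neg_atBot_atTop.atTop_div_const h2pi) hTop
    · exact Tendsto.mono_right (tendsto_neg_atTop_atBot.atBot_div_const h2pi) hBot
  refine (key.comp hcomp).congr fun w => ?_
  simp only [Function.comp_apply, Circle.smul_def, Real.fourierChar_apply, smul_eq_mul]
  have harg : ∀ v : ℝ, 2 * π * -(v * (-w / (2*π))) = w * v := by
    intro v; field_simp
  have : ∀ v : ℝ, Complex.exp (↑(2 * π * -(v * (-w / (2*π)))) * Complex.I) *
      (Set.Ioc (-π:ℝ) π).indicator h v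
      = (Set.Ioc (-π:ℝ) π).indicator (fun t => h t * Complex.exp ((w:ℂ) * t * Complex.I)) v := by
    intro v
    by_cases hv : v ∈ Set.Ioc (-π:ℝ) π
    · rw [Set.indicator_of_mem hv, Set.indicator_of_mem hv, harg]
      push_cast
      ring
    · rw [Set.indicator_of_notMem hv, Set.indicator_of_notMem hv, mul_zero]
  rw [MeasureTheory.integral_congr_ae (Filter.Eventually.of_forall this)]
  rw [MeasureTheory.integral_indicator measurableSet_Ioc]
  rw [intervalIntegral.integral_of_le (by linarith [Real.pi_pos])]

lemma sinexp (w z : ℂ) :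
    Complex.sin (w - z) =
      (Complex.sin w + Complex.I * Complex.cos w)/2 * Complex.exp (z * Complex.I)
      + (Complex.sin w - Complex.I * Complex.cos w)/2 * Complex.exp (-(z * Complex.I)) := by
  have hcos : Complex.cos z
      = (Complex.exp (z * Complex.I) + Complex.exp (-(z * Complex.I)))/2 := by
    rw [Complex.cos, neg_mul]
  have hsin : Complex.sin z
      = (Complex.exp (-(z * Complex.I)) - Complex.exp (z * Complex.I)) * Complex.I / 2 := by
    rw [Complex.sin, neg_mul]
  rw [Complex.sin_sub, hcos, hsin]
  ring

lemma norm_coef (r : ℝ) (s : ℂ) (hs : s = 1 ∨ s = -1) :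
    ‖(Complex.sin ((r:ℝ):ℂ) + s * Complex.I * Complex.cos ((r:ℝ):ℂ))/2‖ ≤ 1 := by
  rw [norm_div]
  have h1 : ‖Complex.sin ((r:ℝ):ℂ)‖ ≤ 1 := by
    rw [← Complex.ofReal_sin, Complex.norm_real]
    exact Real.abs_sin_le_one r
  have h2 : ‖s * Complex.I * Complex.cos ((r:ℝ):ℂ)‖ ≤ 1 := by
    rw [norm_mul, norm_mul, Complex.norm_I, ← Complex.ofReal_cos, Complex.norm_real]
    rcases hs with rfl | rfl <;>
      simpa using Real.abs_cos_le_one r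
  calc ‖Complex.sin ((r:ℝ):ℂ) + s * Complex.I * Complex.cos ((r:ℝ):ℂ)‖ / ‖(2:ℂ)‖
      ≤ (1 + 1) / ‖(2:ℂ)‖ := by
        gcongr
        exact (norm_add_le _ _).trans (by gcongr)
    _ = 1 := by norm_num

lemma pi_le : (-π:ℝ) ≤ π := by linarith [Real.pi_pos]

lemma key (θ : ℝ) (h1 : -π < θ) (h2 : θ < π) (α : ℂ) (M : ℕ) :
    (∑ n ∈ Finset.Icc (-(M:ℤ)) (M:ℤ), csinc (α - n) * Complex.exp ((n:ℂ) * θ * Complex.I))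
      - Complex.exp (α * θ * Complex.I)
    = ((2*π:ℝ):ℂ)⁻¹ *
      ((Complex.sin (((2*(M:ℂ)+1)/2) * θ) + Complex.I * Complex.cos (((2*(M:ℂ)+1)/2) * θ))/2
          * (∫ t in (-π:ℝ)..π, G θ α t * Complex.exp ((((2*(M:ℂ)+1)/2) * t) * Complex.I))
       + (Complex.sin (((2*(M:ℂ)+1)/2) * θ) - Complex.I * Complex.cos (((2*(M:ℂ)+1)/2) * θ))/2
          * (∫ t in (-π:ℝ)..π, G θ α t * Complex.exp (-((((2*(M:ℂ)+1)/2) * t) * Complex.I)))) := by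
  have hDcont : Continuous (fun t : ℝ => ∑ n ∈ Finset.Icc (-(M:ℤ)) (M:ℤ),
      Complex.exp ((n:ℂ) * ((θ:ℂ) - t) * Complex.I)) :=
    continuous_finset_sum _ (fun n _ => by fun_prop)
  have hi1 : IntervalIntegrable (fun t : ℝ => Complex.exp (α * t * Complex.I) *
      ∑ n ∈ Finset.Icc (-(M:ℤ)) (M:ℤ), Complex.exp ((n:ℂ) * ((θ:ℂ) - t) * Complex.I))
      volume (-π) π := ((by fun_prop : Continuous fun t : ℝ =>
        Complex.exp (α * t * Complex.I)).mul hDcont).intervalIntegrable _ _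
  have hi2 : IntervalIntegrable (fun t : ℝ => Complex.exp (α * θ * Complex.I) *
      ∑ n ∈ Finset.Icc (-(M:ℤ)) (M:ℤ), Complex.exp ((n:ℂ) * ((θ:ℂ) - t) * Complex.I))
      volume (-π) π := (continuous_const.mul hDcont).intervalIntegrable _ _
  have hL : Complex.exp (α * θ * Complex.I)
      = ((2*π:ℝ):ℂ)⁻¹ * ∫ t in (-π:ℝ)..π, Complex.exp (α * θ * Complex.I) *
          (∑ n ∈ Finset.Icc (-(M:ℤ)) (M:ℤ), Complex.exp ((n:ℂ) * ((θ:ℂ) - t) * Complex.I)) := by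
    rw [intervalIntegral.integral_const_mul, kernel_int]
    have : ((2*π:ℝ):ℂ) ≠ 0 := by
      simp [Complex.ofReal_ne_zero, Real.pi_ne_zero]
    have hpi : ((π:ℝ):ℂ) ≠ 0 := by simp [Real.pi_ne_zero]
    field_simp
    push_cast
    ring
  rw [sum_eq θ α M, hL, ← mul_sub, ← intervalIntegral.integral_sub hi1 hi2]
  congr 1
  have hstep : ∀ t : ℝ, Complex.exp (α * t * Complex.I) *
        (∑ n ∈ Finset.Icc (-(M:ℤ)) (M:ℤ), Complex.exp ((n:ℂ) * ((θ:ℂ) - t) * Complex.I))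
      - Complex.exp (α * θ * Complex.I) *
        (∑ n ∈ Finset.Icc (-(M:ℤ)) (M:ℤ), Complex.exp ((n:ℂ) * ((θ:ℂ) - t) * Complex.I))
      = (Complex.exp (α * t * Complex.I) - Complex.exp (α * θ * Complex.I)) *
        (∑ n ∈ Finset.Icc (-(M:ℤ)) (M:ℤ), Complex.exp ((n:ℂ) * ((θ:ℂ) - t) * Complex.I)) := by
    intro t; ring
  rw [intervalIntegral.integral_congr (fun t _ => hstep t)]
  -- now a.e. step
  have hae : ∀ᵐ t : ℝ, t ∈ Set.uIoc (-π:ℝ) π →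
      (Complex.exp (α * t * Complex.I) - Complex.exp (α * θ * Complex.I)) *
        (∑ n ∈ Finset.Icc (-(M:ℤ)) (M:ℤ), Complex.exp ((n:ℂ) * ((θ:ℂ) - t) * Complex.I))
      = G θ α t * Complex.sin ((2*(M:ℂ)+1) * ((θ:ℂ) - t) / 2) := by
    have hθae : ∀ᵐ (t : ℝ), t ≠ θ := by
      rw [ae_iff]
      simp only [not_not, Set.setOf_eq_eq_singleton]
      exact measure_singleton θ
    filter_upwards [hθae] with t htne hmem
    rw [Set.uIoc_of_le pi_le] at hmem
    have hs := sin_half_ne_zero θ h1 h2 hmem.1.le hmem.2 htne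
    have hd := dirichlet M ((θ:ℂ) - t)
    have hhalf : ((θ:ℂ) - t)/2 = ((((θ - t)/2 : ℝ)):ℂ) := by push_cast; ring
    rw [hhalf] at hd
    rw [← G_spec θ α htne hs, ← hd]
    ring
  rw [intervalIntegral.integral_congr_ae hae]
  -- pointwise sinexp and linearity
  have hpt : ∀ t : ℝ, G θ α t * Complex.sin ((2*(M:ℂ)+1) * ((θ:ℂ) - t) / 2)
      = (Complex.sin (((2*(M:ℂ)+1)/2) * θ) + Complex.I * Complex.cos (((2*(M:ℂ)+1)/2) * θ))/2
          * (G θ α t * Complex.exp ((((2*(M:ℂ)+1)/2) * t) * Complex.I))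
        + (Complex.sin (((2*(M:ℂ)+1)/2) * θ) - Complex.I * Complex.cos (((2*(M:ℂ)+1)/2) * θ))/2
          * (G θ α t * Complex.exp (-((((2*(M:ℂ)+1)/2) * t) * Complex.I))) := by
    intro t
    rw [show (2*(M:ℂ)+1) * ((θ:ℂ) - t) / 2
        = ((2*(M:ℂ)+1)/2) * θ - ((2*(M:ℂ)+1)/2) * t from by ring]
    rw [sinexp (((2*(M:ℂ)+1)/2) * θ) (((2*(M:ℂ)+1)/2) * t)]
    ring
  rw [intervalIntegral.integral_congr (fun t _ => hpt t)]
  have hiG1 : IntervalIntegrable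
      (fun t : ℝ => G θ α t * Complex.exp ((((2*(M:ℂ)+1)/2) * t) * Complex.I))
      volume (-π) π := by
    apply ContinuousOn.intervalIntegrable
    rw [Set.uIcc_of_le pi_le]
    exact (contG θ h1 h2 α).mul (Continuous.continuousOn (by fun_prop))
  have hiG2 : IntervalIntegrable
      (fun t : ℝ => G θ α t * Complex.exp (-((((2*(M:ℂ)+1)/2) * t) * Complex.I)))
      volume (-π) π := by
    apply ContinuousOn.intervalIntegrable
    rw [Set.uIcc_of_le pi_le]
    exact (contG θ h1 h2 α).mul (Continuous.continuousOn (by fun_prop))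
  rw [intervalIntegral.integral_add (hiG1.const_mul _) (hiG2.const_mul _),
    intervalIntegral.integral_const_mul, intervalIntegral.integral_const_mul]

lemma pos_atTop : Tendsto (fun M : ℕ => ((2*M+1)/2 : ℝ)) atTop atTop := by
  apply Tendsto.atTop_div_const (by norm_num : (0:ℝ) < 2)
  exact tendsto_atTop_add_const_right _ 1
    (Tendsto.const_mul_atTop (by norm_num) (tendsto_natCast_atTop_atTop (R := ℝ)))

lemma cocompact_comp : Tendsto (fun M : ℕ => ((2*M+1)/2 : ℝ)) atTop (cocompact ℝ) :=
  Tendsto.mono_right pos_atTop (le_sup_right.trans cocompact_eq_atBot_atTop.ge)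

lemma cocompact_comp_neg : Tendsto (fun M : ℕ => (-((2*M+1)/2) : ℝ)) atTop (cocompact ℝ) := by
  refine Tendsto.mono_right ?_ (le_sup_left.trans cocompact_eq_atBot_atTop.ge)
  exact tendsto_neg_atTop_atBot.comp pos_atTop

lemma tendsto_Pp (θ : ℝ) (α : ℂ) :
    Tendsto (fun M : ℕ => ∫ t in (-π:ℝ)..π,
        G θ α t * Complex.exp ((((2*(M:ℂ)+1)/2) * t) * Complex.I)) atTop (𝓝 0) := by
  have := (RL2 (G θ α)).comp cocompact_comp
  refine this.congr fun M => ?_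
  apply intervalIntegral.integral_congr
  intro t _
  congr 1
  push_cast
  ring_nf

lemma tendsto_Pm (θ : ℝ) (α : ℂ) :
    Tendsto (fun M : ℕ => ∫ t in (-π:ℝ)..π,
        G θ α t * Complex.exp (-((((2*(M:ℂ)+1)/2) * t) * Complex.I))) atTop (𝓝 0) := by
  have := (RL2 (G θ α)).comp cocompact_comp_neg
  refine this.congr fun M => ?_
  apply intervalIntegral.integral_congr
  intro t _
  congr 1
  push_cast
  ring_nf

theorem aux (θ : ℝ) (h1 : -π < θ) (h2 : θ < π) (α : ℂ) :
    Tendsto (fun M : ℕ => ∑ n ∈ Finset.Icc (-(M:ℤ)) (M:ℤ),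
        csinc (α - n) * Complex.exp ((n:ℂ) * θ * Complex.I)) atTop
      (𝓝 (Complex.exp (α * θ * Complex.I))) := by
  rw [← tendsto_sub_nhds_zero_iff]
  set Pp := fun M : ℕ => ∫ t in (-π:ℝ)..π,
      G θ α t * Complex.exp ((((2*(M:ℂ)+1)/2) * t) * Complex.I) with hPp
  set Pm := fun M : ℕ => ∫ t in (-π:ℝ)..π,
      G θ α t * Complex.exp (-((((2*(M:ℂ)+1)/2) * t) * Complex.I)) with hPm
  have hbound : ∀ M : ℕ, ‖(∑ n ∈ Finset.Icc (-(M:ℤ)) (M:ℤ),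
        csinc (α - n) * Complex.exp ((n:ℂ) * θ * Complex.I))
      - Complex.exp (α * θ * Complex.I)‖ ≤ (2*π)⁻¹ * (‖Pp M‖ + ‖Pm M‖) := by
    intro M
    rw [key θ h1 h2 α M, norm_mul]
    have hn2π : ‖((2*π:ℝ):ℂ)⁻¹‖ = (2*π)⁻¹ := by
      rw [norm_inv, Complex.norm_real, Real.norm_eq_abs, abs_of_pos (by positivity)]
    rw [hn2π]
    gcongr
    have hsin : (((2*(M:ℂ)+1)/2) * θ) = ((((2*M+1)/2*θ : ℝ)):ℂ) := by push_cast; ring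
    rw [hsin]
    calc ‖_ * Pp M + _ * Pm M‖ ≤ ‖_ * Pp M‖ + ‖_ * Pm M‖ := norm_add_le _ _
      _ ≤ 1 * ‖Pp M‖ + 1 * ‖Pm M‖ := by
          rw [norm_mul, norm_mul]
          gcongr
          · have := norm_coef ((2*M+1)/2*θ) 1 (Or.inl rfl)
            simpa using this
          · have := norm_coef ((2*M+1)/2*θ) (-1) (Or.inr rfl)
            simpa [sub_eq_add_neg] using this
      _ = ‖Pp M‖ + ‖Pm M‖ := by ring
  apply squeeze_zero_norm hbound
  have := ((tendsto_Pp θ α).norm.add (tendsto_Pm θ α).norm).const_mul ((2*π)⁻¹)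
  simpa using this

end Shannon

/-- For `|x| = 1`, `x ≠ -1`, and any `α ∈ ℂ`, the symmetric partial sums
`∑_{n=-M}^{M} sinc(α - n) x^n` converge to the principal power `x ^ α`. -/
theorem shannon_series_cpow (x : ℂ) (hx : ‖x‖ = 1) (hx' : x ≠ -1) (α : ℂ) :
    Tendsto (fun M : ℕ => ∑ n ∈ Finset.Icc (-(M : ℤ)) (M : ℤ),
        csinc (α - (n : ℂ)) * x ^ n)
      atTop (𝓝 (x ^ α)) := by
  have hx0 : x ≠ 0 := by
    intro h; rw [h] at hx; simp at hx
  have habs : ‖x‖ = 1 := hx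
  set θ := x.arg with hθdef
  have h1 : -Real.pi < θ := Complex.neg_pi_lt_arg x
  have h2 : θ < Real.pi := by
    rcases lt_or_eq_of_le (Complex.arg_le_pi x) with h | h
    · exact h
    · exfalso
      obtain ⟨hre, him⟩ := Complex.arg_eq_pi_iff.mp h
      have hxre : x = ((x.re : ℝ) : ℂ) := by
        apply Complex.ext <;> simp [him]
      rw [hxre] at habs
      rw [Complex.norm_real, Real.norm_eq_abs, abs_of_neg hre] at habs
      apply hx'
      rw [hxre]
      rw [show x.re = -1 from by linarith]
      norm_num
  have hxe : x = Complex.exp (θ * Complex.I) := by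
    conv_lhs => rw [← Complex.norm_mul_exp_arg_mul_I x]
    rw [habs, Complex.ofReal_one, one_mul]
  have hxn : ∀ n : ℤ, x ^ n = Complex.exp ((n:ℂ) * θ * Complex.I) := by
    intro n
    rw [hxe, ← Complex.exp_int_mul, mul_assoc]
  have hxa : x ^ α = Complex.exp (α * θ * Complex.I) := by
    rw [Complex.cpow_def_of_ne_zero hx0]
    congr 1
    rw [Complex.log, habs, Real.log_one, Complex.ofReal_zero, zero_add]
    ring
  rw [hxa]
  refine (Shannon.aux θ h1 h2 α).congr fun M => ?_
  exact Finset.sum_congr rfl fun n _ => by rw [hxn n]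
end

section
/- Let x ∈ ℂ with x ≠ 0 and |x| ≠ 1, and let α ∈ ℂ∖ℤ. Then the symmetric partial sums ∑_{n=−M}^{M} sinc(α−n)·x^n do NOT converge as M → ∞ (the bilateral series diverges). -/
open Filter Finset Topology

lemma csinc_neg (z : ℂ) : csinc (-z) = csinc z := by
  unfold csinc
  rcases eq_or_ne z 0 with rfl | hz
  · simp
  · rw [if_neg (neg_ne_zero.mpr hz), if_neg hz, mul_neg, Complex.sin_neg, neg_div_neg_eq]

lemma csinc_int_shift (α : ℂ) (hα : ∀ m : ℤ, α ≠ (m : ℂ)) (n : ℤ) :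
    csinc (α - (n : ℂ)) =
      Complex.sin ((Real.pi : ℂ) * α) * Complex.cos ((n : ℂ) * (Real.pi : ℂ)) /
        ((Real.pi : ℂ) * (α - (n : ℂ))) := by
  have hne : α - (n : ℂ) ≠ 0 := by
    intro h
    exact hα n (by linear_combination h)
  unfold csinc
  rw [if_neg hne]
  congr 1
  have : (Real.pi : ℂ) * (α - (n : ℂ)) = (Real.pi : ℂ) * α - (n : ℂ) * (Real.pi : ℂ) := by ring
  rw [this, Complex.sin_sub, Complex.sin_int_mul_pi, mul_zero, sub_zero]

lemma norm_cos_int_mul_pi (n : ℤ) : ‖Complex.cos ((n : ℂ) * (Real.pi : ℂ))‖ = 1 := by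
  have : ((n : ℂ) * (Real.pi : ℂ)) = (((n : ℝ) * Real.pi : ℝ) : ℂ) := by push_cast; ring
  rw [this, ← Complex.ofReal_cos, Complex.norm_real]
  exact Real.abs_cos_int_mul_pi n

lemma sin_pi_alpha_ne (α : ℂ) (hα : ∀ m : ℤ, α ≠ (m : ℂ)) :
    Complex.sin ((Real.pi : ℂ) * α) ≠ 0 := by
  intro h
  rw [Complex.sin_eq_zero_iff] at h
  obtain ⟨k, hk⟩ := h
  have hpi : (Real.pi : ℂ) ≠ 0 := Complex.ofReal_ne_zero.mpr Real.pi_ne_zero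
  apply hα k
  have h2 : (Real.pi : ℂ) * α = (Real.pi : ℂ) * (k : ℂ) := by linear_combination hk
  exact mul_left_cancel₀ hpi h2

lemma key_diverges (x : ℂ) (hx : x ≠ 0) (hx1 : 1 < ‖x‖) (α : ℂ)
    (hα : ∀ m : ℤ, α ≠ (m : ℂ)) :
    ¬ ∃ L : ℂ, Tendsto (fun M : ℕ => ∑ n ∈ Finset.Icc (-(M : ℤ)) (M : ℤ),
        csinc (α - (n : ℂ)) * x ^ n)
      atTop (𝓝 L) := by
  rintro ⟨L, hL⟩
  set f : ℤ → ℂ := fun n => csinc (α - (n : ℂ)) * x ^ n with hf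
  set S : ℕ → ℂ := fun M => ∑ n ∈ Finset.Icc (-(M : ℤ)) (M : ℤ), f n with hSdef
  have hne : ∀ n : ℤ, α - (n : ℂ) ≠ 0 := by
    intro n h
    exact hα n (by linear_combination h)
  -- step decomposition
  have hstep : ∀ M : ℕ, S (M + 1) = f ((M : ℤ) + 1) + f (-((M : ℤ) + 1)) + S M := by
    intro M
    have hset : Finset.Icc (-((M + 1 : ℕ) : ℤ)) ((M + 1 : ℕ) : ℤ) =
        insert ((M : ℤ) + 1) (insert (-((M : ℤ) + 1)) (Finset.Icc (-(M : ℤ)) (M : ℤ))) := by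
      ext n
      simp only [Finset.mem_Icc, Finset.mem_insert]
      push_cast
      omega
    have h1 : ((M : ℤ) + 1) ∉ insert (-((M : ℤ) + 1)) (Finset.Icc (-(M : ℤ)) (M : ℤ)) := by
      simp only [Finset.mem_insert, Finset.mem_Icc]
      omega
    have h2 : (-((M : ℤ) + 1)) ∉ Finset.Icc (-(M : ℤ)) (M : ℤ) := by
      simp only [Finset.mem_Icc]
      omega
    simp only [hSdef, hset, Finset.sum_insert h1, Finset.sum_insert h2]
    ring
  -- the pair terms tend to 0
  have ht : Tendsto (fun M : ℕ => f ((M : ℤ) + 1) + f (-((M : ℤ) + 1))) atTop (𝓝 0) := by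
    have h1 : Tendsto (fun M : ℕ => S (M + 1)) atTop (𝓝 L) :=
      hL.comp (tendsto_add_atTop_nat 1)
    have h2 := h1.sub hL
    rw [sub_self] at h2
    refine h2.congr fun M => ?_
    rw [hstep M]; ring
  -- rewrite pair terms
  set c : ℂ := Complex.sin ((Real.pi : ℂ) * α) with hc
  have hcne : c ≠ 0 := sin_pi_alpha_ne α hα
  have hpair : ∀ n : ℤ, f n + f (-n) =
      c * Complex.cos ((n : ℂ) * (Real.pi : ℂ)) / (Real.pi : ℂ) *
        (x ^ n / (α - (n : ℂ)) + x ^ (-n) / (α + (n : ℂ))) := by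
    intro n
    have e1 := csinc_int_shift α hα n
    have e2 := csinc_int_shift α hα (-n)
    have hpi : (Real.pi : ℂ) ≠ 0 := Complex.ofReal_ne_zero.mpr Real.pi_ne_zero
    have hne1 : α - (n : ℂ) ≠ 0 := hne n
    have hne2 : α + (n : ℂ) ≠ 0 := by
      have := hne (-n); push_cast at this
      intro h; apply this; linear_combination h
    have hgen : ∀ a p b t : ℂ, a / (p * b) * t = a / p * (t / b) := by
      intro a p b t
      rw [div_mul_eq_mul_div, div_mul_div_comm]
    simp only [hf, e1, e2, ← hc]
    push_cast
    simp only [neg_mul, Complex.cos_neg, sub_neg_eq_add]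
    rw [hgen, hgen, mul_add]
  -- norm of pair = (‖c‖/π) * ‖u M‖
  have hu : Tendsto (fun M : ℕ =>
      ‖x ^ ((M : ℤ) + 1) / (α - ((M : ℂ) + 1)) +
        x ^ (-((M : ℤ) + 1)) / (α + ((M : ℂ) + 1))‖) atTop (𝓝 0) := by
    have hnorm := ht.norm
    rw [norm_zero] at hnorm
    have heq : ∀ M : ℕ, ‖f ((M : ℤ) + 1) + f (-((M : ℤ) + 1))‖ =
        (‖c‖ / Real.pi) * ‖x ^ ((M : ℤ) + 1) / (α - ((M : ℂ) + 1)) +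
          x ^ (-((M : ℤ) + 1)) / (α + ((M : ℂ) + 1))‖ := by
      intro M
      rw [hpair ((M : ℤ) + 1)]
      rw [norm_mul, norm_div, norm_mul, norm_cos_int_mul_pi, Complex.norm_real,
        Real.norm_eq_abs, abs_of_pos Real.pi_pos, mul_one]
      push_cast
      ring_nf
    have := hnorm.congr (fun M => heq M)
    have hcpos : 0 < ‖c‖ / Real.pi := div_pos (norm_pos_iff.mpr hcne) Real.pi_pos
    have := this.const_mul ((‖c‖ / Real.pi)⁻¹)
    rw [mul_zero] at this
    refine this.congr fun M => ?_
    rw [← mul_assoc, inv_mul_cancel₀ (ne_of_gt hcpos), one_mul]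
  -- B M → 0
  set s : ℝ := ‖x‖⁻¹ with hs
  have hxpos : 0 < ‖x‖ := norm_pos_iff.mpr hx
  have hs0 : 0 ≤ s := inv_nonneg.mpr hxpos.le
  have hs1 : s < 1 := by
    rw [hs, inv_lt_one_iff₀]; right; exact hx1
  have hspow : Tendsto (fun M : ℕ => s ^ (M + 1)) atTop (𝓝 0) :=
    (tendsto_pow_atTop_nhds_zero_of_lt_one hs0 hs1).comp (tendsto_add_atTop_nat 1)
  have hnormxz : ∀ M : ℕ, ‖x ^ ((M : ℤ) + 1)‖ = ‖x‖ ^ (M + 1) := by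
    intro M
    have : ((M : ℤ) + 1) = ((M + 1 : ℕ) : ℤ) := by push_cast; ring
    rw [this, zpow_natCast, norm_pow]
  have hnormxzneg : ∀ M : ℕ, ‖x ^ (-((M : ℤ) + 1))‖ = s ^ (M + 1) := by
    intro M
    have : (-((M : ℤ) + 1)) = (-((M + 1 : ℕ) : ℤ)) := by push_cast; ring
    rw [this, zpow_neg, zpow_natCast, norm_inv, norm_pow, hs, inv_pow]
  have hB : Tendsto (fun M : ℕ =>
      ‖x ^ (-((M : ℤ) + 1)) / (α + ((M : ℂ) + 1))‖) atTop (𝓝 0) := by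
    refine squeeze_zero' (Eventually.of_forall fun M => norm_nonneg _) ?_ hspow
    filter_upwards [eventually_ge_atTop (Nat.ceil ‖α‖)] with M hM
    have hMα : ‖α‖ ≤ (M : ℝ) := le_trans (Nat.le_ceil _) (by exact_mod_cast hM)
    have hden : 1 ≤ ‖α + ((M : ℂ) + 1)‖ := by
      have hd1 : ((M : ℝ) + 1) - ‖α‖ ≤ ‖α + ((M : ℂ) + 1)‖ := by
        have h1 : ‖((M : ℂ) + 1)‖ = (M : ℝ) + 1 := by
          rw [show ((M : ℂ) + 1) = ((M + 1 : ℕ) : ℂ) by push_cast; ring,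
            Complex.norm_natCast]
          push_cast; ring
        calc ((M : ℝ) + 1) - ‖α‖ = ‖((M : ℂ) + 1)‖ - ‖α‖ := by rw [h1]
          _ ≤ ‖α + ((M : ℂ) + 1)‖ := by
              have h2 := norm_sub_norm_le ((M : ℂ) + 1) (-α)
              simpa [norm_neg, sub_neg_eq_add, add_comm] using h2
      linarith
    rw [norm_div, hnormxzneg M]
    calc s ^ (M + 1) / ‖α + ((M : ℂ) + 1)‖ ≤ s ^ (M + 1) / 1 := by
          apply div_le_div_of_nonneg_left (by positivity) one_pos hden
      _ = s ^ (M + 1) := by ring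
  -- A M → 0
  have hA : Tendsto (fun M : ℕ =>
      ‖x ^ ((M : ℤ) + 1) / (α - ((M : ℂ) + 1))‖) atTop (𝓝 0) := by
    have hsum := hu.add hB
    rw [add_zero] at hsum
    have hband : ∀ M : ℕ, ‖x ^ ((M : ℤ) + 1) / (α - ((M : ℂ) + 1))‖ ≤
        ‖x ^ ((M : ℤ) + 1) / (α - ((M : ℂ) + 1)) +
          x ^ (-((M : ℤ) + 1)) / (α + ((M : ℂ) + 1))‖ +
        ‖x ^ (-((M : ℤ) + 1)) / (α + ((M : ℂ) + 1))‖ := by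
      intro M
      have hrw : x ^ ((M : ℤ) + 1) / (α - ((M : ℂ) + 1)) =
          (x ^ ((M : ℤ) + 1) / (α - ((M : ℂ) + 1)) +
            x ^ (-((M : ℤ) + 1)) / (α + ((M : ℂ) + 1))) -
          x ^ (-((M : ℤ) + 1)) / (α + ((M : ℂ) + 1)) := by ring
      conv_lhs => rw [hrw]
      exact norm_sub_le _ _
    exact squeeze_zero' (Eventually.of_forall fun M => norm_nonneg _)
      (Eventually.of_forall hband) hsum
  -- but A M * g M ≥ 1 where g M → 0 : contradiction
  set g : ℕ → ℝ := fun M => ((M : ℝ) + 1 + ‖α‖) * s ^ (M + 1) with hg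
  have hgto : Tendsto g atTop (𝓝 0) := by
    have h1 : Tendsto (fun M : ℕ => ((M : ℝ) + 1) * s ^ (M + 1)) atTop (𝓝 0) := by
      have := (tendsto_self_mul_const_pow_of_lt_one hs0 hs1).comp (tendsto_add_atTop_nat 1)
      refine this.congr fun M => ?_
      simp only [Function.comp_apply]
      push_cast
      ring
    have h2 : Tendsto (fun M : ℕ => ‖α‖ * s ^ (M + 1)) atTop (𝓝 0) := by
      simpa using hspow.const_mul ‖α‖
    have := h1.add h2
    rw [add_zero] at this
    refine this.congr fun M => ?_
    rw [hg]; ring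
  have hprod : Tendsto (fun M : ℕ =>
      ‖x ^ ((M : ℤ) + 1) / (α - ((M : ℂ) + 1))‖ * g M) atTop (𝓝 0) := by
    simpa using hA.mul hgto
  have hlow : ∀ M : ℕ, (1 : ℝ) ≤
      ‖x ^ ((M : ℤ) + 1) / (α - ((M : ℂ) + 1))‖ * g M := by
    intro M
    have hdenpos : 0 < ‖α - ((M : ℂ) + 1)‖ := by
      rw [norm_pos_iff]
      have := hne ((M : ℤ) + 1)
      push_cast at this ⊢
      exact this
    have hdenle : ‖α - ((M : ℂ) + 1)‖ ≤ (M : ℝ) + 1 + ‖α‖ := by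
      have h1 : ‖((M : ℂ) + 1)‖ = (M : ℝ) + 1 := by
        rw [show ((M : ℂ) + 1) = ((M + 1 : ℕ) : ℂ) by push_cast; ring,
          Complex.norm_natCast]
        push_cast; ring
      calc ‖α - ((M : ℂ) + 1)‖ ≤ ‖α‖ + ‖((M : ℂ) + 1)‖ :=
            norm_sub_le _ _
        _ = (M : ℝ) + 1 + ‖α‖ := by rw [h1]; ring
    rw [norm_div, hnormxz M, hg]
    have hxs : ‖x‖ ^ (M + 1) * s ^ (M + 1) = 1 := by
      rw [hs, inv_pow, mul_inv_cancel₀ (by positivity)]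
    have key : ‖x‖ ^ (M + 1) / ‖α - ((M : ℂ) + 1)‖ *
        (((M : ℝ) + 1 + ‖α‖) * s ^ (M + 1)) =
        (((M : ℝ) + 1 + ‖α‖) / ‖α - ((M : ℂ) + 1)‖) *
          (‖x‖ ^ (M + 1) * s ^ (M + 1)) := by ring
    rw [key, hxs, mul_one]
    rw [le_div_iff₀ hdenpos, one_mul]
    exact hdenle
  have : (1 : ℝ) ≤ 0 := ge_of_tendsto' hprod hlow
  linarith

/-- For `x ≠ 0` with `|x| ≠ 1`, and `α ∈ ℂ ∖ ℤ`, the symmetric partial sums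
`∑_{n=-M}^{M} sinc(α - n) x^n` do not converge. -/
theorem shannon_series_diverges (x : ℂ) (hx : x ≠ 0) (hx' : ‖x‖ ≠ 1) (α : ℂ)
    (hα : ∀ m : ℤ, α ≠ (m : ℂ)) :
    ¬ ∃ L : ℂ, Tendsto (fun M : ℕ => ∑ n ∈ Finset.Icc (-(M : ℤ)) (M : ℤ),
        csinc (α - (n : ℂ)) * x ^ n)
      atTop (𝓝 L) := by
  rcases lt_or_gt_of_ne hx' with hlt | hgt
  · -- ‖x‖ < 1 : reduce to x⁻¹, -α
    have hxpos : 0 < ‖x‖ := norm_pos_iff.mpr hx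
    have hxinv : x⁻¹ ≠ 0 := inv_ne_zero hx
    have hxinv1 : 1 < ‖x⁻¹‖ := by
      rw [norm_inv]
      exact (one_lt_inv₀ hxpos).mpr hlt
    have hα' : ∀ m : ℤ, -α ≠ (m : ℂ) := by
      intro m h
      apply hα (-m)
      push_cast
      linear_combination -h
    intro ⟨L, hL⟩
    apply key_diverges x⁻¹ hxinv hxinv1 (-α) hα'
    refine ⟨L, hL.congr fun M => ?_⟩
    apply Finset.sum_equiv (Equiv.neg ℤ)
    · intro n
      simp only [Finset.mem_Icc, Equiv.neg_apply]
      omega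
    · intro n hn
      have h1 : csinc (α - (n : ℂ)) = csinc (-α - ((-n : ℤ) : ℂ)) := by
        rw [← csinc_neg (α - (n : ℂ))]
        congr 1
        push_cast
        ring
      have h2 : x ^ n = (x⁻¹) ^ (-n : ℤ) := by
        rw [inv_zpow, ← zpow_neg, neg_neg]
      rw [h1, h2]
      rfl
  · exact key_diverges x hx hgt α hα
end

section
/- Let N ≥ 1 be a natural number and let x ∈ ℂ with x^N = 1 and x ≠ −1, and let α ∈ ℂ∖ℤ. Then the principal power x^α equals (1/N)·∑_{n=0}^{N−1} sin(π(α−n))·cot(π(α−n)/N)·x^n if N is even, and (1/N)·∑_{n=0}^{N−1} sin(π(α−n))·csc(π(α−n)/N)·x^n if N is odd. -/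
open Finset Complex

private lemma char_sum_zero (N : ℕ) (hN : 1 ≤ N) (r : ℕ) (hr : ¬ N ∣ r) :
    ∑ n ∈ Finset.range N, (Complex.exp (2 * Real.pi * Complex.I / N) ^ r) ^ n = 0 := by
  set ζ := Complex.exp (2 * Real.pi * Complex.I / N) with hζ
  have hprim : IsPrimitiveRoot ζ N := Complex.isPrimitiveRoot_exp N (by omega)
  have h1 : ζ ^ r ≠ 1 := fun h => hr ((hprim.pow_eq_one_iff_dvd r).mp h)
  rw [geom_sum_eq h1]
  have : (ζ ^ r) ^ N = 1 := by
    rw [← pow_mul, mul_comm, pow_mul, hprim.pow_eq_one, one_pow]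
  rw [this, sub_self, zero_div]

private lemma key_sum (N : ℕ) (hN : 1 ≤ N) (Q : ℂ) (hQ : Q ^ N ≠ 1) (p : ℕ)
    (hp1 : 1 ≤ p) (hpN : p ≤ N) :
    ∑ n ∈ Finset.range N,
        (Complex.exp (2 * Real.pi * Complex.I / N) ^ p) ^ n
          / (Q - Complex.exp (2 * Real.pi * Complex.I / N) ^ n)
      = N * Q ^ (p - 1) / (Q ^ N - 1) := by
  set ζ := Complex.exp (2 * Real.pi * Complex.I / N) with hζ
  have hprim : IsPrimitiveRoot ζ N := Complex.isPrimitiveRoot_exp N (by omega)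
  have hQ1 : Q ^ N - 1 ≠ 0 := sub_ne_zero.mpr hQ
  have hstep : ∀ n ∈ Finset.range N,
      (ζ ^ p) ^ n / (Q - ζ ^ n)
        = (∑ j ∈ Finset.range N, Q ^ j * (ζ ^ (N - 1 - j + p)) ^ n) / (Q ^ N - 1) := by
    intro n _
    have hzn : (ζ ^ n) ^ N = 1 := by
      rw [← pow_mul, mul_comm, pow_mul, hprim.pow_eq_one, one_pow]
    have hne : Q - ζ ^ n ≠ 0 := by
      intro h
      apply hQ
      rw [sub_eq_zero] at h
      rw [h, hzn]
    have hgeo : (∑ j ∈ Finset.range N, Q ^ j * (ζ ^ n) ^ (N - 1 - j)) * (Q - ζ ^ n)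
        = Q ^ N - 1 := by
      rw [geom_sum₂_mul, hzn]
    have hpow : ∀ j : ℕ, (ζ ^ p) ^ n * (ζ ^ n) ^ (N - 1 - j) = (ζ ^ (N - 1 - j + p)) ^ n := by
      intro j
      rw [← pow_mul, ← pow_mul, ← pow_add, ← pow_mul]
      congr 1
      ring
    have h2 : (ζ ^ p) ^ n * (∑ j ∈ Finset.range N, Q ^ j * (ζ ^ n) ^ (N - 1 - j))
        = ∑ j ∈ Finset.range N, Q ^ j * (ζ ^ (N - 1 - j + p)) ^ n := by
      rw [Finset.mul_sum]
      exact Finset.sum_congr rfl fun j _ => by rw [← hpow j]; ring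
    rw [div_eq_div_iff hne hQ1, ← hgeo, ← mul_assoc, h2]
  rw [Finset.sum_congr rfl hstep, ← Finset.sum_div]
  congr 1
  rw [Finset.sum_comm]
  have hmem : p - 1 ∈ Finset.range N := Finset.mem_range.mpr (by omega)
  rw [Finset.sum_eq_single_of_mem (p - 1) hmem ?_]
  · have hNe : N - 1 - (p - 1) + p = N := by omega
    rw [hNe, hprim.pow_eq_one]
    simp [Finset.mul_sum]
  · intro j hj hjne
    rw [← Finset.mul_sum, char_sum_zero N hN _ ?_, mul_zero]
    have hjN : j < N := Finset.mem_range.mp hj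
    intro ⟨c, hc⟩
    have hr1 : 1 ≤ N - 1 - j + p := by omega
    have hr2 : N - 1 - j + p < 2 * N := by omega
    have hlt : N * c < N * 2 := by
      calc N * c = N - 1 - j + p := hc.symm
        _ < 2 * N := hr2
        _ = N * 2 := by ring
    have hc2 : c < 2 := Nat.lt_of_mul_lt_mul_left hlt
    interval_cases c <;> omega

/-- For a root of unity `x` (with `x^N = 1`, `x ≠ -1`) and `α ∈ ℂ ∖ ℤ`, the principal power
`x ^ α` equals the finite trigonometric interpolation of the powers `x^0, …, x^{N-1}`. -/
theorem cpow_rootOfUnity_interpolation (N : ℕ) (hN : 1 ≤ N) (x : ℂ) (hx : x ^ N = 1)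
    (hx' : x ≠ -1) (α : ℂ) (hα : ∀ m : ℤ, α ≠ (m : ℂ)) :
    x ^ α = if Even N then
        (1 / (N : ℂ)) * ∑ n ∈ Finset.range N,
          Complex.sin ((Real.pi : ℂ) * (α - n)) *
            Complex.cot ((Real.pi : ℂ) * (α - n) / N) * x ^ n
      else
        (1 / (N : ℂ)) * ∑ n ∈ Finset.range N,
          Complex.sin ((Real.pi : ℂ) * (α - n)) *
            (Complex.sin ((Real.pi : ℂ) * (α - n) / N))⁻¹ * x ^ n := by
  have hN0 : N ≠ 0 := by omega
  have hNC : (N : ℂ) ≠ 0 := Nat.cast_ne_zero.mpr hN0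
  have hx0 : x ≠ 0 := by
    intro h; rw [h, zero_pow hN0] at hx; exact zero_ne_one hx
  have habs : ‖x‖ = 1 := by
    have h1 : ‖x‖ ^ N = 1 := by rw [← norm_pow, hx, norm_one]
    by_contra hne
    rcases lt_or_gt_of_ne hne with hlt | hgt
    · have h2 := pow_lt_one₀ (norm_nonneg x) hlt hN0
      rw [h1] at h2; exact lt_irrefl 1 h2
    · have h2 := one_lt_pow₀ hgt hN0
      rw [h1] at h2; exact lt_irrefl 1 h2
  have hargpi : x.arg ≠ Real.pi := by
    intro h
    apply hx'
    have h2 := Complex.norm_mul_exp_arg_mul_I x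
    rw [habs, h] at h2
    rw [← h2]
    simp [Complex.exp_pi_mul_I]
  have hlog : Complex.log x = (x.arg : ℂ) * Complex.I := by
    have : Complex.log x = Real.log ‖x‖ + x.arg * Complex.I := rfl
    rw [this, habs, Real.log_one]
    simp
  have hexp1 : Complex.exp (N * Complex.log x) = 1 := by
    rw [Complex.exp_nat_mul, Complex.exp_log hx0, hx]
  obtain ⟨k, hk⟩ := Complex.exp_eq_one_iff.mp hexp1
  -- hk : ↑N * Complex.log x = ↑k * (2 * ↑Real.pi * I)
  have harg : (N : ℝ) * x.arg = k * (2 * Real.pi) := by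
    have h := hk
    rw [hlog] at h
    have h2 := congrArg Complex.im h
    simpa using h2
  have hpi : (0:ℝ) < Real.pi := Real.pi_pos
  have hargabs : |x.arg| < Real.pi :=
    abs_lt.mpr ⟨Complex.neg_pi_lt_arg x, lt_of_le_of_ne (Complex.arg_le_pi x) hargpi⟩
  have hkb : 2 * |k| < (N : ℤ) := by
    have e1 : |(N:ℝ) * x.arg| = |(k:ℝ) * (2 * Real.pi)| := by rw [harg]
    rw [abs_mul, abs_mul] at e1
    rw [_root_.abs_of_nonneg (Nat.cast_nonneg N),
      _root_.abs_of_nonneg (by linarith : (0:ℝ) ≤ 2 * Real.pi)] at e1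
    have hNpos : (0:ℝ) < (N:ℝ) := by positivity
    have e4 : |(k:ℝ)| * (2 * Real.pi) < (N:ℝ) * Real.pi := by
      rw [← e1]
      exact mul_lt_mul_of_pos_left hargabs hNpos
    have e5 : (2:ℝ) * |(k:ℝ)| < (N:ℝ) := by nlinarith
    have e6 : ((2 * |k| : ℤ) : ℝ) < ((N:ℤ):ℝ) := by push_cast; push_cast at e5; linarith
    exact_mod_cast e6
  -- common setup
  have hsin_def : ∀ z : ℂ, Complex.sin z
      = ((Complex.exp (-z * Complex.I) - Complex.exp (z * Complex.I)) * Complex.I) / 2 :=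
    fun z => rfl
  have hcos_def : ∀ z : ℂ, Complex.cos z
      = (Complex.exp (z * Complex.I) + Complex.exp (-z * Complex.I)) / 2 :=
    fun z => rfl
  set ζ : ℂ := Complex.exp (2 * (Real.pi : ℂ) * Complex.I / N) with hζdef
  set Q : ℂ := Complex.exp (2 * (Real.pi : ℂ) * Complex.I * α / N) with hQdef
  set a : ℂ := Complex.exp ((Real.pi : ℂ) * α * Complex.I) with hadef
  have ha0 : a ≠ 0 := Complex.exp_ne_zero _
  have hζN : ζ ^ N = 1 := (Complex.isPrimitiveRoot_exp N hN0).pow_eq_one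
  have hQN : Q ^ N = Complex.exp (2 * (Real.pi : ℂ) * Complex.I * α) := by
    rw [hQdef, ← Complex.exp_nat_mul]
    congr 1
    field_simp
  have h2piI : (2 * (Real.pi : ℂ) * Complex.I) ≠ 0 := by
    apply mul_ne_zero (mul_ne_zero two_ne_zero _) Complex.I_ne_zero
    exact Complex.ofReal_ne_zero.mpr Real.pi_ne_zero
  have hQNne : Q ^ N ≠ 1 := by
    rw [hQN]
    intro h
    obtain ⟨m, hm⟩ := Complex.exp_eq_one_iff.mp h
    apply hα m
    apply mul_left_cancel₀ h2piI
    linear_combination hm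
  have hQ1 : Q ^ N - 1 ≠ 0 := sub_ne_zero.mpr hQNne
  have hQζ : ∀ n : ℕ, Q - ζ ^ n ≠ 0 := by
    intro n h
    apply hQNne
    rw [sub_eq_zero] at h
    rw [h, ← pow_mul, mul_comm, pow_mul, hζN, one_pow]
  have hζn0 : ∀ n : ℕ, ζ ^ n ≠ 0 := fun n => pow_ne_zero n (Complex.exp_ne_zero _)
  have hQN2 : Q ^ N = a * a := by
    rw [hQN, hadef, ← Complex.exp_add]
    congr 1
    ring
  have hsinbig : ∀ n : ℕ, Complex.sin ((Real.pi : ℂ) * (α - n))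
      = (-1 : ℂ) ^ n * ((a⁻¹ - a) * Complex.I) / 2 := by
    intro n
    have e1 : Complex.exp ((Real.pi : ℂ) * (α - n) * Complex.I)
        = a * (-1 : ℂ) ^ n := by
      rw [show (Real.pi : ℂ) * (α - n) * Complex.I
          = (Real.pi : ℂ) * α * Complex.I + (n : ℂ) * (-((Real.pi : ℂ) * Complex.I)) by
        push_cast; ring]
      rw [Complex.exp_add, Complex.exp_nat_mul, Complex.exp_neg, Complex.exp_pi_mul_I, hadef]
      norm_num
    have e2 : Complex.exp (-((Real.pi : ℂ) * (α - n)) * Complex.I)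
        = a⁻¹ * (-1 : ℂ) ^ n := by
      rw [show -((Real.pi : ℂ) * (α - n)) * Complex.I
          = -((Real.pi : ℂ) * α * Complex.I) + (n : ℂ) * ((Real.pi : ℂ) * Complex.I) by
        push_cast; ring]
      rw [Complex.exp_add, Complex.exp_neg, Complex.exp_nat_mul, Complex.exp_pi_mul_I, hadef]
    rw [hsin_def, e1, e2]
    ring
  have hE : x ^ α = Complex.exp (Complex.log x * α) := Complex.cpow_def_of_ne_zero hx0 α
  rcases Nat.even_or_odd N with hEv | hOd
  · -- EVEN CASE
    rw [if_pos hEv]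
    obtain ⟨M, hM⟩ := hEv
    have hM1 : 1 ≤ M := by omega
    have hNZ : (N : ℤ) = (M : ℤ) + M := by exact_mod_cast hM
    have hkM : |k| < (M : ℤ) := by linarith [hkb]
    obtain ⟨hk1, hk2⟩ := abs_lt.mp hkM
    set p : ℕ := (k + M).toNat with hpdef
    have hpP : (p : ℤ) = k + M := Int.toNat_of_nonneg (by linarith)
    have hp1 : 1 ≤ p := by omega
    have hpltN : p < N := by omega
    have hpC : (p : ℂ) = (k : ℂ) + (M : ℂ) := by exact_mod_cast hpP
    have hNCeq : (N : ℂ) = 2 * (M : ℂ) := by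
      have : (N : ℂ) = (M : ℂ) + (M : ℂ) := by exact_mod_cast hM
      rw [this]; ring
    have hζp : ζ ^ p = -x := by
      rw [hζdef, ← Complex.exp_nat_mul]
      have hxe : -x = Complex.exp ((Real.pi : ℂ) * Complex.I + Complex.log x) := by
        rw [Complex.exp_add, Complex.exp_pi_mul_I, Complex.exp_log hx0]
        ring
      rw [hxe]
      congr 1
      have h1 : (p : ℂ) * (2 * (Real.pi : ℂ) * Complex.I)
          = ((Real.pi : ℂ) * Complex.I + Complex.log x) * N := by
        linear_combination 2 * (Real.pi : ℂ) * Complex.I * hpC - hk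
          - (Real.pi : ℂ) * Complex.I * hNCeq
      field_simp
      linear_combination h1
    have hζpn : ∀ n : ℕ, (ζ ^ p) ^ n = (-1 : ℂ) ^ n * x ^ n := by
      intro n
      rw [hζp, neg_pow]
    have hterm : ∀ n ∈ Finset.range N,
        Complex.sin ((Real.pi : ℂ) * (α - n)) * Complex.cot ((Real.pi : ℂ) * (α - n) / N) * x ^ n
          = (a - a⁻¹) / 2 * (2 * Q * ((ζ ^ p) ^ n / (Q - ζ ^ n)) - (ζ ^ p) ^ n) := by
      intro n _
      have hQA : Q = Complex.exp ((Real.pi : ℂ) * (α - n) / N * Complex.I)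
          * Complex.exp ((Real.pi : ℂ) * (α - n) / N * Complex.I) * ζ ^ n := by
        rw [hζdef, ← Complex.exp_nat_mul, ← Complex.exp_add, ← Complex.exp_add, hQdef]
        congr 1
        field_simp
        ring
      set An := Complex.exp ((Real.pi : ℂ) * (α - n) / N * Complex.I) with hAndef
      have hAn0 : An ≠ 0 := Complex.exp_ne_zero _
      have h4 : An * An * ζ ^ n - ζ ^ n ≠ 0 := by
        rw [← hQA]; exact hQζ n
      have h5 : An * An - 1 ≠ 0 := by
        intro h
        apply h4
        rw [sub_eq_zero] at h
        rw [h, one_mul, sub_self]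
      have hAne : An⁻¹ - An ≠ 0 := by
        intro h
        rw [sub_eq_zero] at h
        apply h5
        rw [sub_eq_zero]
        nth_rewrite 1 [← h]
        exact inv_mul_cancel₀ hAn0
      have hsinw : Complex.sin ((Real.pi : ℂ) * (α - n) / N) = (An⁻¹ - An) * Complex.I / 2 := by
        rw [hsin_def, neg_mul, Complex.exp_neg, ← hAndef]
      have hcosw : Complex.cos ((Real.pi : ℂ) * (α - n) / N) = (An + An⁻¹) / 2 := by
        rw [hcos_def, neg_mul, Complex.exp_neg, ← hAndef]
      have hsD : (An⁻¹ - An) * Complex.I / 2 ≠ 0 :=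
        div_ne_zero (mul_ne_zero hAne Complex.I_ne_zero) two_ne_zero
      have hAinv : An * An⁻¹ = 1 := mul_inv_cancel₀ hAn0
      have hcot : Complex.cot ((Real.pi : ℂ) * (α - n) / N)
          = (An * An + 1) * Complex.I / (An * An - 1) := by
        rw [Complex.cot_eq_cos_div_sin, hcosw, hsinw, div_eq_div_iff hsD h5]
        linear_combination An * hAinv
          - ((An * An + 1) * (An⁻¹ - An) / 2) * Complex.I_mul_I
      have hsincot : Complex.sin ((Real.pi : ℂ) * (α - n))
            * Complex.cot ((Real.pi : ℂ) * (α - n) / N)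
          = (-1 : ℂ) ^ n * ((a - a⁻¹) / 2) * ((An * An + 1) / (An * An - 1)) := by
        rw [hsinbig n, hcot]
        have e : (-1 : ℂ) ^ n * ((a⁻¹ - a) * Complex.I) / 2
              * ((An * An + 1) * Complex.I / (An * An - 1))
            = (-1 : ℂ) ^ n * ((a⁻¹ - a) * (Complex.I * Complex.I))
                * ((An * An + 1) / (An * An - 1)) / 2 := by
          ring
        rw [e, Complex.I_mul_I]
        ring
      have hsplit : (ζ ^ p) ^ n / (Q - ζ ^ n)
          = (ζ ^ p) ^ n * ((ζ ^ n)⁻¹ * (An * An - 1)⁻¹) := by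
        rw [show Q - ζ ^ n = ζ ^ n * (An * An - 1) from by rw [hQA]; ring,
          div_eq_mul_inv, mul_inv]
      have hzinv : ζ ^ n * (ζ ^ n)⁻¹ = 1 := mul_inv_cancel₀ (hζn0 n)
      have h5i : (An * An - 1) * (An * An - 1)⁻¹ = 1 := mul_inv_cancel₀ h5
      rw [hsincot, hsplit, hζpn n, hQA]
      linear_combination (-(((a - a⁻¹) * (-1 : ℂ) ^ n * x ^ n) / 2)) * h5i
        - (((a - a⁻¹) * (-1 : ℂ) ^ n * x ^ n) * An * An * (An * An - 1)⁻¹) * hzinv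
    rw [Finset.sum_congr rfl hterm, ← Finset.mul_sum, Finset.sum_sub_distrib, ← Finset.mul_sum]
    have hpnd : ¬ N ∣ p := by
      intro hd
      have := Nat.le_of_dvd (by omega) hd
      omega
    rw [hζdef, key_sum N hN Q hQNne p hp1 (le_of_lt hpltN), char_sum_zero N hN p hpnd]
    rw [hE]
    have h2 : Complex.exp (Complex.log x * α) * a = Q ^ p := by
      rw [hQdef, ← Complex.exp_nat_mul, hadef, ← Complex.exp_add]
      congr 1
      have h1 : (Complex.log x * α + (Real.pi : ℂ) * α * Complex.I) * N
          = (p : ℂ) * (2 * (Real.pi : ℂ) * Complex.I * α) := by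
        linear_combination α * hk - 2 * (Real.pi : ℂ) * Complex.I * α * hpC
          + (Real.pi : ℂ) * α * Complex.I * hNCeq
      field_simp
      linear_combination h1
    have hQp : Q * Q ^ (p - 1) = Q ^ p := by
      rw [← pow_succ']
      congr 1
      omega
    have hinv : a * a⁻¹ = 1 := mul_inv_cancel₀ ha0
    have hfinal : Complex.exp (Complex.log x * α) = (a - a⁻¹) * Q ^ p / (Q ^ N - 1) := by
      rw [eq_div_iff hQ1]
      linear_combination (a - a⁻¹) * h2 + Complex.exp (Complex.log x * α) * hQN2
        + Complex.exp (Complex.log x * α) * hinv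
    rw [hfinal, ← hQp]
    field_simp
    ring
  · -- ODD CASE
    rw [if_neg (Nat.not_even_iff_odd.mpr hOd)]
    obtain ⟨M, hM⟩ := hOd
    have hNZ : (N : ℤ) = 2 * (M : ℤ) + 1 := by exact_mod_cast hM
    have h2b : 2 * |k| + 1 ≤ (N : ℤ) := Int.add_one_le_iff.mpr hkb
    have hkM : |k| ≤ (M : ℤ) := by linarith
    obtain ⟨hk1, hk2⟩ := abs_le.mp hkM
    set p : ℕ := (k + M + 1).toNat with hpdef
    have hpP : (p : ℤ) = k + M + 1 := Int.toNat_of_nonneg (by linarith)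
    have hp1 : 1 ≤ p := by omega
    have hpN : p ≤ N := by omega
    have hpC : (p : ℂ) = (k : ℂ) + (M : ℂ) + 1 := by exact_mod_cast hpP
    have hNCeq : (N : ℂ) = 2 * (M : ℂ) + 1 := by exact_mod_cast hM
    set μ : ℂ := Complex.exp ((Real.pi : ℂ) * Complex.I / N) with hμdef
    set v : ℂ := Complex.exp ((Real.pi : ℂ) * Complex.I * α / N) with hvdef
    have hζp : ζ ^ p = -(μ * x) := by
      rw [hζdef, hμdef, ← Complex.exp_nat_mul]
      have hxe : -(Complex.exp ((Real.pi : ℂ) * Complex.I / N) * x)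
          = Complex.exp ((Real.pi : ℂ) * Complex.I + (Real.pi : ℂ) * Complex.I / N
              + Complex.log x) := by
        rw [Complex.exp_add, Complex.exp_add, Complex.exp_pi_mul_I, Complex.exp_log hx0]
        ring
      rw [hxe]
      congr 1
      have h1 : (p : ℂ) * (2 * (Real.pi : ℂ) * Complex.I)
          = (Real.pi : ℂ) * Complex.I * N + (Real.pi : ℂ) * Complex.I + Complex.log x * N := by
        linear_combination 2 * (Real.pi : ℂ) * Complex.I * hpC - hk
          - (Real.pi : ℂ) * Complex.I * hNCeq
      field_simp
      linear_combination h1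
    have hζpn : ∀ n : ℕ, (ζ ^ p) ^ n = (-1 : ℂ) ^ n * (μ ^ n * x ^ n) := by
      intro n
      rw [hζp, neg_pow, mul_pow]
    have hterm : ∀ n ∈ Finset.range N,
        Complex.sin ((Real.pi : ℂ) * (α - n)) * (Complex.sin ((Real.pi : ℂ) * (α - n) / N))⁻¹
            * x ^ n
          = ((a - a⁻¹) * v) * ((ζ ^ p) ^ n / (Q - ζ ^ n)) := by
      intro n _
      have hQA : Q = Complex.exp ((Real.pi : ℂ) * (α - n) / N * Complex.I)
          * Complex.exp ((Real.pi : ℂ) * (α - n) / N * Complex.I) * ζ ^ n := by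
        rw [hζdef, ← Complex.exp_nat_mul, ← Complex.exp_add, ← Complex.exp_add, hQdef]
        congr 1
        field_simp
        ring
      set An := Complex.exp ((Real.pi : ℂ) * (α - n) / N * Complex.I) with hAndef
      have hAn0 : An ≠ 0 := Complex.exp_ne_zero _
      have hμn0 : μ ^ n ≠ 0 := pow_ne_zero n (Complex.exp_ne_zero _)
      have h4 : An * An * ζ ^ n - ζ ^ n ≠ 0 := by
        rw [← hQA]; exact hQζ n
      have h5 : An * An - 1 ≠ 0 := by
        intro h
        apply h4
        rw [sub_eq_zero] at h
        rw [h, one_mul, sub_self]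
      have hAne : An⁻¹ - An ≠ 0 := by
        intro h
        rw [sub_eq_zero] at h
        apply h5
        rw [sub_eq_zero]
        nth_rewrite 1 [← h]
        exact inv_mul_cancel₀ hAn0
      have hsinw : Complex.sin ((Real.pi : ℂ) * (α - n) / N) = (An⁻¹ - An) * Complex.I / 2 := by
        rw [hsin_def, neg_mul, Complex.exp_neg, ← hAndef]
      have hζnμ : ζ ^ n = μ ^ n * μ ^ n := by
        rw [hζdef, hμdef, ← Complex.exp_nat_mul, ← Complex.exp_nat_mul, ← Complex.exp_add]
        congr 1
        ring
      have hvA : v = An * μ ^ n := by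
        rw [hvdef, hμdef, hAndef, ← Complex.exp_nat_mul, ← Complex.exp_add]
        congr 1
        ring
      have hinvsin : ((An⁻¹ - An) * Complex.I / 2)⁻¹
          = 2 * An * Complex.I / (An * An - 1) := by
        apply inv_eq_of_mul_eq_one_right
        have e : (An⁻¹ - An) * Complex.I / 2 * (2 * An * Complex.I / (An * An - 1))
            = ((An⁻¹ * An - An * An) * (Complex.I * Complex.I)) / (An * An - 1) := by
          ring
        rw [e, Complex.I_mul_I, inv_mul_cancel₀ hAn0, div_eq_one_iff_eq h5]
        ring
      have hsincsc : Complex.sin ((Real.pi : ℂ) * (α - n))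
            * (Complex.sin ((Real.pi : ℂ) * (α - n) / N))⁻¹
          = (-1 : ℂ) ^ n * (a - a⁻¹) * (An / (An * An - 1)) := by
        rw [hsinbig n, hsinw, hinvsin]
        have e2 : (-1 : ℂ) ^ n * ((a⁻¹ - a) * Complex.I) / 2
              * (2 * An * Complex.I / (An * An - 1))
            = (-1 : ℂ) ^ n * ((a⁻¹ - a) * (Complex.I * Complex.I))
                * (An / (An * An - 1)) := by
          ring
        rw [e2, Complex.I_mul_I]
        ring
      have hsplit : (ζ ^ p) ^ n / (Q - ζ ^ n)
          = (ζ ^ p) ^ n * ((ζ ^ n)⁻¹ * (An * An - 1)⁻¹) := by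
        rw [show Q - ζ ^ n = ζ ^ n * (An * An - 1) from by rw [hQA]; ring,
          div_eq_mul_inv, mul_inv]
      rw [hsincsc, hsplit, hζpn n, hvA, hζnμ]
      have hzμ : (μ ^ n * μ ^ n) * (μ ^ n * μ ^ n)⁻¹ = 1 :=
        mul_inv_cancel₀ (mul_ne_zero hμn0 hμn0)
      linear_combination (-(((-1 : ℂ) ^ n * (a - a⁻¹) * An * x ^ n)
        * (An * An - 1)⁻¹)) * hzμ
    rw [Finset.sum_congr rfl hterm, ← Finset.mul_sum, hζdef,
      key_sum N hN Q hQNne p hp1 hpN, hE]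
    have h2 : Complex.exp (Complex.log x * α) * a = v * Q ^ (p - 1) := by
      rw [hQdef, hvdef, ← Complex.exp_nat_mul, hadef, ← Complex.exp_add, ← Complex.exp_add]
      congr 1
      have hc : ((p - 1 : ℕ) : ℂ) = (p : ℂ) - 1 := by
        push_cast [Nat.cast_sub hp1]
        ring
      rw [hc]
      have h1 : (Complex.log x * α + (Real.pi : ℂ) * α * Complex.I) * N
          = (Real.pi : ℂ) * Complex.I * α + ((p : ℂ) - 1) * (2 * (Real.pi : ℂ) * Complex.I * α) := by
        linear_combination α * hk - 2 * (Real.pi : ℂ) * Complex.I * α * hpC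
          + (Real.pi : ℂ) * α * Complex.I * hNCeq
      field_simp
      linear_combination h1
    have hinv : a * a⁻¹ = 1 := mul_inv_cancel₀ ha0
    have hfinal : Complex.exp (Complex.log x * α) = (a - a⁻¹) * v * Q ^ (p - 1) / (Q ^ N - 1) := by
      rw [eq_div_iff hQ1]
      linear_combination (a - a⁻¹) * h2 + Complex.exp (Complex.log x * α) * hQN2
        + Complex.exp (Complex.log x * α) * hinv
    rw [hfinal]
    have hNinv : (N : ℂ) * (N : ℂ)⁻¹ = 1 := mul_inv_cancel₀ hNC
    linear_combination (-((a - a⁻¹) * v * Q ^ (p - 1) * (Q ^ N - 1)⁻¹)) * hNinv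
end

section
/- Let A be a unital C*-algebra, let a ∈ A be star-normal with spectrum σ(a) contained in the open disc {z ∈ ℂ : |z − 1| < 1}, and let α ∈ ℂ. Then the series ∑_{n=0}^∞ (∑_{k=0}^n P_k(n)·a^k)·P_n(α) (whose inner sum equals (1−a)^n, so the series is ∑_{n=0}^∞ binom(α,n)·(a−1)^n) converges in norm, and its sum equals cfc(z ↦ z^α, a), the continuous functional calculus of a applied to the principal power function z ↦ z^α. -/
open Filter Finset Topology

/-- The `n`-th Pochhammer–Newton polynomial `P_n(α) = ((-1)^n / n!) ∏_{m=0}^{n-1} (α - m)`. -/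
noncomputable def pochNewton (n : ℕ) (α : ℂ) : ℂ :=
  ((-1 : ℂ) ^ n / (n.factorial : ℂ)) * ∏ m ∈ Finset.range n, (α - (m : ℂ))


/-- coefficient of the Newton/binomial series -/
noncomputable def newtonCoeff (α : ℂ) (n : ℕ) : ℂ :=
  ((n.factorial : ℂ))⁻¹ * ∏ m ∈ Finset.range n, (α - (m : ℂ))

lemma pochNewton_eq (n : ℕ) (α : ℂ) : pochNewton n α = (-1 : ℂ) ^ n * newtonCoeff α n := by
  simp [pochNewton, newtonCoeff, div_eq_mul_inv, mul_assoc]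

lemma prod_range_cast_sub (n k : ℕ) (hk : k ≤ n) :
    (∏ m ∈ Finset.range k, ((n : ℂ) - (m : ℂ))) = (n.descFactorial k : ℂ) := by
  induction k with
  | zero => simp
  | succ k ih =>
    rw [Finset.prod_range_succ, ih (Nat.le_of_succ_le hk), Nat.descFactorial_succ]
    rw [Nat.cast_mul, Nat.cast_sub (Nat.le_of_succ_le hk)]
    ring

lemma pochNewton_nat (k n : ℕ) (hk : k ≤ n) :
    pochNewton k (n : ℂ) = (-1 : ℂ) ^ k * (n.choose k : ℂ) := by
  rw [pochNewton, prod_range_cast_sub n k hk, Nat.descFactorial_eq_factorial_mul_choose,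
    Nat.cast_mul]
  field_simp [Nat.factorial_ne_zero]

lemma mem_slitPlane_of_ball {z : ℂ} (hz : z ∈ Metric.ball (1 : ℂ) 1) : z ∈ Complex.slitPlane := by
  refine Or.inl ?_
  have h1 : |(z - 1).re| ≤ ‖z - 1‖ := Complex.abs_re_le_norm _
  rw [Metric.mem_ball, Complex.dist_eq] at hz
  have : |z.re - 1| < 1 := by simpa using h1.trans_lt hz
  linarith [(abs_lt.mp this).1]

lemma iteratedDeriv_cpow (α : ℂ) (n : ℕ) :
    ∀ z ∈ Complex.slitPlane, iteratedDeriv n (fun w : ℂ => w ^ α) z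
      = (∏ m ∈ Finset.range n, (α - (m : ℂ))) * z ^ (α - n) := by
  induction n with
  | zero => intro z hz; simp
  | succ n ih =>
    intro z hz
    rw [iteratedDeriv_succ]
    have hev : (iteratedDeriv n fun w : ℂ => w ^ α) =ᶠ[𝓝 z]
        (fun w => (∏ m ∈ Finset.range n, (α - (m : ℂ))) * w ^ (α - n)) :=
      Filter.eventually_of_mem (Complex.isOpen_slitPlane.mem_nhds hz) ih
    rw [hev.deriv_eq]
    have hd : HasDerivAt (fun w : ℂ => w ^ (α - n)) ((α - n) * z ^ (α - n - 1)) z :=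
      (Complex.hasStrictDerivAt_cpow_const hz).hasDerivAt
    rw [(hd.const_mul _).deriv, Finset.prod_range_succ]
    have : α - (n : ℂ) - 1 = α - ((n : ℕ) + 1 : ℕ) := by push_cast; ring
    rw [this]
    ring

lemma hasSum_cpow (α : ℂ) {z : ℂ} (hz : z ∈ Metric.ball (1 : ℂ) 1) :
    HasSum (fun n : ℕ => newtonCoeff α n * (z - 1) ^ n) (z ^ α) := by
  have hdiff : DifferentiableOn ℂ (fun w : ℂ => w ^ α) (Metric.ball (1 : ℂ) 1) := fun w hw =>
    ((Complex.hasStrictDerivAt_cpow_const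
      (mem_slitPlane_of_ball hw)).hasDerivAt.differentiableAt).differentiableWithinAt
  have h := Complex.hasSum_taylorSeries_on_ball hdiff hz
  convert h using 2 with n
  · rfl
  rw [iteratedDeriv_cpow α n 1 Complex.one_mem_slitPlane, Complex.one_cpow]
  simp [newtonCoeff, smul_eq_mul]
  ring

lemma newtonCoeff_succ_norm (α : ℂ) (n : ℕ) :
    ‖newtonCoeff α (n + 1)‖ = ‖newtonCoeff α n‖ * (‖α - (n : ℂ)‖ / ((n : ℝ) + 1)) := by
  have h : newtonCoeff α (n + 1) = newtonCoeff α n * (α - n) * ((n : ℂ) + 1)⁻¹ := by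
    rw [newtonCoeff, newtonCoeff, Finset.prod_range_succ, Nat.factorial_succ]
    push_cast
    rw [mul_inv]
    ring
  have hnorm : ‖((n : ℂ) + 1)‖ = (n : ℝ) + 1 := by
    rw [show ((n : ℂ) + 1) = ((n + 1 : ℕ) : ℂ) by push_cast; ring, Complex.norm_natCast]
    push_cast; ring
  rw [h, norm_mul, norm_mul, norm_inv, hnorm, div_eq_mul_inv, mul_assoc]

lemma summable_newton (α : ℂ) {r : ℝ} (hr0 : 0 ≤ r) (hr : r < 1) :
    Summable (fun n : ℕ => ‖newtonCoeff α n‖ * r ^ n) := by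
  set l : ℝ := (1 + r) / 2 with hl
  have hrl : r < l := by rw [hl]; linarith
  have hl1 : l < 1 := by rw [hl]; linarith
  refine summable_of_ratio_norm_eventually_le hl1 ?_
  have htend : Tendsto (fun n : ℕ => r * ‖α‖ * (1 / ((n : ℝ) + 1)) + r) atTop (𝓝 r) := by
    have h0 : Tendsto (fun n : ℕ => r * ‖α‖ * (1 / ((n : ℝ) + 1))) atTop (𝓝 0) := by
      simpa using tendsto_one_div_add_atTop_nhds_zero_nat.const_mul (r * ‖α‖)
    simpa using h0.add tendsto_const_nhds
  filter_upwards [htend.eventually_lt_const hrl] with n hn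
  have hn1 : (0 : ℝ) < (n : ℝ) + 1 := by positivity
  rw [Real.norm_of_nonneg (by positivity), Real.norm_of_nonneg (by positivity),
    newtonCoeff_succ_norm, pow_succ]
  have hb : ‖α - (n : ℂ)‖ ≤ ‖α‖ + n := by
    calc ‖α - (n : ℂ)‖ ≤ ‖α‖ + ‖(n : ℂ)‖ := norm_sub_le _ _
    _ = ‖α‖ + n := by rw [Complex.norm_natCast]
  have hfrac : ‖α - (n : ℂ)‖ / ((n : ℝ) + 1) * r ≤ l := by
    rw [div_mul_eq_mul_div, div_le_iff₀ hn1]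
    have hn' : r * ‖α‖ * (1 / ((n : ℝ) + 1)) + r < l := hn
    have hmul : r * ‖α‖ + r * ((n : ℝ) + 1) < l * ((n : ℝ) + 1) := by
      have := mul_lt_mul_of_pos_right hn' hn1
      calc r * ‖α‖ + r * ((n : ℝ) + 1)
          = (r * ‖α‖ * (1 / ((n : ℝ) + 1)) + r) * ((n : ℝ) + 1) := by field_simp
        _ < l * ((n : ℝ) + 1) := this
    nlinarith [mul_le_mul_of_nonneg_right hb hr0]
  calc ‖newtonCoeff α n‖ * (‖α - (n : ℂ)‖ / ((n : ℝ) + 1)) * (r ^ n * r)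
      = (‖newtonCoeff α n‖ * r ^ n) * (‖α - (n : ℂ)‖ / ((n : ℝ) + 1) * r) := by ring
    _ ≤ (‖newtonCoeff α n‖ * r ^ n) * l := mul_le_mul_of_nonneg_left hfrac (by positivity)
    _ = l * (‖newtonCoeff α n‖ * r ^ n) := mul_comm _ _

lemma inner_sum_eq {A : Type*} [CStarAlgebra A] (a : A) (n : ℕ) :
    (∑ k ∈ Finset.range (n + 1), pochNewton k (n : ℂ) • a ^ k) = (1 - a) ^ n := by
  have hc : Commute (-a) (1 : A) := (Commute.one_right a).neg_left
  have h := hc.add_pow n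
  rw [neg_add_eq_sub] at h
  rw [h]
  refine Finset.sum_congr rfl fun k hk => ?_
  rw [Finset.mem_range, Nat.lt_succ_iff] at hk
  rw [pochNewton_nat k n hk]
  calc ((-1 : ℂ) ^ k * (n.choose k : ℂ)) • a ^ k
      = (-1 : ℂ) ^ k • ((n.choose k : ℂ) • a ^ k) := by rw [mul_smul]
    _ = (-1 : ℂ) ^ k • ((n.choose k) • a ^ k) := by rw [Nat.cast_smul_eq_nsmul]
    _ = (n.choose k) • ((-1 : ℂ) ^ k • a ^ k) := smul_comm _ _ _
    _ = (n.choose k) • (-a) ^ k := by rw [← smul_pow, neg_one_smul]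
    _ = (-a) ^ k * 1 ^ (n - k) * (n.choose k : A) := by
        rw [one_pow, mul_one, nsmul_eq_mul, (Nat.cast_commute (n.choose k) ((-a) ^ k)).eq]

/-- For a star-normal element `a` of a unital C*-algebra whose spectrum lies in the open disc
`B(1,1)`, the Newton series `∑_{n} (∑_{k=0}^n P_k(n) a^k) P_n(α)` converges in norm to
`cfc (z ↦ z^α) a`. -/
theorem newton_series_cfc_cpow {A : Type*} [CStarAlgebra A] (a : A) (ha : IsStarNormal a)
    (hspec : spectrum ℂ a ⊆ Metric.ball (1 : ℂ) 1) (α : ℂ) :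
    Tendsto (fun N : ℕ => ∑ n ∈ Finset.range N,
        pochNewton n α • ∑ k ∈ Finset.range (n + 1), pochNewton k (n : ℂ) • a ^ k)
      atTop (𝓝 (cfc (fun z : ℂ => z ^ α) a)) := by
  -- continuity of the power function on the spectrum
  have hfc : ContinuousOn (fun z : ℂ => z ^ α) (spectrum ℂ a) := fun z hz =>
    (continuousAt_cpow_const (mem_slitPlane_of_ball (hspec hz))).continuousWithinAt
  -- radius bound
  obtain ⟨r, hr0, hr1, hK⟩ : ∃ r : ℝ, 0 ≤ r ∧ r < 1 ∧ ∀ z ∈ spectrum ℂ a, ‖z - 1‖ ≤ r := by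
    rcases (spectrum ℂ a).eq_empty_or_nonempty with hemp | hne
    · exact ⟨0, le_rfl, one_pos, by simp [hemp]⟩
    · obtain ⟨z0, hz0, hmax⟩ := (spectrum.isCompact a).exists_isMaxOn hne
        ((continuous_id.sub continuous_const).norm.continuousOn)
      refine ⟨‖z0 - 1‖, norm_nonneg _, ?_, fun z hz => hmax hz⟩
      simpa [dist_eq_norm] using hspec hz0
  -- uniform convergence of the partial sums on the spectrum
  have hUnif : TendstoUniformlyOn
      (fun N z => ∑ n ∈ Finset.range N, newtonCoeff α n * (z - 1) ^ n)
      (fun z : ℂ => z ^ α) atTop (spectrum ℂ a) := by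
    have h1 := tendstoUniformlyOn_tsum_nat (summable_newton α hr0 hr1)
      (f := fun n z => newtonCoeff α n * (z - 1) ^ n) (s := spectrum ℂ a) ?_
    · refine h1.congr_right fun z hz => ?_
      exact (hasSum_cpow α (hspec hz)).tsum_eq
    · intro n z hz
      rw [norm_mul, norm_pow]
      exact mul_le_mul_of_nonneg_left (pow_le_pow_left₀ (norm_nonneg _) (hK z hz) n)
        (norm_nonneg _)
  -- the partial sums in the algebra equal `cfc` of the partial sums of functions
  have hpartial : ∀ N : ℕ, (∑ n ∈ Finset.range N,
      pochNewton n α • ∑ k ∈ Finset.range (n + 1), pochNewton k (n : ℂ) • a ^ k)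
      = cfc (fun z : ℂ => ∑ n ∈ Finset.range N, newtonCoeff α n * (z - 1) ^ n) a := by
    intro N
    have hsub : cfc (fun z : ℂ => z - 1) a = a - 1 := by
      have := cfc_sub (R := ℂ) (fun z : ℂ => z) (fun _ : ℂ => 1) a
      rw [cfc_id' ℂ a, cfc_const (1 : ℂ) a, map_one] at this
      exact this
    have hterm : ∀ n : ℕ, cfc (fun z : ℂ => newtonCoeff α n * (z - 1) ^ n) a
        = newtonCoeff α n • (a - 1) ^ n := by
      intro n
      rw [cfc_const_mul _ _ a, cfc_pow (fun z : ℂ => z - 1) n a, hsub]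
    have hsum : cfc (fun z : ℂ => ∑ n ∈ Finset.range N, newtonCoeff α n * (z - 1) ^ n) a
        = ∑ n ∈ Finset.range N, cfc (fun z : ℂ => newtonCoeff α n * (z - 1) ^ n) a := by
      have := cfc_sum (fun n (z : ℂ) => newtonCoeff α n * (z - 1) ^ n) a (Finset.range N)
        (fun i _ => by fun_prop)
      rw [← this]
      congr 1
      ext z
      simp
    rw [hsum]
    refine Finset.sum_congr rfl fun n _ => ?_
    rw [hterm n, inner_sum_eq a n, pochNewton_eq]
    calc ((-1 : ℂ) ^ n * newtonCoeff α n) • (1 - a) ^ n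
        = ((-1 : ℂ) ^ n * newtonCoeff α n) • ((-1 : ℂ) ^ n • (a - 1) ^ n) := by
          rw [← smul_pow, neg_one_smul, neg_sub]
      _ = newtonCoeff α n • (a - 1) ^ n := by
          rw [smul_smul, mul_comm ((-1 : ℂ) ^ n), mul_assoc, ← mul_pow]
          norm_num
  simp only [hpartial]
  -- convergence via the sup-norm estimate for `cfc`
  rw [Metric.tendsto_atTop]
  intro ε hε
  obtain ⟨N0, hN0⟩ := eventually_atTop.mp
    (Metric.tendstoUniformlyOn_iff.mp hUnif (ε / 2) (by positivity))
  refine ⟨N0, fun N hN => ?_⟩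
  have hcont : Continuous fun z : ℂ => ∑ n ∈ Finset.range N, newtonCoeff α n * (z - 1) ^ n := by
    fun_prop
  have hdiff : cfc (fun z : ℂ => ∑ n ∈ Finset.range N, newtonCoeff α n * (z - 1) ^ n) a
      - cfc (fun z : ℂ => z ^ α) a
      = cfc (fun z : ℂ => (∑ n ∈ Finset.range N, newtonCoeff α n * (z - 1) ^ n) - z ^ α) a :=
    (cfc_sub _ _ a hcont.continuousOn hfc).symm
  rw [dist_eq_norm, hdiff]
  have hle : ‖cfc (fun z : ℂ =>
      (∑ n ∈ Finset.range N, newtonCoeff α n * (z - 1) ^ n) - z ^ α) a‖ ≤ ε / 2 := by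
    refine norm_cfc_le (by positivity) fun z hz => ?_
    have := hN0 N hN z hz
    rw [dist_comm, dist_eq_norm] at this
    exact this.le
  linarith
end

section
/- Let A be a unital C*-algebra, let a ∈ A be star-normal with spectrum σ(a) contained in the closed disc {z ∈ ℂ : |z − 1| ≤ 1}, and let α ∈ ℂ with Re α > 0. Let f : ℂ → ℂ be defined by f(z) = z^α (principal power) for z ≠ 0 and f(0) = 0; f is continuous on the closed disc since Re α > 0. Then the series ∑_{n=0}^∞ (∑_{k=0}^n P_k(n)·a^k)·P_n(α) (whose inner sum equals (1−a)^n, so the series is ∑_{n=0}^∞ binom(α,n)·(a−1)^n) converges in norm, and its sum equals cfc(f, a). -/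
/-!
Since `1` and `a` commute, the inner sum is `(1 - a)^n`, and
`P_n(α) (1 - z)^n = binom(α, n) (z - 1)^n`, so the partial sums are `cfc` of the partial sums of
the binomial series of `z^α` around `1`. For `α ∉ ℕ`, comparing with Euler's limit
`Γ(s) = lim n^s n! / (s (s+1) ⋯ (s+n))` at `s = -α` gives `|P_n(α)| = O(n^(-Re α - 1))`; for
`α ∈ ℕ` the series terminates. So for `Re α > 0` the series converges absolutely, hence uniformly
on the closed disc `|z - 1| ≤ 1`. Its sum is `z^α` on the open disc and, by continuity of both
sides, on the closed disc, which contains the spectrum of `a`. Uniform convergence on the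
spectrum passes through the continuous functional calculus.
-/

open Filter Finset Topology

theorem pochNewton_eq_neg_one_pow_mul_choose (n : ℕ) (α : ℂ) :
    pochNewton n α = (-1) ^ n * Ring.choose α n := by
  rw [Ring.choose_eq_smul, ← Polynomial.aeval_eq_smeval, Polynomial.aeval_def,
    ← Polynomial.eval_map, descPochhammer_map, descPochhammer_eval_eq_prod_range, pochNewton,
    smul_eq_mul]
  ring

theorem pochNewton_eq_prod_div_factorial (n : ℕ) (α : ℂ) :
    pochNewton n α = (∏ j ∈ range n, (-α + j)) / n.factorial := by
  have h (j : ℕ) : -α + j = -(α - j) := by ring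
  simp only [pochNewton, h, prod_neg, card_range]
  ring

theorem pochNewton_natCast_eq_zero {m n : ℕ} (h : m < n) : pochNewton n m = 0 :=
  mul_eq_zero_of_right _ (prod_eq_zero (mem_range.2 h) (sub_self _))

theorem pochNewton_mul_one_sub_pow (n : ℕ) (α z : ℂ) :
    pochNewton n α * (1 - z) ^ n = Ring.choose α n * (z - 1) ^ n := by
  rw [pochNewton_eq_neg_one_pow_mul_choose, mul_comm ((-1 : ℂ) ^ n), mul_assoc, ← mul_pow]
  ring

theorem sum_pochNewton_natCast_smul_pow {R : Type*} [Ring R] [Algebra ℂ R] (x : R) (n : ℕ) :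
    ∑ k ∈ range (n + 1), pochNewton k n • x ^ k = (1 - x) ^ n := by
  rw [sub_eq_neg_add, (Commute.one_right (-x)).add_pow]
  refine sum_congr rfl fun k _ ↦ ?_
  rw [pochNewton_eq_neg_one_pow_mul_choose, Ring.choose_natCast, one_pow, mul_one]
  simp [Algebra.smul_def, Nat.cast_comm, mul_assoc, neg_pow x]

theorem hasSum_pochNewton_mul_one_sub_pow (α : ℂ) {z : ℂ} (hz : z ∈ Metric.ball (1 : ℂ) 1) :
    HasSum (fun n ↦ pochNewton n α * (1 - z) ^ n) (z ^ α) := by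
  have h := Complex.one_add_cpow_hasFPowerSeriesOnBall_zero (a := α) |>.hasSum (y := z - 1)
    (by rw [← ENNReal.ofReal_one, Metric.eball_ofReal]; simpa [dist_eq_norm] using hz)
  simpa [pochNewton_mul_one_sub_pow, binomialSeries, mul_comm] using h

theorem GammaSeq_neg_mul_sub_mul_pochNewton {α : ℂ} (hα : ∀ m : ℕ, α ≠ m) (n : ℕ) :
    Complex.GammaSeq (-α) n * ((n : ℂ) - α) * pochNewton n α = (n : ℂ) ^ (-α) := by
  have hne (j : ℕ) : -α + j ≠ 0 := by rw [neg_add_eq_sub, sub_ne_zero]; exact (hα j).symm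
  have hprod : ∏ j ∈ range n, (-α + j) ≠ 0 := prod_ne_zero_iff.2 fun j _ ↦ hne j
  have hfact : (n.factorial : ℂ) ≠ 0 := Nat.cast_ne_zero.2 n.factorial_ne_zero
  rw [Complex.GammaSeq, pochNewton_eq_prod_div_factorial, prod_range_succ]
  field_simp [hne n]
  ring

theorem summable_norm_pochNewton {α : ℂ} (hα : 0 < α.re) :
    Summable fun n ↦ ‖pochNewton n α‖ := by
  by_cases hnat : ∃ m : ℕ, α = m
  · obtain ⟨m, rfl⟩ := hnat
    refine summable_of_ne_finset_zero (s := range (m + 1)) fun n hn ↦ ?_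
    rw [pochNewton_natCast_eq_zero (by simpa using hn), norm_zero]
  push Not at hnat
  have hΓ : Complex.Gamma (-α) ≠ 0 := Complex.Gamma_ne_zero fun m h ↦ hnat m (neg_inj.1 h)
  set c := ‖Complex.Gamma (-α)‖ / 2
  have hc : 0 < c := by positivity
  have hGammaSeq : ∀ᶠ n in atTop, c ≤ ‖Complex.GammaSeq (-α) n‖ :=
    (Complex.GammaSeq_tendsto_Gamma _).norm.eventually
      (eventually_ge_nhds (half_lt_self (norm_pos_iff.2 hΓ)))
  have hsub : ∀ᶠ n : ℕ in atTop, (n : ℝ) / 2 ≤ ‖(n : ℂ) - α‖ := by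
    filter_upwards [eventually_ge_atTop ⌈2 * ‖α‖⌉₊] with n hn
    calc (n : ℝ) / 2 ≤ ‖(n : ℂ)‖ - ‖α‖ := by
          have := Nat.ceil_le.1 hn
          rw [Complex.norm_natCast]
          linarith
      _ ≤ ‖(n : ℂ) - α‖ := norm_sub_norm_le _ _
  refine .of_norm_bounded_eventually_nat
    ((Real.summable_nat_rpow.2 (by linarith : -(α.re + 1) < -1)).mul_left (2 / c)) ?_
  filter_upwards [hGammaSeq, hsub, eventually_gt_atTop 0] with n hGn hsn hn
  have hn' : (0 : ℝ) < n := Nat.cast_pos.2 hn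
  have key := congrArg norm (GammaSeq_neg_mul_sub_mul_pochNewton hnat n)
  rw [norm_mul, norm_mul, Complex.norm_natCast_cpow_of_pos hn, Complex.neg_re] at key
  have hlow : c * (n / 2) ≤ ‖Complex.GammaSeq (-α) n‖ * ‖(n : ℂ) - α‖ :=
    mul_le_mul hGn hsn (by positivity) (norm_nonneg _)
  rw [norm_norm, neg_add', Real.rpow_sub_one hn'.ne']
  calc ‖pochNewton n α‖ = (n : ℝ) ^ (-α.re) / (‖Complex.GammaSeq (-α) n‖ * ‖(n : ℂ) - α‖) :=
        eq_div_of_mul_eq (lt_of_lt_of_le (by positivity) hlow).ne' (by rw [mul_comm, key])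
    _ ≤ (n : ℝ) ^ (-α.re) / (c * (n / 2)) := by gcongr
    _ = 2 / c * ((n : ℝ) ^ (-α.re) / n) := by field_simp

theorem re_nonneg_of_mem_closedBall_one {z : ℂ} (hz : z ∈ Metric.closedBall (1 : ℂ) 1) :
    0 ≤ z.re := by
  have := (abs_le.1 ((Complex.abs_re_le_norm (z - 1)).trans (mem_closedBall_iff_norm.1 hz))).1
  rw [Complex.sub_re, Complex.one_re] at this
  linarith

theorem continuousOn_cpow_const_closedBall_one {α : ℂ} (hα : 0 < α.re) :
    ContinuousOn (· ^ α) (Metric.closedBall (1 : ℂ) 1) := fun _ hz ↦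
  (Complex.continuousAt_cpow_const_of_re_pos (.inl (re_nonneg_of_mem_closedBall_one hz))
    hα).continuousWithinAt

theorem tendstoUniformlyOn_sum_pochNewton_mul_one_sub_pow {α : ℂ} (hα : 0 < α.re) :
    TendstoUniformlyOn (fun N z ↦ ∑ n ∈ range N, pochNewton n α * (1 - z) ^ n) (· ^ α) atTop
      (Metric.closedBall 1 1) := by
  have hU := tendstoUniformlyOn_tsum_nat (summable_norm_pochNewton hα)
    (f := fun n z ↦ pochNewton n α * (1 - z) ^ n) (s := Metric.closedBall 1 1) fun n z hz ↦ by
      rw [norm_mul, norm_pow]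
      refine mul_le_of_le_one_right (norm_nonneg _) (pow_le_one₀ (norm_nonneg _) ?_)
      rwa [norm_sub_rev, ← mem_closedBall_iff_norm]
  have hcont := hU.continuousOn (.of_forall fun N ↦ by fun_prop)
  refine hU.congr_right (Set.EqOn.of_subset_closure (fun z hz ↦
    (hasSum_pochNewton_mul_one_sub_pow α hz).tsum_eq) hcont
    (continuousOn_cpow_const_closedBall_one hα) Metric.ball_subset_closedBall ?_)
  rw [closure_ball _ one_ne_zero]

theorem cfc_sum_mul_one_sub_pow {A : Type*} {p : A → Prop} [Ring A] [StarRing A]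
    [TopologicalSpace A] [Algebra ℂ A] [ContinuousFunctionalCalculus ℂ A p] (c : ℕ → ℂ) (N : ℕ)
    (a : A) (ha : p a) :
    cfc (fun z ↦ ∑ n ∈ range N, c n * (1 - z) ^ n) a = ∑ n ∈ range N, c n • (1 - a) ^ n := by
  have := cfc_polynomial (∑ n ∈ range N, Polynomial.C (c n) * (1 - Polynomial.X) ^ n) a ha
  simpa [Polynomial.eval_finsetSum, Algebra.smul_def] using this

/-- For a star-normal element `a` of a unital C*-algebra whose spectrum lies in the closed disc
`\overline{B(1,1)}`, and `Re α > 0`, the Newton series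
`∑_{n} (∑_{k=0}^n P_k(n) a^k) P_n(α)` converges in norm to `cfc f a`, where `f` is the
principal power `z ↦ z^α` extended by `f 0 = 0`. -/
theorem newton_series_cfc_cpow_closed {A : Type*} [CStarAlgebra A] (a : A)
    (ha : IsStarNormal a) (hspec : spectrum ℂ a ⊆ Metric.closedBall (1 : ℂ) 1)
    (α : ℂ) (hα : 0 < α.re) :
    Tendsto (fun N : ℕ => ∑ n ∈ Finset.range N,
        pochNewton n α • ∑ k ∈ Finset.range (n + 1), pochNewton k (n : ℂ) • a ^ k)
      atTop (𝓝 (cfc (fun z : ℂ => if z = 0 then 0 else z ^ α) a)) := by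
  have hα0 : α ≠ 0 := by rintro rfl; simp at hα
  have hf : (fun z : ℂ ↦ if z = 0 then 0 else z ^ α) = (· ^ α) := by
    ext z
    split_ifs with hz
    · rw [hz, Complex.zero_cpow hα0]
    · rfl
  simp_rw [sum_pochNewton_natCast_smul_pow, hf, ← cfc_sum_mul_one_sub_pow _ _ a ha]
  exact tendsto_cfc_fun ((tendstoUniformlyOn_sum_pochNewton_mul_one_sub_pow hα).mono hspec)
    (.of_forall fun N ↦ by fun_prop)
end

section
/- Let A be a unital C*-algebra, let u ∈ A be unitary with −1 ∉ σ(u), and let α ∈ ℂ. Then the symmetric partial sums ∑_{n=−M}^{M} sinc(α−n)·u^n converge in norm as M → ∞, and the limit equals cfc(z ↦ z^α, u), the continuous functional calculus of u applied to the principal power function z ↦ z^α (which is continuous on σ(u) ⊆ {z : |z| = 1}∖{−1}). -/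
open Filter Finset Topology

open intervalIntegral Real MeasureTheory

lemma int_reindex (M : ℕ) (G : ℤ → ℂ) :
    ∑ n ∈ Finset.Icc (-(M:ℤ)) M, G n = ∑ k ∈ Finset.range (2*M+1), G ((k:ℤ) - M) := by
  rw [show Finset.Icc (-(M:ℤ)) M
      = (Finset.range (2*M+1)).map ⟨fun k : ℕ => (k:ℤ) - M, fun a b h => Nat.cast_injective (sub_left_inj.mp h)⟩ from ?_,
    Finset.sum_map]
  · rfl
  · ext n
    simp only [Finset.mem_Icc, Finset.mem_map, Finset.mem_range, Function.Embedding.coeFn_mk]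
    constructor
    · intro h; exact ⟨(n + M).toNat, by omega, by show (((n + M).toNat : ℕ) : ℤ) - M = n; omega⟩
    · rintro ⟨k, hk, rfl⟩; show -(M:ℤ) ≤ (k:ℤ) - M ∧ (k:ℤ) - M ≤ M; omega

lemma norm_exp_sub_one_le (z : ℂ) : ‖Complex.exp z - 1‖ ≤ ‖z‖ * Real.exp ‖z‖ := by
  rcases eq_or_ne z 0 with rfl | hz
  · simp
  · have h1 : Complex.exp z - 1 = z * ∫ s in (0:ℝ)..1, Complex.exp (z * s) := by
      rw [integral_exp_mul_complex hz]
      field_simp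
      simp
    rw [h1, norm_mul]
    have h2 : ‖∫ s in (0:ℝ)..1, Complex.exp (z * s)‖ ≤ Real.exp ‖z‖ * |1 - 0| := by
      apply intervalIntegral.norm_integral_le_of_norm_le_const
      intro s hs
      rw [Set.uIoc_of_le (by norm_num)] at hs
      rw [Complex.norm_exp]
      apply Real.exp_le_exp.2
      calc (z * s).re ≤ ‖z * s‖ := Complex.re_le_norm _
        _ = ‖z‖ * |s| := by rw [norm_mul, Complex.norm_real, Real.norm_eq_abs]
        _ ≤ ‖z‖ * 1 := by
            apply mul_le_mul_of_nonneg_left _ (norm_nonneg z)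
            rw [abs_of_pos hs.1]; exact hs.2
        _ = ‖z‖ := mul_one _
    calc ‖z‖ * ‖∫ s in (0:ℝ)..1, Complex.exp (z * s)‖ ≤ ‖z‖ * (Real.exp ‖z‖ * |1-0|) :=
          mul_le_mul_of_nonneg_left h2 (norm_nonneg z)
      _ = ‖z‖ * Real.exp ‖z‖ := by norm_num

lemma csinc_eq_integral (β : ℂ) :
    csinc β = (2 * (Real.pi:ℂ))⁻¹ * ∫ x in (-Real.pi)..Real.pi, Complex.exp (β * x * Complex.I) := by
  have hπ : (Real.pi:ℂ) ≠ 0 := by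
    simpa using Real.pi_ne_zero
  rcases eq_or_ne β 0 with rfl | hβ
  · simp only [csinc, if_pos rfl, zero_mul, Complex.exp_zero, intervalIntegral.integral_const,
      sub_neg_eq_add, Complex.real_smul, mul_one, Complex.ofReal_add]
    field_simp
    ring_nf
    simp
  · have hc : β * Complex.I ≠ 0 := mul_ne_zero hβ Complex.I_ne_zero
    simp_rw [show ∀ x:ℝ, β * x * Complex.I = (β * Complex.I) * x from fun x => by ring]
    rw [integral_exp_mul_complex hc]
    simp only [csinc, if_neg hβ, Complex.sin]
    field_simp
    ring_nf
    rw [Complex.I_sq]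
    push_cast
    ring_nf


lemma hsin_exp (w : ℂ) :
    Complex.exp (w * Complex.I) - Complex.exp (-w * Complex.I) = 2 * Complex.I * Complex.sin w := by
  rw [Complex.sin]
  field_simp
  ring_nf
  rw [Complex.I_sq]
  ring

lemma dirichlet_id (M : ℕ) (y : ℂ) :
    (∑ n ∈ Finset.Icc (-(M:ℤ)) M, Complex.exp (n * y * Complex.I)) * Complex.sin (y / 2)
      = Complex.sin (((M:ℂ) + 1/2) * y) := by
  have h2I : (2 * Complex.I : ℂ) ≠ 0 := by simp [Complex.I_ne_zero]
  have key : (∑ n ∈ Finset.Icc (-(M:ℤ)) M, Complex.exp (n * y * Complex.I)) *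
      (Complex.exp ((y/2) * Complex.I) - Complex.exp (-(y/2) * Complex.I))
      = Complex.exp ((((M:ℂ)+1/2)*y) * Complex.I) - Complex.exp (-(((M:ℂ)+1/2)*y) * Complex.I) := by
    rw [Finset.sum_mul, int_reindex M (fun n => Complex.exp (n * y * Complex.I) *
      (Complex.exp ((y/2) * Complex.I) - Complex.exp (-(y/2) * Complex.I)))]
    have hstep : ∀ k ∈ Finset.range (2*M+1),
        Complex.exp (((k:ℤ) - (M:ℤ) : ℤ) * y * Complex.I) *
          (Complex.exp ((y/2) * Complex.I) - Complex.exp (-(y/2) * Complex.I))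
        = (fun j : ℕ => Complex.exp (((j:ℂ) - M - 1/2) * y * Complex.I)) (k+1)
          - (fun j : ℕ => Complex.exp (((j:ℂ) - M - 1/2) * y * Complex.I)) k := by
      intro k _
      simp only [mul_sub, ← Complex.exp_add]
      push_cast
      congr 2 <;> ring
    rw [Finset.sum_congr rfl hstep,
      Finset.sum_range_sub (fun j : ℕ => Complex.exp (((j:ℂ) - M - 1/2) * y * Complex.I)) (2*M+1)]
    congr 2 <;> push_cast <;> ring
  rw [hsin_exp (y/2), hsin_exp (((M:ℂ)+1/2)*y)] at key
  apply mul_left_cancel₀ h2I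
  linear_combination key


lemma intD (n : ℤ) (t : ℝ) :
    (∫ x in (-Real.pi)..Real.pi, Complex.exp (n * ((t:ℂ) - x) * Complex.I))
      = if n = 0 then 2*(Real.pi:ℂ) else 0 := by
  rcases eq_or_ne n 0 with rfl | hn
  · simp only [Int.cast_zero, zero_mul, Complex.exp_zero, intervalIntegral.integral_const,
      sub_neg_eq_add, Complex.real_smul, mul_one, if_pos rfl]
    push_cast; ring
  · have hn' : (n:ℂ) ≠ 0 := Int.cast_ne_zero.2 hn
    have hc : (-(n:ℂ)) * Complex.I ≠ 0 := by
      simp [hn', Complex.I_ne_zero]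
    simp_rw [show ∀ x:ℝ, (n:ℂ) * ((t:ℂ) - x) * Complex.I
        = (n:ℂ)*(t:ℂ)*Complex.I + ((-(n:ℂ)) * Complex.I) * x from fun x => by ring,
      Complex.exp_add, intervalIntegral.integral_const_mul, integral_exp_mul_complex hc]
    have e1 : (-(n:ℂ)) * Complex.I * ((Real.pi:ℝ):ℂ) = ((-n : ℤ):ℂ) * ((Real.pi:ℂ) * Complex.I) := by
      push_cast; ring
    have e2 : (-(n:ℂ)) * Complex.I * ((-Real.pi:ℝ):ℂ) = ((n : ℤ):ℂ) * ((Real.pi:ℂ) * Complex.I) := by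
      push_cast; ring
    rw [e1, e2, Complex.exp_int_mul, Complex.exp_int_mul, Complex.exp_pi_mul_I, if_neg hn]
    rw [zpow_neg, ← inv_zpow]
    norm_num


lemma rep (α : ℂ) (M : ℕ) (t : ℝ) :
    (∑ n ∈ Finset.Icc (-(M:ℤ)) M, csinc (α - n) * Complex.exp (n * t * Complex.I))
      - Complex.exp (α * t * Complex.I)
    = (2 * (Real.pi:ℂ))⁻¹ * ∫ x in (-Real.pi)..Real.pi,
        (Complex.exp (α * x * Complex.I) - Complex.exp (α * t * Complex.I)) *
          (∑ n ∈ Finset.Icc (-(M:ℤ)) M, Complex.exp (n * ((t:ℂ) - x) * Complex.I)) := by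
  have hInt1 : ∀ n : ℤ, IntervalIntegrable
      (fun x:ℝ => Complex.exp (α * x * Complex.I) * Complex.exp ((n:ℂ) * ((t:ℂ) - x) * Complex.I))
      MeasureTheory.volume (-Real.pi) Real.pi := by
    intro n; apply Continuous.intervalIntegrable; fun_prop
  have hInt2 : ∀ n : ℤ, IntervalIntegrable
      (fun x:ℝ => Complex.exp ((n:ℂ) * ((t:ℂ) - x) * Complex.I))
      MeasureTheory.volume (-Real.pi) Real.pi := by
    intro n; apply Continuous.intervalIntegrable; fun_prop
  have step1 : (∑ n ∈ Finset.Icc (-(M:ℤ)) M, csinc (α - n) * Complex.exp (n * t * Complex.I))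
      = (2 * (Real.pi:ℂ))⁻¹ * ∫ x in (-Real.pi)..Real.pi,
          Complex.exp (α * x * Complex.I) *
            (∑ n ∈ Finset.Icc (-(M:ℤ)) M, Complex.exp (n * ((t:ℂ) - x) * Complex.I)) := by
    have hterm : ∀ n ∈ Finset.Icc (-(M:ℤ)) M, csinc (α - n) * Complex.exp (n * t * Complex.I)
        = (2 * (Real.pi:ℂ))⁻¹ * ∫ x in (-Real.pi)..Real.pi,
            Complex.exp (α * x * Complex.I) * Complex.exp ((n:ℂ) * ((t:ℂ) - x) * Complex.I) := by
      intro n _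
      rw [csinc_eq_integral (α - n), mul_assoc, ← intervalIntegral.integral_mul_const]
      congr 1
      apply intervalIntegral.integral_congr
      intro x _
      simp only [← Complex.exp_add]
      congr 1
      ring
    rw [Finset.sum_congr rfl hterm, ← Finset.mul_sum,
      ← intervalIntegral.integral_finset_sum (fun n _ => hInt1 n)]
    congr 1
    apply intervalIntegral.integral_congr
    intro x _
    simp only [Finset.mul_sum]
  have hDint : (∫ x in (-Real.pi)..Real.pi,
      (∑ n ∈ Finset.Icc (-(M:ℤ)) M, Complex.exp ((n:ℂ) * ((t:ℂ) - x) * Complex.I)))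
      = 2*(Real.pi:ℂ) := by
    rw [intervalIntegral.integral_finset_sum (fun n _ => hInt2 n),
      Finset.sum_congr rfl (fun n _ => intD n t), Finset.sum_ite_eq']
    simp
  have step2 : Complex.exp (α * t * Complex.I)
      = (2 * (Real.pi:ℂ))⁻¹ * ∫ x in (-Real.pi)..Real.pi,
          Complex.exp (α * t * Complex.I) *
            (∑ n ∈ Finset.Icc (-(M:ℤ)) M, Complex.exp (n * ((t:ℂ) - x) * Complex.I)) := by
    rw [intervalIntegral.integral_const_mul, hDint]
    have : (Real.pi:ℂ) ≠ 0 := by simpa using Real.pi_ne_zero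
    field_simp
  have hsplit : (∫ x in (-Real.pi)..Real.pi,
        (Complex.exp (α * x * Complex.I) - Complex.exp (α * t * Complex.I)) *
          (∑ n ∈ Finset.Icc (-(M:ℤ)) M, Complex.exp (n * ((t:ℂ) - x) * Complex.I)))
      = (∫ x in (-Real.pi)..Real.pi, Complex.exp (α * x * Complex.I) *
          (∑ n ∈ Finset.Icc (-(M:ℤ)) M, Complex.exp (n * ((t:ℂ) - x) * Complex.I)))
        - (∫ x in (-Real.pi)..Real.pi, Complex.exp (α * t * Complex.I) *
          (∑ n ∈ Finset.Icc (-(M:ℤ)) M, Complex.exp (n * ((t:ℂ) - x) * Complex.I))) := by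
    rw [← intervalIntegral.integral_sub
      (by apply Continuous.intervalIntegrable; fun_prop)
      (by apply Continuous.intervalIntegrable; fun_prop)]
    apply intervalIntegral.integral_congr
    intro x _
    ring
  rw [step1, hsplit, mul_sub, ← step2]


lemma sin_lower_bound {b y : ℝ} (hb0 : 0 < b) (hbπ : b ≤ π) (hy0 : 0 ≤ y) (hyb : y ≤ b) :
    Real.sin b / b * y ≤ Real.sin y := by
  have hc := strictConcaveOn_sin_Icc.concaveOn
  have hyb' : y / b ≤ 1 := (div_le_one hb0).2 hyb
  have h := hc.2 ⟨le_rfl, Real.pi_pos.le⟩ ⟨hb0.le, hbπ⟩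
    (show (0:ℝ) ≤ 1 - y/b by linarith) (show (0:ℝ) ≤ y/b by positivity) (by ring)
  simp only [smul_eq_mul, Real.sin_zero, mul_zero, zero_add] at h
  rw [show y / b * b = y from div_mul_cancel₀ y hb0.ne'] at h
  have : y / b * Real.sin b = Real.sin b / b * y := by ring
  linarith

lemma abs_sin_ge {b : ℝ} (hb0 : 0 < b) (hbπ : b ≤ π) {y : ℝ} (hy : |y| ≤ b) :
    Real.sin b / b * |y| ≤ |Real.sin y| := by
  have h := sin_lower_bound hb0 hbπ (abs_nonneg y) hy
  refine h.trans ?_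
  rcases le_or_gt 0 y with h0 | h0
  · rw [abs_of_nonneg h0]; exact le_abs_self _
  · rw [abs_of_neg h0, Real.sin_neg]
    exact neg_le_abs _

lemma norm_exp_mul_I_le (α : ℂ) {x : ℝ} (hx : |x| ≤ π) :
    ‖Complex.exp (α * x * Complex.I)‖ ≤ Real.exp (π * ‖α‖) := by
  rw [Complex.norm_exp]
  apply Real.exp_le_exp.2
  calc (α * x * Complex.I).re ≤ ‖α * x * Complex.I‖ := Complex.re_le_norm _
    _ = ‖α‖ * |x| := by
        simp [norm_mul, Complex.norm_real, Real.norm_eq_abs]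
    _ ≤ ‖α‖ * π := mul_le_mul_of_nonneg_left hx (norm_nonneg _)
    _ = π * ‖α‖ := mul_comm _ _

lemma norm_exp_sub_exp (α : ℂ) {t x : ℝ} (ht : |t| ≤ π) (hx : |x| ≤ π) :
    ‖Complex.exp (α * x * Complex.I) - Complex.exp (α * t * Complex.I)‖
      ≤ (‖α‖ * Real.exp (3 * π * ‖α‖)) * |x - t| := by
  have hfac : Complex.exp (α * x * Complex.I) - Complex.exp (α * t * Complex.I)
      = Complex.exp (α * t * Complex.I) * (Complex.exp (α * ((x - t : ℝ) : ℂ) * Complex.I) - 1) := by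
    rw [mul_sub, ← Complex.exp_add, mul_one]
    congr 1
    push_cast; ring
  have hn : ‖α * ((x - t : ℝ) : ℂ) * Complex.I‖ = ‖α‖ * |x - t| := by
    rw [norm_mul, norm_mul, Complex.norm_I, mul_one, Complex.norm_real, Real.norm_eq_abs]
  have hxt : |x - t| ≤ 2 * π := by
    calc |x - t| ≤ |x| + |t| := abs_sub _ _
      _ ≤ π + π := add_le_add hx ht
      _ = 2 * π := by ring
  have h2 := norm_exp_sub_one_le (α * ((x - t : ℝ) : ℂ) * Complex.I)
  rw [hn] at h2
  rw [hfac, norm_mul]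
  have hπα : ‖α‖ * |x - t| ≤ ‖α‖ * (2 * π) :=
    mul_le_mul_of_nonneg_left hxt (norm_nonneg _)
  calc ‖Complex.exp (α * t * Complex.I)‖ * ‖Complex.exp (α * ((x - t : ℝ) : ℂ) * Complex.I) - 1‖
      ≤ Real.exp (π * ‖α‖) * (‖α‖ * |x - t| * Real.exp (‖α‖ * |x - t|)) :=
        mul_le_mul (norm_exp_mul_I_le α ht) h2 (norm_nonneg _) (Real.exp_pos _).le
      _ ≤ Real.exp (π * ‖α‖) * (‖α‖ * |x - t| * Real.exp (‖α‖ * (2 * π))) := by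
        apply mul_le_mul_of_nonneg_left _ (Real.exp_pos _).le
        exact mul_le_mul_of_nonneg_left (Real.exp_le_exp.2 hπα) (by positivity)
      _ = (‖α‖ * Real.exp (3 * π * ‖α‖)) * |x - t| := by
        rw [show Real.exp (3 * π * ‖α‖) = Real.exp (π * ‖α‖) * Real.exp (‖α‖ * (2 * π)) from by
          rw [← Real.exp_add]; ring_nf]
        ring


lemma exp_hasDeriv (α : ℂ) (x : ℝ) :
    HasDerivAt (fun x:ℝ => Complex.exp (α * x * Complex.I))
      (α * Complex.I * Complex.exp (α * x * Complex.I)) x := by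
  have hw : HasDerivAt (fun w:ℂ => Complex.exp (α * w * Complex.I))
      (α * Complex.I * Complex.exp (α * (x:ℂ) * Complex.I)) (x:ℂ) := by
    have hinner : HasDerivAt (fun w:ℂ => α * w * Complex.I) (α * Complex.I) (x:ℂ) := by
      simpa using ((hasDerivAt_id (x:ℂ)).const_mul α).mul_const Complex.I
    have := (Complex.hasDerivAt_exp (α * (x:ℂ) * Complex.I)).comp (x:ℂ) hinner
    refine this.congr_deriv ?_
    ring
  exact hw.comp_ofReal

lemma S_hasDeriv (t x : ℝ) :
    HasDerivAt (fun x:ℝ => ((Real.sin ((t - x)/2) : ℝ) : ℂ))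
      (((-Real.cos ((t - x)/2)/2 : ℝ) : ℂ)) x := by
  have hr : HasDerivAt (fun x:ℝ => Real.sin ((t - x)/2)) (-Real.cos ((t - x)/2)/2) x := by
    have hinner : HasDerivAt (fun x:ℝ => (t - x)/2) (-(1:ℝ)/2) x := by
      simpa using ((hasDerivAt_id x).const_sub t).div_const 2
    have := (Real.hasDerivAt_sin ((t - x)/2)).comp x hinner
    refine this.congr_deriv ?_
    ring
  exact hr.ofReal_comp

lemma H_hasDeriv (α : ℂ) (t : ℝ) {x : ℝ} (hS : Real.sin ((t - x)/2) ≠ 0) :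
    HasDerivAt (fun x : ℝ => (Complex.exp (α * x * Complex.I) - Complex.exp (α * t * Complex.I))
        / ((Real.sin ((t - x)/2) : ℝ) : ℂ))
      ((α * Complex.I * Complex.exp (α * x * Complex.I) * ((Real.sin ((t - x)/2):ℝ):ℂ)
        - (Complex.exp (α * x * Complex.I) - Complex.exp (α * t * Complex.I))
            * ((-Real.cos ((t - x)/2)/2 : ℝ):ℂ))
        / (((Real.sin ((t - x)/2):ℝ):ℂ))^2) x := by
  exact ((exp_hasDeriv α x).sub_const _).div (S_hasDeriv t x) (Complex.ofReal_ne_zero.2 hS)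

lemma ibp_bound {F F' : ℝ → ℂ} {p q lam t CF CF' : ℝ} (hpq : p ≤ q) (hlam : 0 < lam)
    (hder : ∀ x ∈ Set.uIcc p q, HasDerivAt F (F' x) x)
    (hFc : ContinuousOn F' (Set.uIcc p q))
    (hCF : ∀ x ∈ Set.uIcc p q, ‖F x‖ ≤ CF)
    (hCF' : ∀ x ∈ Set.uIcc p q, ‖F' x‖ ≤ CF') :
    ‖∫ x in p..q, F x * ((Real.sin (lam * (t - x)) : ℝ) : ℂ)‖
      ≤ (2*CF + (q - p) * CF') / lam := by
  set Φ : ℝ → ℂ := fun x => ((Real.cos (lam * (t - x)) : ℝ) : ℂ) / lam with hΦ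
  have hΦd : ∀ x ∈ Set.uIcc p q, HasDerivAt Φ (((Real.sin (lam*(t-x)):ℝ):ℂ)) x := by
    intro x _
    have hinner : HasDerivAt (fun x:ℝ => lam*(t-x)) (-lam) x := by
      simpa using ((hasDerivAt_id x).const_sub t).const_mul lam
    have hr : HasDerivAt (fun x:ℝ => Real.cos (lam*(t-x))) (lam * Real.sin (lam*(t-x))) x := by
      have := (Real.hasDerivAt_cos (lam*(t-x))).comp x hinner
      refine this.congr_deriv ?_
      ring
    have hr2 : HasDerivAt (fun x:ℝ => Real.cos (lam*(t-x)) / lam) (Real.sin (lam*(t-x))) x := by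
      have := hr.div_const lam
      refine this.congr_deriv ?_
      field_simp
    have h2 := hr2.ofReal_comp
    simpa only [hΦ, Complex.ofReal_div] using h2
  have hint1 : IntervalIntegrable F' volume p q := hFc.intervalIntegrable
  have hint2 : IntervalIntegrable (fun x => ((Real.sin (lam*(t-x)):ℝ):ℂ)) volume p q := by
    apply Continuous.intervalIntegrable; fun_prop
  have ibp := intervalIntegral.integral_mul_deriv_eq_deriv_mul hder hΦd hint1 hint2
  rw [ibp]
  have hΦb : ∀ x : ℝ, ‖Φ x‖ ≤ 1 / lam := by
    intro x
    rw [hΦ]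
    simp only [norm_div, Complex.norm_real, Real.norm_eq_abs]
    rw [abs_of_pos hlam]
    gcongr
    exact Real.abs_cos_le_one _
  have hCF0 : 0 ≤ CF := (norm_nonneg _).trans (hCF p Set.left_mem_uIcc)
  have hCF'0 : 0 ≤ CF' := (norm_nonneg _).trans (hCF' p Set.left_mem_uIcc)
  have hb1 : ‖F q * Φ q‖ ≤ CF * (1/lam) := by
    rw [norm_mul]
    exact mul_le_mul (hCF q Set.right_mem_uIcc) (hΦb q) (norm_nonneg _) hCF0
  have hb2 : ‖F p * Φ p‖ ≤ CF * (1/lam) := by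
    rw [norm_mul]
    exact mul_le_mul (hCF p Set.left_mem_uIcc) (hΦb p) (norm_nonneg _) hCF0
  have hb3 : ‖∫ x in p..q, F' x * Φ x‖ ≤ CF' * (1/lam) * |q - p| := by
    apply intervalIntegral.norm_integral_le_of_norm_le_const
    intro x hx
    have hx' : x ∈ Set.uIcc p q := Set.uIoc_subset_uIcc hx
    rw [norm_mul]
    exact mul_le_mul (hCF' x hx') (hΦb x) (norm_nonneg _) hCF'0
  calc ‖F q * Φ q - F p * Φ p - ∫ x in p..q, F' x * Φ x‖
      ≤ ‖F q * Φ q - F p * Φ p‖ + ‖∫ x in p..q, F' x * Φ x‖ := norm_sub_le _ _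
    _ ≤ (‖F q * Φ q‖ + ‖F p * Φ p‖) + ‖∫ x in p..q, F' x * Φ x‖ := by
        gcongr
        exact norm_sub_le _ _
    _ ≤ (CF * (1/lam) + CF * (1/lam)) + CF' * (1/lam) * |q - p| := by
        gcongr
    _ = (CF * (1/lam) + CF * (1/lam)) + CF' * (1/lam) * (q - p) := by
        rw [abs_of_nonneg (by linarith)]
    _ = (2*CF + (q - p) * CF') / lam := by
        field_simp
        ring

lemma ptwise_id (α : ℂ) (M : ℕ) {a t x : ℝ} (ha0 : 0 ≤ a) (ha : a < π)
    (ht : |t| ≤ a) (hx : |x| ≤ π) :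
    (Complex.exp (α * x * Complex.I) - Complex.exp (α * t * Complex.I)) *
      (∑ n ∈ Finset.Icc (-(M:ℤ)) M, Complex.exp (n * ((t:ℂ) - x) * Complex.I))
    = ((Complex.exp (α * x * Complex.I) - Complex.exp (α * t * Complex.I))
        / ((Real.sin ((t - x)/2) : ℝ) : ℂ)) * ((Real.sin (((M:ℝ) + 1/2) * (t - x)) : ℝ) : ℂ) := by
  rcases eq_or_ne (Real.sin ((t-x)/2)) 0 with hS | hS
  · have habs : |(t - x)/2| < π := by
      have h1 : |t - x| ≤ |t| + |x| := abs_sub t x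
      have := Real.pi_pos
      rw [abs_div, abs_two]
      linarith
    have htx : t = x := by
      obtain ⟨k, hk⟩ := Real.sin_eq_zero_iff.1 hS
      have hk0 : k = 0 := by
        by_contra hk0
        have h1 : (1:ℝ) ≤ |(k:ℝ)| := by
          rw [← Int.cast_abs]
          exact_mod_cast Int.one_le_abs hk0
        have h2 : |(k:ℝ) * π| = |(k:ℝ)| * π := by
          rw [abs_mul, abs_of_pos Real.pi_pos]
        rw [← hk, h2] at habs
        nlinarith [Real.pi_pos]
      rw [hk0] at hk
      simp at hk
      linarith
    rw [htx]
    simp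
  · have hS' : (((Real.sin ((t - x)/2) : ℝ)) : ℂ) ≠ 0 := Complex.ofReal_ne_zero.2 hS
    have hc1 : (((Real.sin ((t - x)/2) : ℝ)) : ℂ) = Complex.sin (((t:ℂ) - x)/2) := by
      rw [Complex.ofReal_sin]
      norm_num
    have hc2 : ((Real.sin (((M:ℝ) + 1/2) * (t - x)) : ℝ) : ℂ)
        = Complex.sin (((M:ℂ) + 1/2) * ((t:ℂ) - x)) := by
      rw [Complex.ofReal_sin]
      congr 1
      push_cast
      ring
    rw [div_mul_eq_mul_div, eq_div_iff hS', mul_assoc, hc1,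
      show (Complex.exp (α * x * Complex.I) - Complex.exp (α * t * Complex.I)) *
        ((∑ n ∈ Finset.Icc (-(M:ℤ)) M, Complex.exp (n * ((t:ℂ) - x) * Complex.I)) *
          Complex.sin (((t:ℂ) - x)/2))
        = (Complex.exp (α * x * Complex.I) - Complex.exp (α * t * Complex.I)) *
            Complex.sin (((M:ℂ) + 1/2) * ((t:ℂ) - x)) from by rw [dirichlet_id M ((t:ℂ) - x)],
      ← hc2]

lemma H_norm_le (α : ℂ) {a t x : ℝ} (ha0 : 0 ≤ a) (ha : a < π) (ht : |t| ≤ a) (hx : |x| ≤ π) :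
    ‖(Complex.exp (α * x * Complex.I) - Complex.exp (α * t * Complex.I))
        / ((Real.sin ((t - x)/2) : ℝ) : ℂ)‖
      ≤ (‖α‖ * Real.exp (3*π*‖α‖)) * (2 / (Real.sin ((π+a)/2) / ((π+a)/2))) := by
  have hpi := Real.pi_pos
  set b := (π+a)/2 with hbdef
  have hb0 : 0 < b := by positivity
  have hbπ : b ≤ π := by rw [hbdef]; linarith
  set m := Real.sin b / b with hmdef
  have hm0 : 0 < m := div_pos (Real.sin_pos_of_pos_of_lt_pi hb0 (by rw [hbdef]; linarith)) hb0
  by_cases hS : Real.sin ((t-x)/2) = 0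
  · rw [hS]
    simp only [Complex.ofReal_zero, div_zero, norm_zero]
    positivity
  · have htπ : |t| ≤ π := ht.trans (by linarith)
    have htx : t ≠ x := fun h => hS (by rw [h]; simp)
    have htx0 : 0 < |t - x| := abs_pos.2 (sub_ne_zero.2 htx)
    have habs2 : |(t-x)/2| ≤ b := by
      have h1 : |t - x| ≤ |t| + |x| := abs_sub t x
      rw [abs_div, abs_two, hbdef]
      linarith
    have hSlow := abs_sin_ge hb0 hbπ habs2
    rw [abs_div, abs_two] at hSlow
    calc ‖(Complex.exp (α * x * Complex.I) - Complex.exp (α * t * Complex.I))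
        / ((Real.sin ((t - x)/2) : ℝ) : ℂ)‖
        = ‖Complex.exp (α * x * Complex.I) - Complex.exp (α * t * Complex.I)‖
            / |Real.sin ((t - x)/2)| := by
          rw [norm_div, Complex.norm_real, Real.norm_eq_abs]
      _ ≤ ((‖α‖ * Real.exp (3*π*‖α‖)) * |x - t|) / (m * (|t - x|/2)) :=
          div_le_div₀ (by positivity) (norm_exp_sub_exp α htπ hx)
            (mul_pos hm0 (by linarith)) hSlow
      _ = (‖α‖ * Real.exp (3*π*‖α‖)) * (2 / m) := by
          rw [abs_sub_comm x t]
          field_simp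

lemma Hd_norm_le (α : ℂ) {a t x η : ℝ} (ha0 : 0 ≤ a) (ha : a < π) (ht : |t| ≤ a) (hx : |x| ≤ π)
    (hη : 0 < η) (hxt : η ≤ |t - x|) :
    ‖(α * Complex.I * Complex.exp (α * x * Complex.I) * ((Real.sin ((t - x)/2):ℝ):ℂ)
        - (Complex.exp (α * x * Complex.I) - Complex.exp (α * t * Complex.I))
            * ((-Real.cos ((t - x)/2)/2 : ℝ):ℂ))
        / (((Real.sin ((t - x)/2):ℝ):ℂ))^2‖
      ≤ ((‖α‖ + 2) * Real.exp (π*‖α‖) * (4 / (Real.sin ((π+a)/2) / ((π+a)/2))^2)) / η^2 := by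
  have hpi := Real.pi_pos
  set b := (π+a)/2 with hbdef
  have hb0 : 0 < b := by positivity
  have hbπ : b ≤ π := by rw [hbdef]; linarith
  set m := Real.sin b / b with hmdef
  have hm0 : 0 < m := div_pos (Real.sin_pos_of_pos_of_lt_pi hb0 (by rw [hbdef]; linarith)) hb0
  have htπ : |t| ≤ π := ht.trans (by linarith)
  have habs2 : |(t-x)/2| ≤ b := by
    have h1 : |t - x| ≤ |t| + |x| := abs_sub t x
    rw [abs_div, abs_two, hbdef]
    linarith
  have hSlow := abs_sin_ge hb0 hbπ habs2
  rw [abs_div, abs_two] at hSlow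
  have hSη : m * (η/2) ≤ |Real.sin ((t - x)/2)| := by
    refine le_trans ?_ hSlow
    have : η / 2 ≤ |t - x|/2 := by linarith
    nlinarith
  have hnum : ‖α * Complex.I * Complex.exp (α * x * Complex.I) * ((Real.sin ((t - x)/2):ℝ):ℂ)
        - (Complex.exp (α * x * Complex.I) - Complex.exp (α * t * Complex.I))
            * ((-Real.cos ((t - x)/2)/2 : ℝ):ℂ)‖
      ≤ (‖α‖ + 2) * Real.exp (π*‖α‖) := by
    have h1 : ‖α * Complex.I * Complex.exp (α * x * Complex.I) * ((Real.sin ((t - x)/2):ℝ):ℂ)‖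
        ≤ ‖α‖ * Real.exp (π*‖α‖) := by
      rw [norm_mul, norm_mul, norm_mul, Complex.norm_I, mul_one, Complex.norm_real,
        Real.norm_eq_abs]
      calc ‖α‖ * ‖Complex.exp (α * x * Complex.I)‖ * |Real.sin ((t - x)/2)|
          ≤ ‖α‖ * Real.exp (π*‖α‖) * 1 := by
            apply mul_le_mul _ (Real.abs_sin_le_one _) (abs_nonneg _) (by positivity)
            exact mul_le_mul_of_nonneg_left (norm_exp_mul_I_le α hx) (norm_nonneg _)
        _ = ‖α‖ * Real.exp (π*‖α‖) := mul_one _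
    have h2 : ‖(Complex.exp (α * x * Complex.I) - Complex.exp (α * t * Complex.I))
            * ((-Real.cos ((t - x)/2)/2 : ℝ):ℂ)‖ ≤ 2 * Real.exp (π*‖α‖) * (1/2) := by
      rw [norm_mul, Complex.norm_real, Real.norm_eq_abs]
      apply mul_le_mul
      · calc ‖Complex.exp (α * x * Complex.I) - Complex.exp (α * t * Complex.I)‖
            ≤ ‖Complex.exp (α * x * Complex.I)‖ + ‖Complex.exp (α * t * Complex.I)‖ :=
              norm_sub_le _ _
          _ ≤ Real.exp (π*‖α‖) + Real.exp (π*‖α‖) :=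
              add_le_add (norm_exp_mul_I_le α hx) (norm_exp_mul_I_le α htπ)
          _ = 2 * Real.exp (π*‖α‖) := by ring
      · rw [abs_div, abs_two, abs_neg]
        have := Real.abs_cos_le_one ((t - x)/2)
        linarith
      · exact abs_nonneg _
      · positivity
    calc ‖_ - _‖ ≤ _ + _ := norm_sub_le _ _
      _ ≤ ‖α‖ * Real.exp (π*‖α‖) + 2 * Real.exp (π*‖α‖) * (1/2) := add_le_add h1 h2
      _ = (‖α‖ + 1) * Real.exp (π*‖α‖) := by ring
      _ ≤ (‖α‖ + 2) * Real.exp (π*‖α‖) := by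
          have := Real.exp_pos (π*‖α‖)
          nlinarith [norm_nonneg α]
  have hden : (m * (η/2))^2 ≤ ‖(((Real.sin ((t - x)/2):ℝ):ℂ))^2‖ := by
    rw [norm_pow, Complex.norm_real, Real.norm_eq_abs]
    have h0 : 0 ≤ m * (η/2) := by positivity
    nlinarith
  rw [norm_div]
  calc ‖_‖ / ‖(((Real.sin ((t - x)/2):ℝ):ℂ))^2‖
      ≤ ((‖α‖ + 2) * Real.exp (π*‖α‖)) / ((m * (η/2))^2) := by
        apply div_le_div₀ (by positivity) hnum (by positivity) hden
    _ = ((‖α‖ + 2) * Real.exp (π*‖α‖) * (4 / m^2)) / η^2 := by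
        field_simp
        ring

set_option maxHeartbeats 1000000 in
lemma outer_bound (α : ℂ) {a t p q lam η : ℝ} (ha0 : 0 ≤ a) (ha : a < π) (ht : |t| ≤ a)
    (hp : -π ≤ p) (hq : q ≤ π) (hpq : p ≤ q) (hη : 0 < η) (hlam : 0 < lam)
    (hfar : ∀ x ∈ Set.Icc p q, η ≤ |t - x|) :
    ‖∫ x in p..q, ((Complex.exp (α * x * Complex.I) - Complex.exp (α * t * Complex.I))
        / ((Real.sin ((t - x)/2) : ℝ) : ℂ)) * ((Real.sin (lam * (t - x)) : ℝ) : ℂ)‖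
      ≤ (2 * ((‖α‖ * Real.exp (3*π*‖α‖)) * (2 / (Real.sin ((π+a)/2) / ((π+a)/2))))
          + 2*π * (((‖α‖ + 2) * Real.exp (π*‖α‖) * (4 / (Real.sin ((π+a)/2) / ((π+a)/2))^2)) / η^2))
        / lam := by
  have hpi := Real.pi_pos
  have huIcc : Set.uIcc p q = Set.Icc p q := Set.uIcc_of_le hpq
  have hxπ : ∀ x ∈ Set.Icc p q, |x| ≤ π := fun x hx =>
    abs_le.2 ⟨by linarith [hx.1], by linarith [hx.2]⟩
  have hb0 : 0 < (π+a)/2 := by positivity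
  have hbπ : (π+a)/2 ≤ π := by linarith
  have hm0 : 0 < Real.sin ((π+a)/2) / ((π+a)/2) :=
    div_pos (Real.sin_pos_of_pos_of_lt_pi hb0 (by linarith)) hb0
  have hSne : ∀ x ∈ Set.Icc p q, Real.sin ((t - x)/2) ≠ 0 := by
    intro x hx
    have h1 := hfar x hx
    have habs2 : |(t-x)/2| ≤ (π+a)/2 := by
      have h2 : |t - x| ≤ |t| + |x| := abs_sub t x
      have h3 := hxπ x hx
      rw [abs_div, abs_two]
      linarith
    have hlow := abs_sin_ge hb0 hbπ habs2
    intro hzero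
    rw [hzero] at hlow
    simp only [abs_zero] at hlow
    rw [abs_div, abs_two] at hlow
    nlinarith
  have hbnd := ibp_bound
    (F := fun x : ℝ => (Complex.exp (α * x * Complex.I) - Complex.exp (α * t * Complex.I))
        / ((Real.sin ((t - x)/2) : ℝ) : ℂ))
    (F' := fun x : ℝ =>
      (α * Complex.I * Complex.exp (α * x * Complex.I) * ((Real.sin ((t - x)/2):ℝ):ℂ)
        - (Complex.exp (α * x * Complex.I) - Complex.exp (α * t * Complex.I))
            * ((-Real.cos ((t - x)/2)/2 : ℝ):ℂ)) / (((Real.sin ((t - x)/2):ℝ):ℂ))^2)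
    (p := p) (q := q) (lam := lam) (t := t)
    (CF := (‖α‖ * Real.exp (3*π*‖α‖)) * (2 / (Real.sin ((π+a)/2) / ((π+a)/2))))
    (CF' := ((‖α‖ + 2) * Real.exp (π*‖α‖) * (4 / (Real.sin ((π+a)/2) / ((π+a)/2))^2)) / η^2)
    hpq hlam
    (fun x hx => H_hasDeriv α t (hSne x (huIcc ▸ hx)))
    (by
      rw [huIcc]
      apply ContinuousOn.div
      · apply Continuous.continuousOn
        apply Continuous.sub
        · fun_prop
        · apply Continuous.mul
          · apply Continuous.sub _ continuous_const
            fun_prop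
          · fun_prop
      · fun_prop
      · intro x hx
        exact pow_ne_zero 2 (Complex.ofReal_ne_zero.2 (hSne x hx)))
    (fun x hx => H_norm_le α ha0 ha ht (hxπ x (huIcc ▸ hx)))
    (fun x hx => Hd_norm_le α ha0 ha ht (hxπ x (huIcc ▸ hx)) hη (hfar x (huIcc ▸ hx)))
  refine hbnd.trans ?_
  have hqp : q - p ≤ 2*π := by linarith
  apply div_le_div₀ (by positivity) _ hlam le_rfl
  have hC2' : (0:ℝ) ≤ ((‖α‖ + 2) * Real.exp (π*‖α‖)
      * (4 / (Real.sin ((π+a)/2) / ((π+a)/2))^2)) / η^2 := by positivity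
  nlinarith

set_option maxHeartbeats 1000000 in
lemma key_est (α : ℂ) {a : ℝ} (ha0 : 0 ≤ a) (ha : a < π) {ε : ℝ} (hε : 0 < ε) :
    ∃ M₀ : ℕ, ∀ M : ℕ, M₀ ≤ M → ∀ t : ℝ, |t| ≤ a →
      ‖(∑ n ∈ Finset.Icc (-(M:ℤ)) M, csinc (α - n) * Complex.exp (n * t * Complex.I))
        - Complex.exp (α * t * Complex.I)‖ ≤ ε := by
  have hpi := Real.pi_pos
  have hb0 : 0 < (π+a)/2 := by positivity
  have hm0 : 0 < Real.sin ((π+a)/2) / ((π+a)/2) :=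
    div_pos (Real.sin_pos_of_pos_of_lt_pi hb0 (by linarith)) hb0
  set m := Real.sin ((π+a)/2) / ((π+a)/2) with hmdef
  set CH := (‖α‖ * Real.exp (3*π*‖α‖)) * (2 / m) with hCHdef
  have hCH0 : 0 ≤ CH := by positivity
  set C2 := (‖α‖ + 2) * Real.exp (π*‖α‖) * (4 / m^2) with hC2def
  have hC20 : 0 < C2 := by positivity
  set η := min (π - a) (ε * π / (2 * (CH + 1))) with hηdef
  have hη0 : 0 < η := lt_min (by linarith) (by positivity)
  have hη1 : η ≤ π - a := min_le_left _ _
  have hη2 : η * CH ≤ ε * π / 2 := by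
    have h1 : η ≤ ε * π / (2 * (CH + 1)) := min_le_right _ _
    have h2 : η * CH ≤ (ε * π / (2 * (CH + 1))) * CH :=
      mul_le_mul_of_nonneg_right h1 hCH0
    have h3 : (ε * π / (2 * (CH + 1))) * CH ≤ (ε * π / (2 * (CH + 1))) * (CH + 1) :=
      mul_le_mul_of_nonneg_left (by linarith) (by positivity)
    have h4 : (ε * π / (2 * (CH + 1))) * (CH + 1) = ε * π / 2 := by
      field_simp
    linarith
  set KK := 2*CH + 2*π*(C2/η^2) with hKKdef
  have hKK0 : 0 < KK := by positivity
  refine ⟨⌈2*KK/(ε*π)⌉₊ + 1, fun M hM t ht => ?_⟩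
  set lam := (M:ℝ) + 1/2 with hlamdef
  have hlam0 : 0 < lam := by positivity
  have hKlam : KK/lam ≤ ε*π/2 := by
    rw [div_le_iff₀ hlam0]
    have h1 : 2*KK/(ε*π) ≤ (M:ℝ) := by
      calc 2*KK/(ε*π) ≤ (⌈2*KK/(ε*π)⌉₊ : ℝ) := Nat.le_ceil _
        _ ≤ ((⌈2*KK/(ε*π)⌉₊ + 1 : ℕ) : ℝ) := by push_cast; linarith
        _ ≤ (M:ℝ) := by exact_mod_cast hM
    have h2 : 2*KK/(ε*π) ≤ lam := by rw [hlamdef]; linarith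
    rw [div_le_iff₀ (by positivity)] at h2
    ring_nf at h2 ⊢
    linarith
  have htπ : |t| ≤ π := ht.trans (by linarith)
  have hta := abs_le.1 ht
  have h1' : -π ≤ t - η := by linarith
  have h3' : t + η ≤ π := by linarith
  have hEcont : Continuous (fun x : ℝ => (Complex.exp (α * x * Complex.I)
      - Complex.exp (α * t * Complex.I)) *
      (∑ n ∈ Finset.Icc (-(M:ℤ)) M, Complex.exp (n * ((t:ℂ) - x) * Complex.I))) := by
    apply Continuous.mul
    · apply Continuous.sub _ continuous_const
      fun_prop
    · apply continuous_finset_sum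
      intro n _
      fun_prop
  have hEint : ∀ p q : ℝ, IntervalIntegrable (fun x : ℝ => (Complex.exp (α * x * Complex.I)
      - Complex.exp (α * t * Complex.I)) *
      (∑ n ∈ Finset.Icc (-(M:ℤ)) M, Complex.exp (n * ((t:ℂ) - x) * Complex.I)))
      volume p q :=
    fun p q => hEcont.intervalIntegrable p q
  have hsplit : (∫ x in (-π)..π, (Complex.exp (α * x * Complex.I)
        - Complex.exp (α * t * Complex.I)) *
        (∑ n ∈ Finset.Icc (-(M:ℤ)) M, Complex.exp (n * ((t:ℂ) - x) * Complex.I)))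
      = (∫ x in (-π)..(t-η), (Complex.exp (α * x * Complex.I)
          - Complex.exp (α * t * Complex.I)) *
          (∑ n ∈ Finset.Icc (-(M:ℤ)) M, Complex.exp (n * ((t:ℂ) - x) * Complex.I)))
        + (∫ x in (t-η)..(t+η), (Complex.exp (α * x * Complex.I)
          - Complex.exp (α * t * Complex.I)) *
          (∑ n ∈ Finset.Icc (-(M:ℤ)) M, Complex.exp (n * ((t:ℂ) - x) * Complex.I)))
        + (∫ x in (t+η)..π, (Complex.exp (α * x * Complex.I)
          - Complex.exp (α * t * Complex.I)) *
          (∑ n ∈ Finset.Icc (-(M:ℤ)) M, Complex.exp (n * ((t:ℂ) - x) * Complex.I))) := by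
    rw [intervalIntegral.integral_add_adjacent_intervals (hEint _ _) (hEint _ _),
      intervalIntegral.integral_add_adjacent_intervals (hEint _ _) (hEint _ _)]
  have hcongr : ∀ p q : ℝ, -π ≤ p → p ≤ π → -π ≤ q → q ≤ π →
      (∫ x in p..q, (Complex.exp (α * x * Complex.I)
          - Complex.exp (α * t * Complex.I)) *
          (∑ n ∈ Finset.Icc (-(M:ℤ)) M, Complex.exp (n * ((t:ℂ) - x) * Complex.I)))
      = ∫ x in p..q, ((Complex.exp (α * x * Complex.I) - Complex.exp (α * t * Complex.I))
          / ((Real.sin ((t - x)/2) : ℝ) : ℂ)) * ((Real.sin (lam * (t - x)) : ℝ) : ℂ) := by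
    intro p q hp hp2 hq hq2
    apply intervalIntegral.integral_congr
    intro x hx
    have hx' : x ∈ Set.Icc (min p q) (max p q) := hx
    have hxπ : |x| ≤ π := by
      rcases hx' with ⟨hx1, hx2⟩
      have hminle : -π ≤ min p q := le_min (by linarith) (by linarith)
      have hmaxle : max p q ≤ π := max_le (by linarith) (by linarith)
      exact abs_le.2 ⟨by linarith, by linarith⟩
    exact ptwise_id α M ha0 ha ht hxπ
  have h1 : ‖∫ x in (-π)..(t-η), ((Complex.exp (α * x * Complex.I)
        - Complex.exp (α * t * Complex.I))
        / ((Real.sin ((t - x)/2) : ℝ) : ℂ)) * ((Real.sin (lam * (t - x)) : ℝ) : ℂ)‖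
      ≤ KK/lam := by
    apply outer_bound α ha0 ha ht le_rfl (by linarith) (by linarith) hη0 hlam0
    intro x hx
    rw [abs_of_nonneg (by linarith [hx.2])]
    linarith [hx.2]
  have h3 : ‖∫ x in (t+η)..π, ((Complex.exp (α * x * Complex.I)
        - Complex.exp (α * t * Complex.I))
        / ((Real.sin ((t - x)/2) : ℝ) : ℂ)) * ((Real.sin (lam * (t - x)) : ℝ) : ℂ)‖
      ≤ KK/lam := by
    apply outer_bound α ha0 ha ht (by linarith) le_rfl (by linarith) hη0 hlam0
    intro x hx
    rw [abs_sub_comm, abs_of_nonneg (by linarith [hx.1])]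
    linarith [hx.1]
  have hmid : ‖∫ x in (t-η)..(t+η), ((Complex.exp (α * x * Complex.I)
        - Complex.exp (α * t * Complex.I))
        / ((Real.sin ((t - x)/2) : ℝ) : ℂ)) * ((Real.sin (lam * (t - x)) : ℝ) : ℂ)‖
      ≤ CH * (2*η) := by
    have hbnd : ‖∫ x in (t-η)..(t+η), ((Complex.exp (α * x * Complex.I)
        - Complex.exp (α * t * Complex.I))
        / ((Real.sin ((t - x)/2) : ℝ) : ℂ)) * ((Real.sin (lam * (t - x)) : ℝ) : ℂ)‖
        ≤ CH * |(t+η) - (t-η)| := by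
      apply intervalIntegral.norm_integral_le_of_norm_le_const
      intro x hx
      rw [Set.uIoc_of_le (by linarith)] at hx
      have hxπ : |x| ≤ π := abs_le.2 ⟨by linarith [hx.1], by linarith [hx.2]⟩
      rw [norm_mul]
      calc ‖(Complex.exp (α * x * Complex.I) - Complex.exp (α * t * Complex.I))
            / ((Real.sin ((t - x)/2) : ℝ) : ℂ)‖ * ‖((Real.sin (lam * (t - x)) : ℝ) : ℂ)‖
          ≤ CH * 1 := by
            apply mul_le_mul (H_norm_le α ha0 ha ht hxπ) _ (norm_nonneg _) hCH0
            rw [Complex.norm_real, Real.norm_eq_abs]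
            exact Real.abs_sin_le_one _
        _ = CH := mul_one _
    refine hbnd.trans ?_
    rw [show (t+η) - (t-η) = 2*η by ring, abs_of_pos (by positivity)]
  rw [rep α M t]
  have hpre : ‖(2 * (Real.pi:ℂ))⁻¹‖ = (2*π)⁻¹ := by
    rw [norm_inv, show (2*(Real.pi:ℂ)) = ((2*Real.pi : ℝ):ℂ) by push_cast; ring,
      Complex.norm_real, Real.norm_eq_abs, abs_of_pos (by positivity)]
  rw [norm_mul, hpre, hsplit, hcongr (-π) (t-η) le_rfl (by linarith) (by linarith) (by linarith),
    hcongr (t-η) (t+η) (by linarith) (by linarith) (by linarith) (by linarith),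
    hcongr (t+η) π (by linarith) (by linarith) (by linarith) le_rfl]
  have htotal : ‖(∫ x in (-π)..(t-η), ((Complex.exp (α * x * Complex.I)
        - Complex.exp (α * t * Complex.I))
        / ((Real.sin ((t - x)/2) : ℝ) : ℂ)) * ((Real.sin (lam * (t - x)) : ℝ) : ℂ))
      + (∫ x in (t-η)..(t+η), ((Complex.exp (α * x * Complex.I)
        - Complex.exp (α * t * Complex.I))
        / ((Real.sin ((t - x)/2) : ℝ) : ℂ)) * ((Real.sin (lam * (t - x)) : ℝ) : ℂ))
      + (∫ x in (t+η)..π, ((Complex.exp (α * x * Complex.I)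
        - Complex.exp (α * t * Complex.I))
        / ((Real.sin ((t - x)/2) : ℝ) : ℂ)) * ((Real.sin (lam * (t - x)) : ℝ) : ℂ))‖
      ≤ KK/lam + CH*(2*η) + KK/lam := by
    refine (norm_add_le _ _).trans ?_
    have := (norm_add_le (∫ x in (-π)..(t-η), ((Complex.exp (α * x * Complex.I)
        - Complex.exp (α * t * Complex.I))
        / ((Real.sin ((t - x)/2) : ℝ) : ℂ)) * ((Real.sin (lam * (t - x)) : ℝ) : ℂ))
      (∫ x in (t-η)..(t+η), ((Complex.exp (α * x * Complex.I)
        - Complex.exp (α * t * Complex.I))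
        / ((Real.sin ((t - x)/2) : ℝ) : ℂ)) * ((Real.sin (lam * (t - x)) : ℝ) : ℂ)))
    have hsum1 := add_le_add (this.trans (add_le_add h1 hmid)) h3
    linarith
  refine le_trans (mul_le_mul_of_nonneg_left htotal (by positivity)) ?_
  have h6 : KK/lam + CH*(2*η) + KK/lam ≤ ε*π/2 + ε*π + ε*π/2 := by
    have h5 : CH*(2*η) = 2*(η*CH) := by ring
    rw [h5]
    linarith [hKlam, hη2]
  calc (2*π)⁻¹ * (KK/lam + CH*(2*η) + KK/lam)
      ≤ (2*π)⁻¹ * (ε*π/2 + ε*π + ε*π/2) := mul_le_mul_of_nonneg_left h6 (by positivity)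
    _ = ε := by field_simp; ring

set_option maxHeartbeats 1000000 in
/-- For a unitary element `u` of a unital C*-algebra with `-1 ∉ σ(u)` and any `α ∈ ℂ`, the
symmetric partial sums `∑_{n=-M}^{M} sinc(α-n) u^n` converge in norm to `cfc (z ↦ z^α) u`. -/
theorem shannon_series_cfc_unitary {A : Type*} [CStarAlgebra A] (u : unitary A)
    (hu : (-1 : ℂ) ∉ spectrum ℂ (u : A)) (α : ℂ) :
    Tendsto (fun M : ℕ => ∑ n ∈ Finset.Icc (-(M : ℤ)) (M : ℤ),
        csinc (α - (n : ℂ)) • ((u ^ n : unitary A) : A))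
      atTop (𝓝 (cfc (fun z : ℂ => z ^ α) (u : A))) := by
  rcases subsingleton_or_nontrivial A with hA | hA
  · have heq : (fun M : ℕ => ∑ n ∈ Finset.Icc (-(M : ℤ)) (M : ℤ),
        csinc (α - (n : ℂ)) • ((u ^ n : unitary A) : A))
        = fun _ => cfc (fun z : ℂ => z ^ α) (u : A) :=
      funext fun _ => Subsingleton.elim _ _
    rw [heq]
    exact tendsto_const_nhds
  have hsp := Unitary.spectrum_subset_circle (𝕜 := ℂ) u
  have hnorm1 : ∀ z ∈ spectrum ℂ (u:A), ‖z‖ = 1 := fun z hz =>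
    mem_sphere_zero_iff_norm.1 (hsp hz)
  have hz0 : ∀ z ∈ spectrum ℂ (u:A), z ≠ 0 := by
    intro z hz h
    have := hnorm1 z hz
    rw [h] at this
    simp at this
  have hneg1 : ∀ z ∈ spectrum ℂ (u:A), z.re ≤ 0 → z.im = 0 → False := by
    intro z hz h1 h2
    have hzre : z = (z.re : ℂ) := by
      apply Complex.ext
      · simp
      · simp [h2]
    have habs : |z.re| = 1 := by
      have h3 := hnorm1 z hz
      rw [hzre, Complex.norm_real, Real.norm_eq_abs] at h3
      exact h3
    have hre : z.re = -1 := by cases abs_cases z.re <;> linarith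
    have hz1 : z = -1 := by rw [hzre, hre]; norm_num
    exact hu (hz1 ▸ hz)
  have hslit : ∀ z ∈ spectrum ℂ (u:A), z ∈ Complex.slitPlane := by
    intro z hz
    rw [Complex.mem_slitPlane_iff]
    by_contra hcon
    push_neg at hcon
    exact hneg1 z hz hcon.1 hcon.2
  obtain ⟨z₀, hz₀mem, hmax'⟩ := (spectrum.isCompact (u:A)).exists_isMaxOn
    (spectrum.nonempty (u:A))
    (fun z hz => ((Complex.continuousAt_arg (hslit z hz)).abs).continuousWithinAt)
  have hmax : ∀ z ∈ spectrum ℂ (u:A), |Complex.arg z| ≤ |Complex.arg z₀| :=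
    fun z hz => isMaxOn_iff.mp hmax' z hz
  set a := |Complex.arg z₀| with hadef
  have ha0 : 0 ≤ a := abs_nonneg _
  have ha : a < π := by
    rcases lt_or_eq_of_le (abs_le.2 ⟨(Complex.neg_pi_lt_arg z₀).le, Complex.arg_le_pi z₀⟩)
      with h | h
    · exact h
    · exfalso
      have harg : Complex.arg z₀ = π := by
        rcases (abs_eq Real.pi_pos.le).1 h with h' | h'
        · exact h'
        · exact absurd h' (by linarith [Complex.neg_pi_lt_arg z₀])
      obtain ⟨hre, him⟩ := Complex.arg_eq_pi_iff.1 harg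
      exact hneg1 z₀ hz₀mem hre.le him
  -- continuity facts
  have hcont_zpow : ∀ n : ℤ, ContinuousOn (fun z : ℂ => z ^ n) (spectrum ℂ (u:A)) :=
    fun n => ContinuousOn.zpow₀ continuousOn_id n (fun z hz => Or.inl (hz0 z hz))
  have hcontf : ∀ n : ℤ, ContinuousOn (fun z : ℂ => csinc (α - n) * z ^ n)
      (spectrum ℂ (u:A)) := fun n => continuousOn_const.mul (hcont_zpow n)
  have hcontg : ContinuousOn (fun z : ℂ => z ^ α) (spectrum ℂ (u:A)) :=
    fun z hz => (continuousAt_cpow_const (hslit z hz)).continuousWithinAt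
  have hcontsum : ∀ M : ℕ, ContinuousOn
      (fun z : ℂ => ∑ n ∈ Finset.Icc (-(M:ℤ)) M, csinc (α - n) * z ^ n)
      (spectrum ℂ (u:A)) :=
    fun M => continuousOn_finset_sum _ (fun n _ => hcontf n)
  -- the partial sum as a cfc
  have hsum_eq : ∀ M : ℕ, (∑ n ∈ Finset.Icc (-(M:ℤ)) (M:ℤ),
      csinc (α - (n:ℂ)) • ((u ^ n : unitary A) : A))
      = cfc (fun z : ℂ => ∑ n ∈ Finset.Icc (-(M:ℤ)) M, csinc (α - n) * z ^ n) (u:A) := by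
    intro M
    have h1 : (fun z : ℂ => ∑ n ∈ Finset.Icc (-(M:ℤ)) M, csinc (α - n) * z ^ n)
        = (∑ n ∈ Finset.Icc (-(M:ℤ)) M, fun z : ℂ => csinc (α - n) * z ^ n) := by
      ext z; simp
    rw [h1, cfc_sum _ (u:A) _ (fun n _ => hcontf n)]
    apply Finset.sum_congr rfl
    intro n _
    rw [cfc_const_mul (csinc (α - n)) (fun z : ℂ => z ^ n) (u:A) (hcont_zpow n)]
    congr 1
    have h2 := cfc_zpow (R := ℂ) (p := IsStarNormal) (Unitary.toUnits u) n
      (Unitary.coe_isStarNormal u)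
    have h3 : ((Unitary.toUnits u ^ n : Aˣ) : A) = ((u ^ n : unitary A) : A) := by
      rw [← map_zpow]
      rfl
    exact (h2.trans h3).symm
  -- pointwise evaluation on the spectrum
  have heval : ∀ z ∈ spectrum ℂ (u:A), ∀ M : ℕ,
      (∑ n ∈ Finset.Icc (-(M:ℤ)) M, csinc (α - n) * z ^ n) - z ^ α
      = (∑ n ∈ Finset.Icc (-(M:ℤ)) M,
          csinc (α - n) * Complex.exp (n * (Complex.arg z) * Complex.I))
        - Complex.exp (α * (Complex.arg z) * Complex.I) := by
    intro z hz M
    have habs1 : (‖z‖ : ℝ) = 1 := by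
      exact hnorm1 z hz
    have hzexp : z = Complex.exp ((Complex.arg z) * Complex.I) := by
      conv_lhs => rw [← Complex.norm_mul_exp_arg_mul_I z]
      rw [habs1]
      simp
    congr 1
    · apply Finset.sum_congr rfl
      intro n _
      congr 1
      conv_lhs => rw [hzexp]
      rw [← Complex.exp_int_mul]
      congr 1
      ring
    · have hlog : Complex.log z = (Complex.arg z) * Complex.I := by
        rw [Complex.log, habs1]
        simp
      rw [Complex.cpow_def_of_ne_zero (hz0 z hz), hlog]
      congr 1
      ring
  -- conclude
  rw [Metric.tendsto_atTop]
  intro ε hε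
  obtain ⟨M₀, hM₀⟩ := key_est α ha0 ha (half_pos hε)
  refine ⟨M₀, fun M hM => ?_⟩
  rw [dist_eq_norm, hsum_eq M, ← cfc_sub (fun z : ℂ => ∑ n ∈ Finset.Icc (-(M:ℤ)) M,
    csinc (α - n) * z ^ n) (fun z : ℂ => z ^ α) (u:A) (hcontsum M) hcontg]
  have hbound : ‖cfc (fun z : ℂ => (∑ n ∈ Finset.Icc (-(M:ℤ)) M, csinc (α - n) * z ^ n)
      - z ^ α) (u:A)‖ ≤ ε/2 := by
    apply norm_cfc_le (by linarith)
    intro z hz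
    rw [heval z hz M]
    exact hM₀ M hM (Complex.arg z) (hmax z hz)
  calc ‖cfc (fun z : ℂ => (∑ n ∈ Finset.Icc (-(M:ℤ)) M, csinc (α - n) * z ^ n)
      - z ^ α) (u:A)‖ ≤ ε/2 := hbound
    _ < ε := by linarith
end

section
/- Let A be a unital complex Banach algebra, let N ≥ 1 be a natural number, let a ∈ A be invertible with a^N = 1, and let α ∈ ℂ∖ℤ. Then the symmetric partial sums ∑_{n=−M}^{M} sinc(α−n)·a^n converge in norm as M → ∞, and the limit equals (1/N)·∑_{n=0}^{N−1} sin(π(α−n))·cot(π(α−n)/N)·a^n if N is even, and (1/N)·∑_{n=0}^{N−1} sin(π(α−n))·csc(π(α−n)/N)·a^n if N is odd. -/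
open Filter Finset Topology

instance fact_two_pi_pos : Fact (0 < 2*Real.pi) := ⟨by positivity⟩

lemma fourierCoeff_cos (z : ℂ) (hz : ∀ m : ℤ, z ≠ m) (n : ℤ) :
    fourierCoeff (AddCircle.liftIco (2*Real.pi) (-Real.pi) (fun x : ℝ => Complex.cos (z * x))) n
      = Complex.sin ((Real.pi:ℂ)*(z - n)) / (2*(Real.pi:ℂ)*(z - n))
        + Complex.sin ((Real.pi:ℂ)*(z + n)) / (2*(Real.pi:ℂ)*(z + n)) := by
  have hzn : z - n ≠ 0 := sub_ne_zero.mpr (hz n)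
  have hzn' : z + n ≠ 0 := by
    intro h; apply hz (-n); push_cast; linear_combination h
  have hc1 : Complex.I * (z - n) ≠ 0 := mul_ne_zero Complex.I_ne_zero hzn
  have hc2 : -(Complex.I * (z + n)) ≠ 0 := neg_ne_zero.mpr (mul_ne_zero Complex.I_ne_zero hzn')
  rw [fourierCoeff_liftIco_eq, fourierCoeffOn_eq_integral]
  have hint : ∀ x : ℝ, fourier (-n) (x : AddCircle ((-Real.pi) + 2*Real.pi - (-Real.pi)))
        • Complex.cos (z * x)
      = (Complex.exp ((Complex.I*(z-n)) * x) + Complex.exp ((-(Complex.I*(z+n))) * x)) / 2 := by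
    intro x
    rw [fourier_coe_apply, smul_eq_mul]
    have harg : 2 * (Real.pi:ℂ) * Complex.I * ((-n : ℤ):ℂ) * x / ((-Real.pi + 2*Real.pi - -Real.pi : ℝ) : ℂ)
        = -(Complex.I * n * x) := by
      have hpi' : (Real.pi:ℂ) ≠ 0 := by exact_mod_cast Real.pi_ne_zero
      push_cast
      field_simp
      ring
    rw [harg, Complex.cos]
    have e1 : (Complex.I*(z-n)) * (x:ℂ) = z*x*Complex.I + -(Complex.I * n * x) := by ring
    have e2 : (-(Complex.I*(z+n))) * (x:ℂ) = -(z*x)*Complex.I + -(Complex.I * n * x) := by ring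
    rw [e1, e2, Complex.exp_add, Complex.exp_add]
    ring
  simp_rw [hint]
  rw [intervalIntegral.integral_div, intervalIntegral.integral_add
    ((by fun_prop : Continuous fun x:ℝ => Complex.exp (Complex.I*(z-n)*x)).intervalIntegrable _ _)
    ((by fun_prop : Continuous fun x:ℝ => Complex.exp (-(Complex.I*(z+n))*x)).intervalIntegrable _ _),
    integral_exp_mul_complex hc1, integral_exp_mul_complex hc2]
  have key1 : ∀ w : ℂ, Complex.exp (w*Complex.I) - Complex.exp (-w*Complex.I)
      = 2*Complex.sin w*Complex.I := by
    intro w; rw [Complex.sin]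
    linear_combination (Complex.exp (w*Complex.I) - Complex.exp (-w*Complex.I)) * Complex.I_sq
  have key2 : ∀ w : ℂ, Complex.exp (-w*Complex.I) - Complex.exp (w*Complex.I)
      = -(2*Complex.sin w*Complex.I) := by
    intro w; rw [← key1 w]; ring
  rw [show Complex.I * (z - n) * ((-(Real.pi:ℝ)) + 2*(Real.pi:ℝ) : ℝ) = ((Real.pi:ℂ)*(z-n))*Complex.I by push_cast; ring]
  rw [show Complex.I * (z - n) * ((-Real.pi : ℝ):ℂ) = (-((Real.pi:ℂ)*(z-n)))*Complex.I by push_cast; ring]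
  rw [show (-(Complex.I * (z + n))) * ((-(Real.pi:ℝ)) + 2*(Real.pi:ℝ) : ℝ) = (-((Real.pi:ℂ)*(z+n)))*Complex.I by push_cast; ring]
  rw [show (-(Complex.I * (z + n))) * ((-Real.pi : ℝ):ℂ) = ((Real.pi:ℂ)*(z+n))*Complex.I by push_cast; ring]
  rw [key1 ((Real.pi:ℂ)*(z-n)), key2 ((Real.pi:ℂ)*(z+n))]
  rw [show (-(Complex.I*(z+n))) = -(Complex.I * (z+n)) by ring, neg_div_neg_eq]
  rw [show (2*Complex.sin ((Real.pi:ℂ)*(z-n))*Complex.I) = Complex.I*(2*Complex.sin ((Real.pi:ℂ)*(z-n))) by ring]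
  rw [show (2*Complex.sin ((Real.pi:ℂ)*(z+n))*Complex.I) = Complex.I*(2*Complex.sin ((Real.pi:ℂ)*(z+n))) by ring]
  rw [mul_div_mul_left _ _ Complex.I_ne_zero, mul_div_mul_left _ _ Complex.I_ne_zero]
  have hpi : ((Real.pi:ℂ)) ≠ 0 := by exact_mod_cast Real.pi_ne_zero
  rw [Complex.real_smul]
  push_cast
  field_simp
  ring

lemma summable_base (z : ℂ) (hz : ∀ m : ℤ, z ≠ m) :
    Summable (fun n : ℤ => (z - n)⁻¹ + (z + n)⁻¹) := by
  have key : ∀ n : ℤ, 2*‖z‖+1 ≤ |(n:ℝ)| → ‖(z - n)⁻¹ + (z + n)⁻¹‖ ≤ 8 * ‖z‖ * (1/(n:ℝ)^2) := by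
    intro n hn
    have hzn : z - n ≠ 0 := sub_ne_zero.mpr (hz n)
    have hzn' : z + n ≠ 0 := by
      intro h; apply hz (-n); push_cast; linear_combination h
    have heq : (z - n)⁻¹ + (z + n)⁻¹ = 2*z / ((z - n)*(z + n)) := by
      field_simp; ring
    have h1 : |(n:ℝ)|/2 ≤ ‖z - n‖ := by
      have h2 : ‖(n:ℂ)‖ - ‖z‖ ≤ ‖z - n‖ := by
        rw [norm_sub_rev]; exact norm_sub_norm_le _ _
      rw [Complex.norm_intCast] at h2
      have : (0:ℝ) ≤ ‖z‖ := norm_nonneg _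
      linarith
    have h1' : |(n:ℝ)|/2 ≤ ‖z + n‖ := by
      have h2 : ‖(n:ℂ)‖ - ‖z‖ ≤ ‖z + n‖ := by
        rw [show z + n = (n:ℂ) - (-z) by ring]
        have := norm_sub_norm_le (n:ℂ) (-z)
        rwa [norm_neg] at this
      rw [Complex.norm_intCast] at h2
      have : (0:ℝ) ≤ ‖z‖ := norm_nonneg _
      linarith
    have hnpos : (0:ℝ) < |(n:ℝ)| := by
      have : (0:ℝ) ≤ ‖z‖ := norm_nonneg _
      linarith
    rw [heq, norm_div, norm_mul, norm_mul]
    have hden : |(n:ℝ)|/2 * (|(n:ℝ)|/2) ≤ ‖z - n‖ * ‖z + n‖ :=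
      mul_le_mul h1 h1' (by positivity) (norm_nonneg _)
    calc ‖(2:ℂ)‖*‖z‖ / (‖z - n‖ * ‖z + n‖) ≤ ‖(2:ℂ)‖*‖z‖ / (|(n:ℝ)|/2 * (|(n:ℝ)|/2)) := by
          apply div_le_div_of_nonneg_left ?_ (by positivity) hden
          · positivity
      _ = 8 * ‖z‖ * (1/(n:ℝ)^2) := by
          rw [Complex.norm_ofNat]
          have habs : |(n:ℝ)|/2 * (|(n:ℝ)|/2) = (n:ℝ)^2/4 := by
            rw [div_mul_div_comm, abs_mul_abs_self]; ring
          have hn0 : (n:ℝ) ≠ 0 := by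
            intro h; rw [h] at hnpos; simp at hnpos
          rw [habs]
          field_simp
          ring
  apply Summable.of_norm_bounded_eventually (g := fun n : ℤ => 8 * ‖z‖ * (1/(n:ℝ)^2))
  · exact (Real.summable_one_div_int_pow.mpr one_lt_two).mul_left _
  · rw [Int.cofinite_eq, Filter.eventually_sup]
    constructor
    · rw [Filter.eventually_atBot]
      refine ⟨-⌈2*‖z‖+1⌉, fun n hn => key n ?_⟩
      have h1 : (2*‖z‖+1 : ℝ) ≤ ⌈2*‖z‖+1⌉ := Int.le_ceil _
      have h2 : (n:ℝ) ≤ -⌈2*‖z‖+1⌉ := by exact_mod_cast hn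
      push_cast at h2
      rw [_root_.abs_of_nonpos (by linarith [norm_nonneg z] : (n:ℝ) ≤ 0)]
      linarith
    · rw [Filter.eventually_atTop]
      refine ⟨⌈2*‖z‖+1⌉, fun n hn => key n ?_⟩
      have h1 : (2*‖z‖+1 : ℝ) ≤ ⌈2*‖z‖+1⌉ := Int.le_ceil _
      have h2 : ((⌈2*‖z‖+1⌉:ℤ):ℝ) ≤ (n:ℝ) := by exact_mod_cast hn
      rw [_root_.abs_of_nonneg (by linarith [norm_nonneg z] : (0:ℝ) ≤ (n:ℝ))]
      linarith

lemma neg_one_zpow_sq (n : ℤ) : ((-1:ℂ))^n * ((-1:ℂ))^n = 1 := by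
  rw [← zpow_add₀ (by norm_num : (-1:ℂ) ≠ 0)]
  exact Even.neg_one_zpow ⟨n, rfl⟩

lemma sin_shift (w : ℂ) (n : ℤ) :
    Complex.sin (w + n*(Real.pi:ℂ)) = (-1:ℂ)^n * Complex.sin w := by
  have := Complex.sin_antiperiodic.add_int_mul_eq (x := w) n
  rw [this, Int.cast_negOnePow]

lemma sin_pi_ne (z : ℂ) (hz : ∀ m : ℤ, z ≠ m) : Complex.sin ((Real.pi:ℂ)*z) ≠ 0 := by
  intro h
  rcases Complex.sin_eq_zero_iff.mp h with ⟨k, hk⟩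
  apply hz k
  have hpi : ((Real.pi:ℂ)) ≠ 0 := by exact_mod_cast Real.pi_ne_zero
  rw [mul_comm (k:ℂ) _] at hk
  exact mul_left_cancel₀ hpi hk

lemma fourierCoeff_cos' (z : ℂ) (hz : ∀ m : ℤ, z ≠ m) (n : ℤ) :
    fourierCoeff (AddCircle.liftIco (2*Real.pi) (-Real.pi) (fun x : ℝ => Complex.cos (z * x))) n
      = (-1:ℂ)^n * (Complex.sin ((Real.pi:ℂ)*z) / (2*(Real.pi:ℂ))) * ((z - n)⁻¹ + (z + n)⁻¹) := by
  have hzn : z - n ≠ 0 := sub_ne_zero.mpr (hz n)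
  have hzn' : z + n ≠ 0 := by
    intro h; apply hz (-n); push_cast; linear_combination h
  have hpi : ((Real.pi:ℂ)) ≠ 0 := by exact_mod_cast Real.pi_ne_zero
  rw [fourierCoeff_cos z hz n]
  rw [show (Real.pi:ℂ)*(z - n) = (Real.pi:ℂ)*z + (-n : ℤ)*(Real.pi:ℂ) by push_cast; ring]
  rw [show (Real.pi:ℂ)*(z + n) = (Real.pi:ℂ)*z + (n : ℤ)*(Real.pi:ℂ) by push_cast; ring]
  rw [sin_shift, sin_shift]
  rw [show ((-1:ℂ))^(-n) = ((-1:ℂ))^n by rw [zpow_neg]; exact inv_eq_of_mul_eq_one_right (neg_one_zpow_sq n)]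
  field_simp

lemma hasSum_main (z : ℂ) (hz : ∀ m : ℤ, z ≠ m) :
    HasSum (fun n : ℤ => ((z - n)⁻¹ + (z + n)⁻¹))
      (2*(Real.pi:ℂ)*Complex.cos ((Real.pi:ℂ)*z)/Complex.sin ((Real.pi:ℂ)*z))
    ∧ HasSum (fun n : ℤ => (-1:ℂ)^n * ((z - n)⁻¹ + (z + n)⁻¹))
      (2*(Real.pi:ℂ)/Complex.sin ((Real.pi:ℂ)*z)) := by
  have hpi : ((Real.pi:ℂ)) ≠ 0 := by exact_mod_cast Real.pi_ne_zero
  have hs := sin_pi_ne z hz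
  have hper : (fun x:ℝ => Complex.cos (z*x)) (-Real.pi)
      = (fun x:ℝ => Complex.cos (z*x)) (-Real.pi + 2*Real.pi) := by
    simp only
    have h1 : z * ((-Real.pi + 2*Real.pi : ℝ):ℂ) = z * (Real.pi:ℂ) := by push_cast; ring
    have h2 : z * ((-Real.pi : ℝ):ℂ) = -(z * (Real.pi:ℂ)) := by push_cast; ring
    rw [h1, h2, Complex.cos_neg]
  set F : C(AddCircle (2*Real.pi), ℂ) :=
    ⟨AddCircle.liftIco (2*Real.pi) (-Real.pi) (fun x:ℝ => Complex.cos (z*x)),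
      AddCircle.liftIco_continuous hper (Continuous.continuousOn (by fun_prop))⟩ with hF
  have hcoe : (F : AddCircle (2*Real.pi) → ℂ)
      = AddCircle.liftIco (2*Real.pi) (-Real.pi) (fun x:ℝ => Complex.cos (z*x)) := rfl
  have hcoeff : ∀ n : ℤ, fourierCoeff (F : AddCircle (2*Real.pi) → ℂ) n
      = (-1:ℂ)^n * (Complex.sin ((Real.pi:ℂ)*z) / (2*(Real.pi:ℂ))) * ((z - n)⁻¹ + (z + n)⁻¹) := by
    intro n; rw [hcoe]; exact fourierCoeff_cos' z hz n
  have hsummable : Summable (fourierCoeff (F : AddCircle (2*Real.pi) → ℂ)) := by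
    apply Summable.of_norm_bounded
      (g := fun n : ℤ => ‖Complex.sin ((Real.pi:ℂ)*z) / (2*(Real.pi:ℂ))‖ * ‖(z - n)⁻¹ + (z + n)⁻¹‖)
      ((summable_base z hz).norm.mul_left _)
    intro n
    rw [hcoeff n]
    rw [norm_mul, norm_mul, norm_zpow]
    simp [abs_of_nonneg]
  constructor
  · have hpoint := has_pointwise_sum_fourier_series_of_summable hsummable
      (((-Real.pi : ℝ)) : AddCircle (2*Real.pi))
    have hfour : ∀ n : ℤ, fourier n (((-Real.pi : ℝ)) : AddCircle (2*Real.pi)) = (-1:ℂ)^n := by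
      intro n
      rw [fourier_coe_apply]
      rw [show 2*(Real.pi:ℂ)*Complex.I*(n:ℂ)*((-Real.pi:ℝ):ℂ)/((2*Real.pi : ℝ):ℂ)
          = (n:ℂ)*(-((Real.pi:ℂ)*Complex.I)) by push_cast; field_simp]
      rw [Complex.exp_int_mul, Complex.exp_neg, Complex.exp_pi_mul_I]
      norm_num
    have hval : F (((-Real.pi : ℝ)) : AddCircle (2*Real.pi)) = Complex.cos ((Real.pi:ℂ)*z) := by
      rw [hF]
      simp only [ContinuousMap.coe_mk]
      rw [AddCircle.liftIco_coe_apply (by constructor <;> [linarith; linarith [Real.pi_pos]])]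
      have h2 : z * ((-Real.pi : ℝ):ℂ) = -((Real.pi:ℂ) * z) := by push_cast; ring
      rw [h2, Complex.cos_neg]
    rw [hval] at hpoint
    simp only [smul_eq_mul] at hpoint
    have heq : ∀ n : ℤ, fourierCoeff (F : AddCircle (2*Real.pi) → ℂ) n * fourier n (((-Real.pi : ℝ)) : AddCircle (2*Real.pi))
        = Complex.sin ((Real.pi:ℂ)*z) / (2*(Real.pi:ℂ)) * ((z - n)⁻¹ + (z + n)⁻¹) := by
      intro n
      rw [hcoeff n, hfour n]
      linear_combination (Complex.sin ((Real.pi:ℂ)*z) / (2*(Real.pi:ℂ)) * ((z - n)⁻¹ + (z + n)⁻¹)) * neg_one_zpow_sq n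
    rw [funext heq] at hpoint
    have h2 := hpoint.mul_left ((2*(Real.pi:ℂ))/Complex.sin ((Real.pi:ℂ)*z))
    have hfun : (fun n:ℤ => (2*(Real.pi:ℂ))/Complex.sin ((Real.pi:ℂ)*z)
        * (Complex.sin ((Real.pi:ℂ)*z) / (2*(Real.pi:ℂ)) * ((z - n)⁻¹ + (z + n)⁻¹)))
        = fun n : ℤ => ((z - n)⁻¹ + (z + n)⁻¹) := by
      funext n; field_simp
    rw [hfun] at h2
    have : 2*(Real.pi:ℂ)*Complex.cos ((Real.pi:ℂ)*z)/Complex.sin ((Real.pi:ℂ)*z)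
        = 2*(Real.pi:ℂ)/Complex.sin ((Real.pi:ℂ)*z) * Complex.cos ((Real.pi:ℂ)*z) := by ring
    rw [this]
    exact h2
  · have hpoint := has_pointwise_sum_fourier_series_of_summable hsummable
      (((0 : ℝ)) : AddCircle (2*Real.pi))
    have hval : F (((0 : ℝ)) : AddCircle (2*Real.pi)) = 1 := by
      rw [hF]
      simp only [ContinuousMap.coe_mk]
      rw [AddCircle.liftIco_coe_apply (by constructor <;> [linarith [Real.pi_pos]; linarith [Real.pi_pos]])]
      norm_num
    rw [hval] at hpoint
    simp only [smul_eq_mul] at hpoint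
    have heq : ∀ n : ℤ, fourierCoeff (F : AddCircle (2*Real.pi) → ℂ) n * fourier n (((0:ℝ)) : AddCircle (2*Real.pi))
        = Complex.sin ((Real.pi:ℂ)*z) / (2*(Real.pi:ℂ)) * ((-1:ℂ)^n * ((z - n)⁻¹ + (z + n)⁻¹)) := by
      intro n
      have : fourier n (((0:ℝ)) : AddCircle (2*Real.pi)) = 1 := by
        have h0 : (((0:ℝ)) : AddCircle (2*Real.pi)) = (0 : AddCircle (2*Real.pi)) := rfl
        rw [h0, fourier_eval_zero]
      rw [hcoeff n, this]
      ring
    rw [funext heq] at hpoint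
    have h2 := hpoint.mul_left ((2*(Real.pi:ℂ))/Complex.sin ((Real.pi:ℂ)*z))
    have hfun : (fun n:ℤ => (2*(Real.pi:ℂ))/Complex.sin ((Real.pi:ℂ)*z)
        * (Complex.sin ((Real.pi:ℂ)*z) / (2*(Real.pi:ℂ)) * ((-1:ℂ)^n * ((z - n)⁻¹ + (z + n)⁻¹))))
        = fun n : ℤ => (-1:ℂ)^n * ((z - n)⁻¹ + (z + n)⁻¹) := by
      funext n; field_simp
    rw [hfun] at h2
    rw [show 2*(Real.pi:ℂ)/Complex.sin ((Real.pi:ℂ)*z)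
        = 2*(Real.pi:ℂ)/Complex.sin ((Real.pi:ℂ)*z) * 1 by ring]
    exact h2

lemma tendsto_Icc_of_hasSum {f : ℤ → ℂ} {L : ℂ} (h : HasSum f L) :
    Tendsto (fun M : ℕ => ∑ n ∈ Finset.Icc (-(M:ℤ)) (M:ℤ), f n) atTop (𝓝 L) := by
  apply Filter.Tendsto.comp h
  apply tendsto_atTop_finset_of_monotone
  · intro a b hab
    apply Finset.Icc_subset_Icc
    · exact neg_le_neg (by exact_mod_cast hab)
    · exact_mod_cast hab
  · intro x
    exact ⟨x.natAbs, by simp only [Finset.mem_Icc]; omega⟩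

lemma sum_Icc_neg (f : ℤ → ℂ) (M : ℕ) :
    ∑ n ∈ Finset.Icc (-(M:ℤ)) (M:ℤ), f (-n) = ∑ n ∈ Finset.Icc (-(M:ℤ)) (M:ℤ), f n := by
  refine Finset.sum_nbij' (i := fun n => -n) (j := fun n => -n) ?_ ?_ ?_ ?_ ?_
  · intro a ha; simp only [Finset.mem_Icc] at *; omega
  · intro a ha; simp only [Finset.mem_Icc] at *; omega
  · intro a _; ring
  · intro a _; ring
  · intro a _; rfl

lemma tendsto_cot (z : ℂ) (hz : ∀ m : ℤ, z ≠ m) :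
    Tendsto (fun M : ℕ => ∑ n ∈ Finset.Icc (-(M:ℤ)) (M:ℤ), (z - n)⁻¹) atTop
      (𝓝 ((Real.pi:ℂ)*Complex.cos ((Real.pi:ℂ)*z)/Complex.sin ((Real.pi:ℂ)*z))) := by
  have h := tendsto_Icc_of_hasSum (hasSum_main z hz).1
  have hsum : ∀ M : ℕ, ∑ n ∈ Finset.Icc (-(M:ℤ)) (M:ℤ), ((z - n)⁻¹ + (z + n)⁻¹)
      = 2 * ∑ n ∈ Finset.Icc (-(M:ℤ)) (M:ℤ), (z - n)⁻¹ := by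
    intro M
    rw [Finset.sum_add_distrib]
    have h2 : ∑ n ∈ Finset.Icc (-(M:ℤ)) (M:ℤ), (z + n)⁻¹
        = ∑ n ∈ Finset.Icc (-(M:ℤ)) (M:ℤ), (z - n)⁻¹ := by
      rw [← sum_Icc_neg (fun n => (z - n)⁻¹) M]
      apply Finset.sum_congr rfl
      intro n _
      push_cast
      rw [sub_neg_eq_add]
    rw [h2]; ring
  simp_rw [hsum] at h
  have h3 := h.const_mul ((2:ℂ)⁻¹)
  simp only [← mul_assoc, inv_mul_cancel₀ (two_ne_zero (α := ℂ)), one_mul] at h3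
  convert h3 using 1
  field_simp

lemma tendsto_csc (z : ℂ) (hz : ∀ m : ℤ, z ≠ m) :
    Tendsto (fun M : ℕ => ∑ n ∈ Finset.Icc (-(M:ℤ)) (M:ℤ), (-1:ℂ)^n * (z - n)⁻¹) atTop
      (𝓝 ((Real.pi:ℂ)/Complex.sin ((Real.pi:ℂ)*z))) := by
  have h := tendsto_Icc_of_hasSum (hasSum_main z hz).2
  have hsum : ∀ M : ℕ, ∑ n ∈ Finset.Icc (-(M:ℤ)) (M:ℤ), (-1:ℂ)^n * ((z - n)⁻¹ + (z + n)⁻¹)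
      = 2 * ∑ n ∈ Finset.Icc (-(M:ℤ)) (M:ℤ), (-1:ℂ)^n * (z - n)⁻¹ := by
    intro M
    have hexp : ∀ n : ℤ, (-1:ℂ)^n * ((z - n)⁻¹ + (z + n)⁻¹)
        = (-1:ℂ)^n * (z - n)⁻¹ + (-1:ℂ)^n * (z + n)⁻¹ := fun n => by ring
    simp_rw [hexp]
    rw [Finset.sum_add_distrib]
    have h2 : ∑ n ∈ Finset.Icc (-(M:ℤ)) (M:ℤ), (-1:ℂ)^n * (z + n)⁻¹
        = ∑ n ∈ Finset.Icc (-(M:ℤ)) (M:ℤ), (-1:ℂ)^n * (z - n)⁻¹ := by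
      rw [← sum_Icc_neg (fun n => (-1:ℂ)^n * (z - n)⁻¹) M]
      apply Finset.sum_congr rfl
      intro n _
      push_cast
      rw [sub_neg_eq_add]
      rw [show ((-1:ℂ))^(-n) = ((-1:ℂ))^n by
        rw [zpow_neg]; exact inv_eq_of_mul_eq_one_right (neg_one_zpow_sq n)]
    rw [h2]; ring
  simp_rw [hsum] at h
  have h3 := h.const_mul ((2:ℂ)⁻¹)
  simp only [← mul_assoc, inv_mul_cancel₀ (two_ne_zero (α := ℂ)), one_mul] at h3
  convert h3 using 1
  ring

lemma tendsto_inv_nat_sub (c : ℝ) : Tendsto (fun M : ℕ => ((M:ℝ) - c)⁻¹) atTop (𝓝 0) := by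
  apply Filter.Tendsto.comp tendsto_inv_atTop_zero
  apply tendsto_atTop_mono (fun M : ℕ => by linarith [le_refl ((M:ℝ) - c)] : ∀ M : ℕ, (M:ℝ) - c ≤ (M:ℝ) - c)
  exact tendsto_atTop_add_const_right atTop (-c) tendsto_natCast_atTop_atTop |>.congr (fun M => by ring)

lemma tendsto_norm_tail (w : ℂ) : Tendsto (fun M : ℕ => ‖(w - (M:ℂ))⁻¹‖) atTop (𝓝 0) := by
  apply squeeze_zero_norm' (a := fun M : ℕ => ((M:ℝ) - ‖w‖)⁻¹)
  · rw [Filter.eventually_atTop]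
    refine ⟨⌈‖w‖⌉₊ + 1, fun M hM => ?_⟩
    have h1 : ‖w‖ + 1 ≤ (M:ℝ) := by
      have := Nat.le_ceil ‖w‖
      have h2 : ((⌈‖w‖⌉₊ + 1 : ℕ) : ℝ) ≤ (M:ℝ) := by exact_mod_cast hM
      push_cast at h2
      linarith
    have h2 : (0:ℝ) < (M:ℝ) - ‖w‖ := by linarith
    have h3 : (M:ℝ) - ‖w‖ ≤ ‖w - M‖ := by
      have := norm_sub_norm_le ((M:ℂ)) w
      rw [norm_sub_rev] at this
      have hM' : ‖((M:ℕ):ℂ)‖ = (M:ℝ) := by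
        rw [Complex.norm_natCast]
      linarith [norm_sub_norm_le ((M:ℕ):ℂ) w, hM'.symm.le]
    rw [norm_norm, norm_inv]
    exact inv_anti₀ h2 h3
  · exact tendsto_inv_nat_sub ‖w‖

lemma tendsto_tail (w : ℂ) : Tendsto (fun M : ℕ => (w - (M:ℂ))⁻¹) atTop (𝓝 0) :=
  squeeze_zero_norm (fun M => le_refl _) (tendsto_norm_tail w)

lemma tendsto_tail' (w : ℂ) :
    Tendsto (fun M : ℕ => (-1:ℂ)^(M:ℤ) * (w - (M:ℂ))⁻¹) atTop (𝓝 0) := by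
  apply squeeze_zero_norm (a := fun M : ℕ => ‖(w - (M:ℂ))⁻¹‖) (fun M => ?_) (tendsto_norm_tail w)
  rw [norm_mul, norm_zpow, norm_neg, norm_one, one_zpow, one_mul]

lemma tendsto_Ico_cot (z : ℂ) (hz : ∀ m : ℤ, z ≠ m) :
    Tendsto (fun M : ℕ => ∑ n ∈ Finset.Ico (-(M:ℤ)) (M:ℤ), (z - n)⁻¹) atTop
      (𝓝 ((Real.pi:ℂ)*Complex.cos ((Real.pi:ℂ)*z)/Complex.sin ((Real.pi:ℂ)*z))) := by
  have h := (tendsto_cot z hz).sub (tendsto_tail z)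
  rw [sub_zero] at h
  apply h.congr
  intro M
  rw [← Finset.Ico_insert_right (by omega : -(M:ℤ) ≤ M), Finset.sum_insert (by simp)]
  push_cast
  ring

lemma tendsto_Ico_csc (z : ℂ) (hz : ∀ m : ℤ, z ≠ m) :
    Tendsto (fun M : ℕ => ∑ n ∈ Finset.Ico (-(M:ℤ)) (M:ℤ), (-1:ℂ)^n * (z - n)⁻¹) atTop
      (𝓝 ((Real.pi:ℂ)/Complex.sin ((Real.pi:ℂ)*z))) := by
  have h := (tendsto_csc z hz).sub (tendsto_tail' z)
  rw [sub_zero] at h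
  apply h.congr
  intro M
  rw [← Finset.Ico_insert_right (by omega : -(M:ℤ) ≤ M), Finset.sum_insert (by simp)]
  push_cast
  ring

lemma hdiv_not_int (N : ℕ) (hN : 1 ≤ N) (β : ℂ) (hβ : ∀ m : ℤ, β ≠ m) :
    ∀ m : ℤ, β/(N:ℂ) ≠ m := by
  intro m h
  have hNC : ((N:ℕ):ℂ) ≠ 0 := Nat.cast_ne_zero.mpr (by omega)
  apply hβ ((N:ℤ)*m)
  push_cast
  field_simp at h
  rw [h]

lemma summand_eq (N : ℕ) (hN : 1 ≤ N) (β : ℂ) (hβ : ∀ m : ℤ, β ≠ m) (k : ℤ) :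
    csinc (β - (N:ℂ)*(k:ℂ)) = (-1:ℂ)^((N:ℤ)*k) * (Complex.sin ((Real.pi:ℂ)*β) / ((Real.pi:ℂ)*(N:ℂ)))
      * (β/(N:ℂ) - (k:ℂ))⁻¹ := by
  have hNC : ((N:ℕ):ℂ) ≠ 0 := Nat.cast_ne_zero.mpr (by omega)
  have hpi : ((Real.pi:ℂ)) ≠ 0 := by exact_mod_cast Real.pi_ne_zero
  have hne : β - (N:ℂ)*(k:ℂ) ≠ 0 := by
    intro h; apply hβ ((N:ℤ)*k); push_cast; linear_combination h
  have hwk : β/(N:ℂ) - (k:ℂ) ≠ 0 := sub_ne_zero.mpr (hdiv_not_int N hN β hβ k)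
  rw [csinc, if_neg hne]
  rw [show ((Real.pi:ℂ)*(β - (N:ℂ)*(k:ℂ))) = (Real.pi:ℂ)*β + ((-((N:ℤ)*k) : ℤ):ℂ)*(Real.pi:ℂ) by push_cast; ring]
  rw [sin_shift]
  rw [show ((-1:ℂ))^(-((N:ℤ)*k)) = ((-1:ℂ))^((N:ℤ)*k) by
    rw [zpow_neg]; exact inv_eq_of_mul_eq_one_right (neg_one_zpow_sq _)]
  have hne2 : (Real.pi:ℂ)*β - (Real.pi:ℂ)*(N:ℂ)*(k:ℂ) ≠ 0 := by
    have h3 := mul_ne_zero hpi hne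
    intro h; apply h3; linear_combination h
  have hNb : (N:ℂ)*(β/(N:ℂ)) = β := by field_simp
  have e : (Real.pi:ℂ)*β + ((-((N:ℤ)*k) : ℤ):ℂ)*(Real.pi:ℂ) = (Real.pi:ℂ)*(N:ℂ)*(β/(N:ℂ) - (k:ℂ)) := by
    push_cast; linear_combination (-(Real.pi:ℂ)) * hNb
  rw [e]; simp only [div_eq_mul_inv, mul_inv]; ring

lemma tendsto_inner_even (N : ℕ) (hN : 1 ≤ N) (hNe : Even N) (β : ℂ) (hβ : ∀ m : ℤ, β ≠ m) :
    Tendsto (fun M : ℕ => ∑ k ∈ Finset.Ico (-(M:ℤ)) (M:ℤ), csinc (β - (N:ℂ)*(k:ℂ))) atTop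
      (𝓝 (Complex.sin ((Real.pi:ℂ)*β) / ((Real.pi:ℂ)*(N:ℂ)) *
        ((Real.pi:ℂ)*Complex.cos ((Real.pi:ℂ)*(β/(N:ℂ)))/Complex.sin ((Real.pi:ℂ)*(β/(N:ℂ)))))) := by
  have hsummand : ∀ k : ℤ, csinc (β - (N:ℂ)*(k:ℂ))
      = Complex.sin ((Real.pi:ℂ)*β) / ((Real.pi:ℂ)*(N:ℂ)) * (β/(N:ℂ) - (k:ℂ))⁻¹ := by
    intro k
    rw [summand_eq N hN β hβ k]
    rw [Even.neg_one_zpow (((Int.even_coe_nat N).mpr hNe).mul_right k)]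
    ring
  simp_rw [hsummand]
  have := (tendsto_Ico_cot (β/(N:ℂ)) (hdiv_not_int N hN β hβ)).const_mul
    (Complex.sin ((Real.pi:ℂ)*β) / ((Real.pi:ℂ)*(N:ℂ)))
  apply this.congr
  intro M
  rw [Finset.mul_sum]

lemma tendsto_inner_odd (N : ℕ) (hN : 1 ≤ N) (hNo : ¬ Even N) (β : ℂ) (hβ : ∀ m : ℤ, β ≠ m) :
    Tendsto (fun M : ℕ => ∑ k ∈ Finset.Ico (-(M:ℤ)) (M:ℤ), csinc (β - (N:ℂ)*(k:ℂ))) atTop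
      (𝓝 (Complex.sin ((Real.pi:ℂ)*β) / ((Real.pi:ℂ)*(N:ℂ)) *
        ((Real.pi:ℂ)/Complex.sin ((Real.pi:ℂ)*(β/(N:ℂ)))))) := by
  have hsummand : ∀ k : ℤ, csinc (β - (N:ℂ)*(k:ℂ))
      = Complex.sin ((Real.pi:ℂ)*β) / ((Real.pi:ℂ)*(N:ℂ)) * ((-1:ℂ)^k * (β/(N:ℂ) - (k:ℂ))⁻¹) := by
    intro k
    rw [summand_eq N hN β hβ k]
    rw [zpow_mul, zpow_natCast, Odd.neg_one_pow (Nat.not_even_iff_odd.mp hNo)]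
    rw [show ((-1:ℂ))^k = ((-1:ℂ)^k : ℂ) by rfl]
    ring
  simp_rw [hsummand]
  have := (tendsto_Ico_csc (β/(N:ℂ)) (hdiv_not_int N hN β hβ)).const_mul
    (Complex.sin ((Real.pi:ℂ)*β) / ((Real.pi:ℂ)*(N:ℂ)))
  apply this.congr
  intro M
  rw [Finset.mul_sum]

lemma main_core {A : Type*} [NormedRing A] [NormedAlgebra ℂ A] [CompleteSpace A]
    (N : ℕ) (hN : 1 ≤ N) (a : Aˣ) (ha : a ^ N = 1) (α : ℂ) (hα : ∀ m : ℤ, α ≠ m)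
    (c : ℕ → ℂ)
    (hc : ∀ r, r < N → Tendsto (fun M : ℕ => ∑ k ∈ Finset.Ico (-(M:ℤ)) (M:ℤ),
        csinc ((α - r) - (N:ℂ)*(k:ℂ))) atTop (𝓝 (c r))) :
    Tendsto (fun M : ℕ => ∑ n ∈ Finset.Icc (-(M:ℤ)) (M:ℤ), csinc (α - n) • ((a^n : Aˣ) : A))
      atTop (𝓝 (∑ r ∈ Finset.range N, c r • ((a^r : Aˣ) : A))) := by
  have hN0 : (0:ℤ) < (N:ℤ) := by exact_mod_cast hN
  have hNz : (N:ℤ) ≠ 0 := by omega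
  have hpiR : (0:ℝ) < Real.pi := Real.pi_pos
  -- power reduction
  have hupow : ∀ (r : ℕ) (k : ℤ), (a ^ ((r:ℤ) + (N:ℤ)*k) : Aˣ) = a ^ r := by
    intro r k
    rw [zpow_add, zpow_mul, zpow_natCast, zpow_natCast, ha, one_zpow, mul_one]
  have hzpow : ∀ n : ℤ, (a ^ n : Aˣ) = a ^ ((n % (N:ℤ)).toNat) := by
    intro n
    have h1 : n = (((n % (N:ℤ)).toNat : ℕ) : ℤ) + (N:ℤ) * (n / (N:ℤ)) := by
      rw [Int.toNat_of_nonneg (Int.emod_nonneg n hNz)]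
      linarith [Int.emod_add_mul_ediv n (N:ℤ)]
    conv_lhs => rw [h1]
    rw [hupow]
  -- bound on powers
  set C : ℝ := ∑ r ∈ Finset.range N, ‖((a^r : Aˣ) : A)‖ with hCdef
  have hCnn : 0 ≤ C := Finset.sum_nonneg (fun _ _ => norm_nonneg _)
  have hC : ∀ n : ℤ, ‖((a^n : Aˣ) : A)‖ ≤ C := by
    intro n
    rw [hzpow n, hCdef]
    apply Finset.single_le_sum (f := fun r : ℕ => ‖((a^r : Aˣ) : A)‖) (fun _ _ => norm_nonneg _)
    rw [Finset.mem_range]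
    have h1 : n % (N:ℤ) < N := Int.emod_lt_of_pos n hN0
    have h2 : 0 ≤ n % (N:ℤ) := Int.emod_nonneg n hNz
    omega
  -- csinc norm
  have hsinc : ∀ n : ℤ, ‖csinc (α - n)‖ = ‖Complex.sin ((Real.pi:ℂ)*α)‖ / (Real.pi * ‖α - n‖) := by
    intro n
    have hne : α - n ≠ 0 := sub_ne_zero.mpr (hα n)
    rw [csinc, if_neg hne, norm_div]
    congr 1
    · rw [show (Real.pi:ℂ)*(α - n) = (Real.pi:ℂ)*α + ((-n : ℤ):ℂ)*(Real.pi:ℂ) by push_cast; ring,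
        sin_shift, norm_mul, norm_zpow, norm_neg, norm_one, one_zpow, one_mul]
    · rw [norm_mul, Complex.norm_real, Real.norm_eq_abs, abs_of_pos hpiR]
  -- the subsequence
  set g : ℕ → A := fun M => ∑ n ∈ Finset.Ico (-((N:ℤ)*M)) ((N:ℤ)*M),
      csinc (α - n) • ((a^n : Aˣ) : A) with hgdef
  have hg : ∀ M : ℕ, g M = ∑ r ∈ Finset.range N,
      (∑ k ∈ Finset.Ico (-(M:ℤ)) (M:ℤ), csinc ((α - r) - (N:ℂ)*(k:ℂ))) • ((a^r : Aˣ) : A) := by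
    intro M
    rw [show (∑ r ∈ Finset.range N, (∑ k ∈ Finset.Ico (-(M:ℤ)) (M:ℤ),
          csinc ((α - r) - (N:ℂ)*(k:ℂ))) • ((a^r : Aˣ) : A))
        = ∑ p ∈ Finset.range N ×ˢ Finset.Ico (-(M:ℤ)) (M:ℤ),
            csinc ((α - p.1) - (N:ℂ)*(p.2:ℂ)) • ((a^p.1 : Aˣ) : A) by
      rw [Finset.sum_product]
      exact Finset.sum_congr rfl (fun r _ => by rw [Finset.sum_smul])]
    rw [hgdef]
    refine Finset.sum_nbij' (i := fun n : ℤ => (((n % (N:ℤ)).toNat : ℕ), n / (N:ℤ)))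
      (j := fun p : ℕ × ℤ => (p.1 : ℤ) + (N:ℤ) * p.2) ?_ ?_ ?_ ?_ ?_
    · intro n hn
      simp only [Finset.mem_Ico] at hn
      simp only [Finset.mem_product, Finset.mem_range, Finset.mem_Ico]
      refine ⟨?_, ?_, ?_⟩
      · have h1 : n % (N:ℤ) < N := Int.emod_lt_of_pos n hN0
        have h2 : 0 ≤ n % (N:ℤ) := Int.emod_nonneg n hNz
        omega
      · rw [Int.le_ediv_iff_mul_le hN0]; linarith [hn.1]
      · rw [Int.ediv_lt_iff_lt_mul hN0]; linarith [hn.2]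
    · intro p hp
      simp only [Finset.mem_product, Finset.mem_range, Finset.mem_Ico] at hp
      simp only [Finset.mem_Ico]
      have e1 : (N:ℤ)*p.2 ≤ (N:ℤ)*(M-1) := mul_le_mul_of_nonneg_left (by omega) (by omega)
      have e2 : (N:ℤ)*(-(M:ℤ)) ≤ (N:ℤ)*p.2 := mul_le_mul_of_nonneg_left (by omega) (by omega)
      have e3 : ((p.1:ℤ)) < (N:ℤ) := by exact_mod_cast hp.1
      constructor <;> nlinarith [e1, e2, e3, hp.2.1, hp.2.2]
    · intro n hn
      simp only
      rw [Int.toNat_of_nonneg (Int.emod_nonneg n hNz)]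
      linarith [Int.emod_add_mul_ediv n (N:ℤ)]
    · intro p hp
      simp only [Finset.mem_product, Finset.mem_range, Finset.mem_Ico] at hp
      have h1 : ((p.1:ℤ) + (N:ℤ)*p.2) % (N:ℤ) = (p.1:ℤ) := by
        rw [Int.add_mul_emod_self_left]
        exact Int.emod_eq_of_lt (by omega) (by exact_mod_cast hp.1)
      have h2 : ((p.1:ℤ) + (N:ℤ)*p.2) / (N:ℤ) = p.2 := by
        rw [Int.add_mul_ediv_left _ _ (by omega : (N:ℤ) ≠ 0),
          Int.ediv_eq_zero_of_lt (by omega) (by exact_mod_cast hp.1), zero_add]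
      have : ((((p.1:ℤ) + (N:ℤ)*p.2) % (N:ℤ)).toNat, ((p.1:ℤ) + (N:ℤ)*p.2) / (N:ℤ)) = p := by
        rw [h1, h2, Int.toNat_natCast]
      exact this
    · intro n hn
      have harg : (α - (((n % (N:ℤ)).toNat : ℕ):ℂ)) - (N:ℂ)*(((n / (N:ℤ)) : ℤ):ℂ) = α - (n:ℂ) := by
        have h0 := congrArg (fun m : ℤ => (m:ℂ)) (Int.emod_add_mul_ediv n (N:ℤ))
        push_cast at h0
        rw [show (((n % (N:ℤ)).toNat : ℕ) : ℂ) = (((n % (N:ℤ)) : ℤ) : ℂ) by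
          rw [← Int.cast_natCast, Int.toNat_of_nonneg (Int.emod_nonneg n hNz)]]
        linear_combination -h0
      rw [hzpow n]
      simp only
      rw [harg]
  have hgL : Tendsto g atTop (𝓝 (∑ r ∈ Finset.range N, c r • ((a^r : Aˣ) : A))) := by
    apply Tendsto.congr (fun M => (hg M).symm)
    apply tendsto_finset_sum
    intro r hr
    exact (hc r (Finset.mem_range.mp hr)).smul_const _
  -- the tail estimate
  set K : ℝ := ‖Complex.sin ((Real.pi:ℂ)*α)‖ / Real.pi * C with hKdef
  have hKnn : 0 ≤ K := by positivity
  set f : ℕ → A := fun M => ∑ n ∈ Finset.Icc (-(M:ℤ)) (M:ℤ), csinc (α - n) • ((a^n : Aˣ) : A)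
    with hfdef
  have hdiff : Tendsto (fun M : ℕ => f M - g (M / N)) atTop (𝓝 0) := by
    apply squeeze_zero_norm'
      (a := fun M : ℕ => (2*(N:ℝ)+1) * (K * ((M:ℝ) - ((N:ℝ) + ‖α‖))⁻¹))
    · rw [Filter.eventually_atTop]
      refine ⟨N + ⌈‖α‖⌉₊ + 1, fun M hM => ?_⟩
      set q : ℕ := M / N with hqdef
      have hqle : N * q ≤ M := by rw [hqdef]; exact Nat.mul_div_le M N
      have hqlt : M < N * q + N := by
        have h1 : N * q + M % N = M := by rw [hqdef]; exact Nat.div_add_mod M N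
        have h2 : M % N < N := Nat.mod_lt M (by omega)
        generalize ht : N*q = t at *
        omega
      set d : ℝ := (M:ℝ) - ((N:ℝ) + ‖α‖) with hddef
      have hd1 : 1 ≤ d := by
        have h1 : (N + ⌈‖α‖⌉₊ + 1 : ℝ) ≤ (M:ℝ) := by exact_mod_cast hM
        have h2 := Nat.le_ceil ‖α‖
        rw [hddef]
        push_cast at h1
        linarith
      have hd0 : 0 < d := by linarith
      have hsub : Finset.Ico (-((N:ℤ)*q)) ((N:ℤ)*q) ⊆ Finset.Icc (-(M:ℤ)) (M:ℤ) := by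
        intro n hn
        simp only [Finset.mem_Ico] at hn
        simp only [Finset.mem_Icc]
        have : ((N:ℤ)*q) ≤ (M:ℤ) := by exact_mod_cast hqle
        omega
      have hfg : f M - g q = ∑ n ∈ Finset.Icc (-(M:ℤ)) (M:ℤ) \ Finset.Ico (-((N:ℤ)*q)) ((N:ℤ)*q),
          csinc (α - n) • ((a^n : Aˣ) : A) := by
        rw [hfdef, hgdef]
        simp only
        rw [← Finset.sum_sdiff hsub]
        abel
      rw [hfg]
      have hterm : ∀ n ∈ Finset.Icc (-(M:ℤ)) (M:ℤ) \ Finset.Ico (-((N:ℤ)*q)) ((N:ℤ)*q),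
          ‖csinc (α - n) • ((a^n : Aˣ) : A)‖ ≤ K * d⁻¹ := by
        intro n hn
        simp only [Finset.mem_sdiff, Finset.mem_Icc, Finset.mem_Ico] at hn
        have hdn : d ≤ ‖α - n‖ := by
          have hcase : n < -((N:ℤ)*q) ∨ ((N:ℤ)*q) ≤ n := by
            have h3 := hn.2
            generalize ht : ((N:ℤ)*q) = t at *
            omega
          have habsR : ((N:ℝ)*(q:ℝ)) ≤ |(n:ℝ)| := by
            rcases hcase with h | h
            · have hZ : ((N:ℤ)*q) ≤ -n := by linarith
              have hR : ((N:ℝ)*(q:ℝ)) ≤ -(n:ℝ) := by exact_mod_cast hZ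
              exact hR.trans (neg_le_abs _)
            · have hR : ((N:ℝ)*(q:ℝ)) ≤ (n:ℝ) := by exact_mod_cast h
              exact hR.trans (le_abs_self _)
          have hnq : (M:ℝ) - (N:ℝ) ≤ (N:ℝ)*(q:ℝ) := by
            have : (M:ℝ) < (N:ℝ)*(q:ℝ) + N := by exact_mod_cast hqlt
            linarith
          have h5 : |(n:ℝ)| - ‖α‖ ≤ ‖α - n‖ := by
            have h6 := norm_sub_norm_le ((n:ℂ)) α
            rw [norm_sub_rev] at h6
            rw [Complex.norm_intCast] at h6
            linarith
          rw [hddef]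
          linarith
        rw [norm_smul]
        have h6 : ‖csinc (α - n)‖ ≤ ‖Complex.sin ((Real.pi:ℂ)*α)‖ / Real.pi * d⁻¹ := by
          rw [hsinc n, div_mul_eq_div_div, div_eq_mul_inv]
          apply mul_le_mul_of_nonneg_left (inv_anti₀ hd0 hdn) (by positivity)
        calc ‖csinc (α - n)‖ * ‖((a^n : Aˣ) : A)‖
            ≤ (‖Complex.sin ((Real.pi:ℂ)*α)‖ / Real.pi * d⁻¹) * C := by
              apply mul_le_mul h6 (hC n) (norm_nonneg _)
              positivity
          _ = K * d⁻¹ := by rw [hKdef]; ring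
      have hcard : (Finset.Icc (-(M:ℤ)) (M:ℤ) \ Finset.Ico (-((N:ℤ)*q)) ((N:ℤ)*q)).card
          ≤ 2*N+1 := by
        rw [Finset.card_sdiff_of_subset hsub, Int.card_Icc, Int.card_Ico]
        have h1 : ((N:ℤ)*q) ≤ (M:ℤ) := by exact_mod_cast hqle
        have h2 : (M:ℤ) < (N:ℤ)*q + N := by exact_mod_cast hqlt
        generalize ht : ((N:ℤ)*q) = t at *
        omega
      calc ‖∑ n ∈ Finset.Icc (-(M:ℤ)) (M:ℤ) \ Finset.Ico (-((N:ℤ)*q)) ((N:ℤ)*q),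
            csinc (α - n) • ((a^n : Aˣ) : A)‖
          ≤ ∑ n ∈ Finset.Icc (-(M:ℤ)) (M:ℤ) \ Finset.Ico (-((N:ℤ)*q)) ((N:ℤ)*q),
            ‖csinc (α - n) • ((a^n : Aˣ) : A)‖ := norm_sum_le _ _
        _ ≤ (Finset.Icc (-(M:ℤ)) (M:ℤ) \ Finset.Ico (-((N:ℤ)*q)) ((N:ℤ)*q)).card • (K * d⁻¹) :=
            Finset.sum_le_card_nsmul _ _ _ hterm
        _ ≤ (2*(N:ℝ)+1) * (K * d⁻¹) := by
            rw [nsmul_eq_mul]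
            apply mul_le_mul_of_nonneg_right _ (by positivity)
            calc ((Finset.Icc (-(M:ℤ)) (M:ℤ) \ Finset.Ico (-((N:ℤ)*q)) ((N:ℤ)*q)).card : ℝ)
                ≤ ((2*N+1 : ℕ) : ℝ) := by exact_mod_cast hcard
              _ = 2*(N:ℝ)+1 := by push_cast; ring
    · have h0 := ((tendsto_inv_nat_sub ((N:ℝ) + ‖α‖)).const_mul K).const_mul (2*(N:ℝ)+1)
      simpa using h0
  -- conclude
  have hdivTop : Tendsto (fun M : ℕ => M / N) atTop atTop := by
    apply tendsto_atTop_atTop_of_monotone (fun x y h => Nat.div_le_div_right h)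
    intro b
    exact ⟨N * b, by rw [Nat.mul_div_cancel_left b (by omega : 0 < N)]⟩
  have h1 : Tendsto (fun M : ℕ => g (M / N)) atTop
      (𝓝 (∑ r ∈ Finset.range N, c r • ((a^r : Aˣ) : A))) := hgL.comp hdivTop
  have h2 := h1.add hdiff
  rw [add_zero] at h2
  apply h2.congr
  intro M
  abel


set_option maxHeartbeats 2000000 in
/-- For an invertible element `a` of a unital complex Banach algebra with `a^N = 1`
(`N ≥ 1`) and `α ∈ ℂ ∖ ℤ`, the symmetric partial sums `∑_{n=-M}^{M} sinc(α-n) a^n`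
converge in norm, with limit the finite trigonometric interpolation of `a^0, …, a^{N-1}`. -/
theorem shannon_series_periodic_operator {A : Type*} [NormedRing A] [NormedAlgebra ℂ A]
    [CompleteSpace A] (N : ℕ) (hN : 1 ≤ N) (a : Aˣ) (ha : a ^ N = 1)
    (α : ℂ) (hα : ∀ m : ℤ, α ≠ (m : ℂ)) :
    Tendsto (fun M : ℕ => ∑ n ∈ Finset.Icc (-(M : ℤ)) (M : ℤ),
        csinc (α - (n : ℂ)) • ((a ^ n : Aˣ) : A))
      atTop (𝓝 (if Even N then
          (1 / (N : ℂ)) • ∑ n ∈ Finset.range N,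
            (Complex.sin ((Real.pi : ℂ) * (α - n)) *
              Complex.cot ((Real.pi : ℂ) * (α - n) / N)) • ((a ^ n : Aˣ) : A)
        else
          (1 / (N : ℂ)) • ∑ n ∈ Finset.range N,
            (Complex.sin ((Real.pi : ℂ) * (α - n)) *
              (Complex.sin ((Real.pi : ℂ) * (α - n) / N))⁻¹) • ((a ^ n : Aˣ) : A))) := by
  have hNC : ((N:ℕ):ℂ) ≠ 0 := Nat.cast_ne_zero.mpr (by omega)
  have hpi : ((Real.pi:ℂ)) ≠ 0 := by exact_mod_cast Real.pi_ne_zero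
  have hβ : ∀ r : ℕ, ∀ m : ℤ, α - (r:ℂ) ≠ (m:ℂ) := by
    intro r m h
    apply hα (m + r)
    push_cast
    linear_combination h
  by_cases hNe : Even N
  · rw [if_pos hNe]
    set c : ℕ → ℂ := fun r => Complex.sin ((Real.pi:ℂ)*(α - r)) / ((Real.pi:ℂ)*(N:ℂ)) *
        ((Real.pi:ℂ)*Complex.cos ((Real.pi:ℂ)*((α - r)/(N:ℂ)))/Complex.sin ((Real.pi:ℂ)*((α - r)/(N:ℂ))))
      with hcdef
    have hmain := main_core N hN a ha α hα c
      (fun r _ => tendsto_inner_even N hN hNe (α - (r:ℂ)) (hβ r))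
    have hlim : (1 / (N : ℂ)) • ∑ n ∈ Finset.range N,
        (Complex.sin ((Real.pi : ℂ) * (α - n)) *
          Complex.cot ((Real.pi : ℂ) * (α - n) / N)) • ((a ^ n : Aˣ) : A)
        = ∑ r ∈ Finset.range N, c r • ((a ^ r : Aˣ) : A) := by
      rw [Finset.smul_sum]
      apply Finset.sum_congr rfl
      intro r _
      rw [smul_smul]
      congr 1
      rw [hcdef]
      simp only
      rw [Complex.cot_eq_cos_div_sin]
      rw [show ((Real.pi:ℂ) * (α - (r:ℂ)) / (N:ℂ)) = (Real.pi:ℂ)*((α - (r:ℂ))/(N:ℂ)) by ring]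
      linear_combination (-(Complex.sin ((Real.pi:ℂ)*(α - (r:ℂ)))
        * Complex.cos ((Real.pi:ℂ)*((α - (r:ℂ))/(N:ℂ)))
        * (Complex.sin ((Real.pi:ℂ)*((α - (r:ℂ))/(N:ℂ))))⁻¹ * ((N:ℂ))⁻¹))
        * (inv_mul_cancel₀ hpi)
    rw [hlim]
    exact hmain
  · rw [if_neg hNe]
    set c : ℕ → ℂ := fun r => Complex.sin ((Real.pi:ℂ)*(α - r)) / ((Real.pi:ℂ)*(N:ℂ)) *
        ((Real.pi:ℂ)/Complex.sin ((Real.pi:ℂ)*((α - r)/(N:ℂ)))) with hcdef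
    have hmain := main_core N hN a ha α hα c
      (fun r _ => tendsto_inner_odd N hN hNe (α - (r:ℂ)) (hβ r))
    have hlim : (1 / (N : ℂ)) • ∑ n ∈ Finset.range N,
        (Complex.sin ((Real.pi : ℂ) * (α - n)) *
          (Complex.sin ((Real.pi : ℂ) * (α - n) / N))⁻¹) • ((a ^ n : Aˣ) : A)
        = ∑ r ∈ Finset.range N, c r • ((a ^ r : Aˣ) : A) := by
      rw [Finset.smul_sum]
      apply Finset.sum_congr rfl
      intro r _
      rw [smul_smul]
      congr 1
      rw [hcdef]
      simp only
      rw [show ((Real.pi:ℂ) * (α - (r:ℂ)) / (N:ℂ)) = (Real.pi:ℂ)*((α - (r:ℂ))/(N:ℂ)) by ring]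
      linear_combination (-(Complex.sin ((Real.pi:ℂ)*(α - (r:ℂ)))
        * (Complex.sin ((Real.pi:ℂ)*((α - (r:ℂ))/(N:ℂ))))⁻¹ * ((N:ℂ))⁻¹))
        * (inv_mul_cancel₀ hpi)
    rw [hlim]
    exact hmain
end
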